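/- arXiv:2203.10589 — 3 statements merged into one kernel-verified Lean document; each statement's English description precedes it below -/
import Mathlib

section
/- Let L n be the number of noncrossing partitions of {1,…,n} with no block containing consecutive integers that are invariant under complementation (the map replacing j by n+1-j in each block). Then L 0 = L 1 = L 2 = 1, L 3 = L 4 = 2, and for n > 4: L n = 2·L (n-2) + Σ_{j=3}^{⌊(n+1)/2⌋} M (j-2) · L (n+2-2j), where M m counts all noncrossing partitions of {1,…,m} with no block containing consecutive integers. -/
/-- A partition of the `n` points `{0,…,n-1}` given by its finite set of blocks. -/
def IsPartition (n : ℕ) (P : Finset (Finset (Fin n))) : Prop :=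
  (∀ B ∈ P, B.Nonempty) ∧ ∀ i : Fin n, ∃! B, B ∈ P ∧ i ∈ B

/-- No block contains two consecutive integers. -/
def NoConsec (n : ℕ) (P : Finset (Finset (Fin n))) : Prop :=
  ∀ B ∈ P, ∀ i ∈ B, ∀ j ∈ B, (i : ℕ) + 1 ≠ (j : ℕ)

/-- The partition is noncrossing: no `a < b < c < d` with `a,c` in one block
and `b,d` in a different block. -/
def NCPart (n : ℕ) (P : Finset (Finset (Fin n))) : Prop :=
  ∀ B ∈ P, ∀ C ∈ P, B ≠ C →
    ∀ a ∈ B, ∀ c ∈ B, ∀ b ∈ C, ∀ d ∈ C, ¬(a < b ∧ b < c ∧ c < d)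

/-- The partition is self-complementary: applying `j ↦ n+1-j` (here `Fin.rev`)
inside each block yields the same partition. -/
def SelfCompl (n : ℕ) (P : Finset (Finset (Fin n))) : Prop :=
  P.image (fun B => B.image Fin.rev) = P

/-- The number of noncrossing partitions of `{1,…,n}` with no block containing
two consecutive integers. -/
noncomputable def M (n : ℕ) : ℕ :=
  Nat.card {P : Finset (Finset (Fin n)) // IsPartition n P ∧ NCPart n P ∧ NoConsec n P}

/-- The number of such partitions that are moreover self-complementary. -/
noncomputable def L (n : ℕ) : ℕ :=
  Nat.card {P : Finset (Finset (Fin n)) //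
    IsPartition n P ∧ NCPart n P ∧ NoConsec n P ∧ SelfCompl n P}


set_option maxRecDepth 4000

namespace S13aux
open Finset

def NPartN (n : ℕ) (P : Finset (Finset ℕ)) : Prop :=
  (∀ B ∈ P, B.Nonempty) ∧ (∀ B ∈ P, ∀ i ∈ B, i < n) ∧
    ∀ i < n, ∃! B, B ∈ P ∧ i ∈ B

def NCN (P : Finset (Finset ℕ)) : Prop :=
  ∀ B ∈ P, ∀ C ∈ P, B ≠ C → ∀ a ∈ B, ∀ c ∈ B, ∀ b ∈ C, ∀ d ∈ C,
    ¬(a < b ∧ b < c ∧ c < d)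

def PoorN (P : Finset (Finset ℕ)) : Prop := ∀ B ∈ P, ∀ i ∈ B, ∀ j ∈ B, i + 1 ≠ j

def SymN (n : ℕ) (P : Finset (Finset ℕ)) : Prop :=
  P.image (fun B => B.image (fun i => n - 1 - i)) = P

def Good (n : ℕ) (P : Finset (Finset ℕ)) : Prop := NPartN n P ∧ NCN P ∧ PoorN P

def SGood (n : ℕ) (P : Finset (Finset ℕ)) : Prop := Good n P ∧ SymN n P

lemma np_disj {n : ℕ} {P : Finset (Finset ℕ)} (h : NPartN n P) {B C : Finset ℕ}
    (hB : B ∈ P) (hC : C ∈ P) {i : ℕ} (hiB : i ∈ B) (hiC : i ∈ C) : B = C := by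
  have hin : i < n := h.2.1 B hB i hiB
  obtain ⟨D, _, hu⟩ := h.2.2 i hin
  rw [hu B ⟨hB, hiB⟩, hu C ⟨hC, hiC⟩]

/-! ### shift and mirror -/

def sh (c : ℕ) (Q : Finset (Finset ℕ)) : Finset (Finset ℕ) :=
  Q.image (fun B => B.image (· + c))

def unsh (c : ℕ) (Q : Finset (Finset ℕ)) : Finset (Finset ℕ) :=
  Q.image (fun B => B.image (· - c))

def mirB (n : ℕ) (B : Finset ℕ) : Finset ℕ := B.image (fun i => n - 1 - i)

def mir (n : ℕ) (Q : Finset (Finset ℕ)) : Finset (Finset ℕ) := Q.image (mirB n)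

lemma mem_sh {c : ℕ} {Q : Finset (Finset ℕ)} {B : Finset ℕ} :
    B ∈ sh c Q ↔ ∃ B₀ ∈ Q, B = B₀.image (· + c) := by simp [sh, eq_comm]

lemma mem_image_add {c : ℕ} {B₀ : Finset ℕ} {i : ℕ} :
    i ∈ B₀.image (· + c) ↔ ∃ j ∈ B₀, i = j + c := by simp [eq_comm]

lemma unsh_sh {c : ℕ} {Q : Finset (Finset ℕ)} : unsh c (sh c Q) = Q := by
  unfold unsh sh
  rw [Finset.image_image]
  have : ∀ B ∈ Q, ((B.image (· + c)).image (· - c)) = B := by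
    intro B _
    rw [Finset.image_image]
    have : ((· - c) ∘ (· + c) : ℕ → ℕ) = id := by funext x; simp
    rw [this, Finset.image_id]
  calc Q.image _ = Q.image id := Finset.image_congr (by intro B hB; simpa using this B hB)
  _ = Q := Finset.image_id

lemma sh_unsh {c : ℕ} {Q : Finset (Finset ℕ)} (h : ∀ B ∈ Q, ∀ i ∈ B, c ≤ i) :
    sh c (unsh c Q) = Q := by
  unfold unsh sh
  rw [Finset.image_image]
  have key : ∀ B ∈ Q, ((B.image (· - c)).image (· + c)) = B := by
    intro B hB
    rw [Finset.image_image]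
    ext i
    simp only [Finset.mem_image, Function.comp_apply]
    constructor
    · rintro ⟨j, hj, rfl⟩
      have := h B hB j hj
      have : j - c + c = j := by omega
      rwa [this]
    · intro hi
      exact ⟨i, hi, by have := h B hB i hi; omega⟩
  calc Q.image _ = Q.image id := Finset.image_congr (by intro B hB; simpa using key B hB)
  _ = Q := Finset.image_id

lemma mem_mirB {n : ℕ} {B : Finset ℕ} {i : ℕ} :
    i ∈ mirB n B ↔ ∃ j ∈ B, i = n - 1 - j := by simp [mirB, eq_comm]

lemma mem_mir {n : ℕ} {Q : Finset (Finset ℕ)} {B : Finset ℕ} :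
    B ∈ mir n Q ↔ ∃ B₀ ∈ Q, B = mirB n B₀ := by simp [mir, eq_comm]

lemma mirB_mirB {n : ℕ} {B : Finset ℕ} (h : ∀ i ∈ B, i < n) : mirB n (mirB n B) = B := by
  unfold mirB
  rw [Finset.image_image]
  ext i
  simp only [Finset.mem_image, Function.comp_apply]
  constructor
  · rintro ⟨j, hj, rfl⟩
    have := h j hj
    have e : n - 1 - (n - 1 - j) = j := by omega
    rwa [e]
  · intro hi
    exact ⟨i, hi, by have := h i hi; omega⟩

lemma mir_mir {n : ℕ} {Q : Finset (Finset ℕ)} (h : ∀ B ∈ Q, ∀ i ∈ B, i < n) :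
    mir n (mir n Q) = Q := by
  unfold mir
  rw [Finset.image_image]
  have key : ∀ B ∈ Q, mirB n (mirB n B) = B := fun B hB => mirB_mirB (h B hB)
  calc Q.image _ = Q.image id := Finset.image_congr (by intro B hB; simpa using key B hB)
  _ = Q := Finset.image_id

lemma symN_iff_mir {n : ℕ} {P : Finset (Finset ℕ)} : SymN n P ↔ mir n P = P := Iff.rfl

/-! ### unshift: from an interval partition to a `Good` one -/

lemma good_unsh {c m : ℕ} {P : Finset (Finset ℕ)}
    (hne : ∀ B ∈ P, B.Nonempty)
    (hbd : ∀ B ∈ P, ∀ i ∈ B, c ≤ i ∧ i < c + m)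
    (hcov : ∀ i, c ≤ i → i < c + m → ∃ B ∈ P, i ∈ B)
    (huniq : ∀ B ∈ P, ∀ C ∈ P, ∀ i, i ∈ B → i ∈ C → B = C)
    (hnc : NCN P) (hpoor : PoorN P) :
    Good m (unsh c P) ∧ sh c (unsh c P) = P := by
  have hsh : sh c (unsh c P) = P := sh_unsh (fun B hB i hi => (hbd B hB i hi).1)
  have memun : ∀ B ∈ unsh c P, ∃ B₀ ∈ P, B = B₀.image (· - c) := by
    intro B hB; simpa [unsh, eq_comm] using hB
  have recover : ∀ B₀ ∈ P, ∀ i ∈ B₀, i - c ∈ B₀.image (· - c) :=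
    fun B₀ hB₀ i hi => Finset.mem_image_of_mem _ hi
  have elemun : ∀ B₀ ∈ P, ∀ x ∈ B₀.image (· - c), ∃ i ∈ B₀, x = i - c := by
    intro B₀ hB₀ x hx; simpa [eq_comm] using hx
  refine ⟨⟨⟨?_, ?_, ?_⟩, ?_, ?_⟩, hsh⟩
  · intro B hB
    obtain ⟨B₀, hB₀, rfl⟩ := memun B hB
    exact (hne B₀ hB₀).image _
  · intro B hB i hi
    obtain ⟨B₀, hB₀, rfl⟩ := memun B hB
    obtain ⟨j, hj, rfl⟩ := elemun B₀ hB₀ i hi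
    have := hbd B₀ hB₀ j hj
    omega
  · intro i hi
    obtain ⟨B₀, hB₀, hm⟩ := hcov (i + c) (by omega) (by omega)
    refine ⟨B₀.image (· - c), ⟨Finset.mem_image_of_mem _ hB₀, ?_⟩, ?_⟩
    · have := recover B₀ hB₀ _ hm
      simpa [Nat.add_sub_cancel] using this
    · rintro C ⟨hC, hiC⟩
      obtain ⟨C₀, hC₀, rfl⟩ := memun C hC
      obtain ⟨j, hj, hje⟩ := elemun C₀ hC₀ i hiC
      have hjb := hbd C₀ hC₀ j hj
      have : j = i + c := by omega
      subst this
      rw [huniq C₀ hC₀ B₀ hB₀ (i + c) hj hm]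
  · intro B hB C hC hne' a ha c' hc' b hb d hd
    obtain ⟨B₀, hB₀, rfl⟩ := memun B hB
    obtain ⟨C₀, hC₀, rfl⟩ := memun C hC
    have hBC : B₀ ≠ C₀ := fun h => hne' (by rw [h])
    obtain ⟨a₀, ha₀, rfl⟩ := elemun B₀ hB₀ a ha
    obtain ⟨c₀, hc₀, rfl⟩ := elemun B₀ hB₀ c' hc'
    obtain ⟨b₀, hb₀, rfl⟩ := elemun C₀ hC₀ b hb
    obtain ⟨d₀, hd₀, rfl⟩ := elemun C₀ hC₀ d hd
    have h1 := hbd B₀ hB₀ a₀ ha₀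
    have h2 := hbd B₀ hB₀ c₀ hc₀
    have h3 := hbd C₀ hC₀ b₀ hb₀
    have h4 := hbd C₀ hC₀ d₀ hd₀
    intro hlt
    exact hnc B₀ hB₀ C₀ hC₀ hBC a₀ ha₀ c₀ hc₀ b₀ hb₀ d₀ hd₀ (by omega)
  · intro B hB i hi j hj
    obtain ⟨B₀, hB₀, rfl⟩ := memun B hB
    obtain ⟨i₀, hi₀, rfl⟩ := elemun B₀ hB₀ i hi
    obtain ⟨j₀, hj₀, rfl⟩ := elemun B₀ hB₀ j hj
    have h1 := hbd B₀ hB₀ i₀ hi₀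
    have h2 := hbd B₀ hB₀ j₀ hj₀
    have := hpoor B₀ hB₀ i₀ hi₀ j₀ hj₀
    omega


lemma sh_props {c m : ℕ} {Q : Finset (Finset ℕ)} (h : Good m Q) :
    (∀ B ∈ sh c Q, B.Nonempty) ∧ (∀ B ∈ sh c Q, ∀ i ∈ B, c ≤ i ∧ i < c + m) ∧
    (∀ i, c ≤ i → i < c + m → ∃ B ∈ sh c Q, i ∈ B) ∧
    (∀ B ∈ sh c Q, ∀ C ∈ sh c Q, ∀ i, i ∈ B → i ∈ C → B = C) ∧
    NCN (sh c Q) ∧ PoorN (sh c Q) := by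
  obtain ⟨⟨hne, hbd, hcov⟩, hnc, hpoor⟩ := h
  refine ⟨?_, ?_, ?_, ?_, ?_, ?_⟩
  · intro B hB
    obtain ⟨B₀, hB₀, rfl⟩ := mem_sh.1 hB
    exact (hne B₀ hB₀).image _
  · intro B hB i hi
    obtain ⟨B₀, hB₀, rfl⟩ := mem_sh.1 hB
    obtain ⟨j, hj, rfl⟩ := mem_image_add.1 hi
    have := hbd B₀ hB₀ j hj
    omega
  · intro i hci him
    obtain ⟨B₀, ⟨hB₀, hm⟩, _⟩ := hcov (i - c) (by omega)
    refine ⟨B₀.image (· + c), mem_sh.2 ⟨B₀, hB₀, rfl⟩, mem_image_add.2 ⟨i - c, hm, by omega⟩⟩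
  · intro B hB C hC i hiB hiC
    obtain ⟨B₀, hB₀, rfl⟩ := mem_sh.1 hB
    obtain ⟨C₀, hC₀, rfl⟩ := mem_sh.1 hC
    obtain ⟨j, hj, hje⟩ := mem_image_add.1 hiB
    obtain ⟨j', hj', hje'⟩ := mem_image_add.1 hiC
    have : j = j' := by omega
    subst this
    obtain ⟨D, _, hu⟩ := hcov j (hbd B₀ hB₀ j hj)
    have : B₀ = C₀ := by rw [hu B₀ ⟨hB₀, hj⟩, hu C₀ ⟨hC₀, hj'⟩]
    rw [this]
  · intro B hB C hC hne' a ha c' hc' b hb d hd hlt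
    obtain ⟨B₀, hB₀, rfl⟩ := mem_sh.1 hB
    obtain ⟨C₀, hC₀, rfl⟩ := mem_sh.1 hC
    have hBC : B₀ ≠ C₀ := fun h => hne' (by rw [h])
    obtain ⟨a₀, ha₀, rfl⟩ := mem_image_add.1 ha
    obtain ⟨c₀, hc₀, rfl⟩ := mem_image_add.1 hc'
    obtain ⟨b₀, hb₀, rfl⟩ := mem_image_add.1 hb
    obtain ⟨d₀, hd₀, rfl⟩ := mem_image_add.1 hd
    exact hnc B₀ hB₀ C₀ hC₀ hBC a₀ ha₀ c₀ hc₀ b₀ hb₀ d₀ hd₀ (by omega)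
  · intro B hB i hi j hj
    obtain ⟨B₀, hB₀, rfl⟩ := mem_sh.1 hB
    obtain ⟨i₀, hi₀, rfl⟩ := mem_image_add.1 hi
    obtain ⟨j₀, hj₀, rfl⟩ := mem_image_add.1 hj
    have := hpoor B₀ hB₀ i₀ hi₀ j₀ hj₀
    omega

lemma mirB_sh_block {n c m : ℕ} {B : Finset ℕ} (hB : ∀ i ∈ B, i < m) (hn : n = m + 2 * c) :
    mirB n (B.image (· + c)) = (mirB m B).image (· + c) := by
  unfold mirB
  rw [Finset.image_image, Finset.image_image]
  apply Finset.image_congr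
  intro i hi
  have := hB i hi
  simp only [Function.comp_apply]
  omega

lemma mir_sh {n c m : ℕ} {Q : Finset (Finset ℕ)} (hQbd : ∀ B ∈ Q, ∀ i ∈ B, i < m)
    (hn : n = m + 2 * c) : mir n (sh c Q) = sh c (mir m Q) := by
  unfold mir sh
  rw [Finset.image_image, Finset.image_image]
  apply Finset.image_congr
  intro B hB
  simp only [Function.comp_apply]
  exact mirB_sh_block (hQbd B hB) hn

lemma mir_unsh {n c m : ℕ} {P : Finset (Finset ℕ)} (hbd : ∀ B ∈ P, ∀ i ∈ B, c ≤ i ∧ i < c + m)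
    (hn : n = m + 2 * c) : mir m (unsh c P) = unsh c (mir n P) := by
  unfold mir unsh
  rw [Finset.image_image, Finset.image_image]
  apply Finset.image_congr
  intro B hB
  simp only [Function.comp_apply]
  unfold mirB
  rw [Finset.image_image, Finset.image_image]
  apply Finset.image_congr
  intro i hi
  have := hbd B hB i hi
  simp only [Function.comp_apply]
  omega


lemma ncn_subset {P S : Finset (Finset ℕ)} (hs : S ⊆ P) (h : NCN P) : NCN S :=
  fun B hB C hC hne a ha c hc b hb d hd => h B (hs hB) C (hs hC) hne a ha c hc b hb d hd

lemma poorn_subset {P S : Finset (Finset ℕ)} (hs : S ⊆ P) (h : PoorN P) : PoorN S :=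
  fun B hB => h B (hs hB)

def PhiA (n : ℕ) (Q : Finset (Finset ℕ)) : Finset (Finset ℕ) :=
  insert {0} (insert {n - 1} (sh 1 Q))

def PhiB (n : ℕ) (Q : Finset (Finset ℕ)) : Finset (Finset ℕ) :=
  insert {0, n - 1} (sh 1 Q)

def exS (n : ℕ) (P : Finset (Finset ℕ)) : Finset (Finset ℕ) :=
  unsh 1 (P.filter (fun B => ¬ B ⊆ {0, n - 1}))

lemma mirB_zero {n : ℕ} : mirB n ({0} : Finset ℕ) = {n - 1} := by
  unfold mirB; simp

lemma mirB_last {n : ℕ} : mirB n ({n - 1} : Finset ℕ) = {0} := by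
  unfold mirB; simp

lemma mirB_pair {n : ℕ} : mirB n ({0, n - 1} : Finset ℕ) = {0, n - 1} := by
  unfold mirB
  rw [Finset.image_insert]
  simp [Finset.pair_comm]

section AB

variable {n : ℕ} {Q : Finset (Finset ℕ)}

lemma sgood_PhiA (hn : 3 ≤ n) (hQ : SGood (n - 2) Q) : SGood n (PhiA n Q) := by
  obtain ⟨hQg, hQs⟩ := hQ
  obtain ⟨hne, hbd, hcov, huniq, hnc, hpoor⟩ := sh_props (c := 1) hQg
  have hbd' : ∀ B ∈ sh 1 Q, ∀ i ∈ B, 1 ≤ i ∧ i ≤ n - 2 := by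
    intro B hB i hi; have := hbd B hB i hi; omega
  have memA : ∀ B, B ∈ PhiA n Q ↔ B = {0} ∨ B = {n - 1} ∨ B ∈ sh 1 Q := by
    intro B; simp [PhiA]
  refine ⟨⟨⟨?_, ?_, ?_⟩, ?_, ?_⟩, ?_⟩
  · intro B hB
    rcases (memA B).1 hB with rfl | rfl | h
    · exact ⟨0, by simp⟩
    · exact ⟨n - 1, by simp⟩
    · exact hne B h
  · intro B hB i hi
    rcases (memA B).1 hB with rfl | rfl | h
    · simp at hi; omega
    · simp at hi; omega
    · have := hbd' B h i hi; omega
  · intro i hi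
    have mem0 : ∀ C, C ∈ PhiA n Q → i ∈ C →
        (i = 0 → C = {0}) ∧ (i = n - 1 → C = {n - 1}) ∧
        (1 ≤ i → i ≤ n - 2 → C ∈ sh 1 Q) := by
      intro C hC hiC
      rcases (memA C).1 hC with rfl | rfl | h
      · simp at hiC; subst hiC
        exact ⟨fun _ => rfl, fun h0 => by omega, fun h1 _ => by omega⟩
      · simp at hiC; subst hiC
        exact ⟨fun h0 => by omega, fun _ => rfl, fun _ h2 => by omega⟩
      · have := hbd' C h i hiC
        refine ⟨fun h0 => by omega, fun h0 => by omega, fun _ _ => h⟩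
    rcases Nat.eq_zero_or_pos i with rfl | hpos
    · refine ⟨{0}, ⟨(memA _).2 (Or.inl rfl), by simp⟩, ?_⟩
      rintro C ⟨hC, hiC⟩; exact (mem0 C hC hiC).1 rfl
    · rcases eq_or_ne i (n - 1) with rfl | hne'
      · refine ⟨{n - 1}, ⟨(memA _).2 (Or.inr (Or.inl rfl)), by simp⟩, ?_⟩
        rintro C ⟨hC, hiC⟩; exact (mem0 C hC hiC).2.1 rfl
      · obtain ⟨B, hB, hiB⟩ := hcov i (by omega) (by omega)
        refine ⟨B, ⟨(memA _).2 (Or.inr (Or.inr hB)), hiB⟩, ?_⟩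
        rintro C ⟨hC, hiC⟩
        have hC' := (mem0 C hC hiC).2.2 (by omega) (by omega)
        exact huniq C hC' B hB i hiC hiB
  · -- NCN
    intro B hB C hC hBC a ha c hc b hb d hd ⟨h1, h2, h3⟩
    rcases (memA C).1 hC with rfl | rfl | hCs
    · simp at hb hd; omega
    · simp at hb hd
      subst hb hd
      have : c < n := by
        rcases (memA B).1 hB with rfl | rfl | hBs
        · simp at hc; omega
        · simp at hc; omega
        · have := hbd' B hBs c hc; omega
      omega
    · rcases (memA B).1 hB with rfl | rfl | hBs
      · simp at ha hc; omega
      · simp at ha hc; omega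
      · exact hnc B hBs C hCs hBC a ha c hc b hb d hd ⟨h1, h2, h3⟩
  · -- Poor
    intro B hB i hi j hj
    rcases (memA B).1 hB with rfl | rfl | hBs
    · simp at hi hj; omega
    · simp at hi hj; omega
    · exact hpoor B hBs i hi j hj
  · -- Sym
    show mir n (PhiA n Q) = PhiA n Q
    unfold PhiA mir
    rw [Finset.image_insert, Finset.image_insert]
    rw [mirB_zero, mirB_last]
    have : Finset.image (mirB n) (sh 1 Q) = sh 1 Q := by
      have h1 : mir n (sh 1 Q) = sh 1 (mir (n - 2) Q) :=
        mir_sh hQg.1.2.1 (by omega)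
      have h2 : mir (n - 2) Q = Q := hQs
      rw [← mir]; rw [h1, h2]
    rw [this, Finset.insert_comm]

lemma sgood_PhiB (hn : 3 ≤ n) (hQ : SGood (n - 2) Q) : SGood n (PhiB n Q) := by
  obtain ⟨hQg, hQs⟩ := hQ
  obtain ⟨hne, hbd, hcov, huniq, hnc, hpoor⟩ := sh_props (c := 1) hQg
  have hbd' : ∀ B ∈ sh 1 Q, ∀ i ∈ B, 1 ≤ i ∧ i ≤ n - 2 := by
    intro B hB i hi; have := hbd B hB i hi; omega
  have memA : ∀ B, B ∈ PhiB n Q ↔ B = {0, n - 1} ∨ B ∈ sh 1 Q := by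
    intro B; simp [PhiB]
  refine ⟨⟨⟨?_, ?_, ?_⟩, ?_, ?_⟩, ?_⟩
  · intro B hB
    rcases (memA B).1 hB with rfl | h
    · exact ⟨0, by simp⟩
    · exact hne B h
  · intro B hB i hi
    rcases (memA B).1 hB with rfl | h
    · simp at hi; omega
    · have := hbd' B h i hi; omega
  · intro i hi
    have mem0 : ∀ C, C ∈ PhiB n Q → i ∈ C →
        (i = 0 ∨ i = n - 1 → C = {0, n - 1}) ∧
        (1 ≤ i → i ≤ n - 2 → C ∈ sh 1 Q) := by
      intro C hC hiC
      rcases (memA C).1 hC with rfl | h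
      · simp at hiC
        exact ⟨fun _ => rfl, fun h1 h2 => by omega⟩
      · have := hbd' C h i hiC
        exact ⟨fun h0 => by omega, fun _ _ => h⟩
    rcases eq_or_ne i 0 with rfl | h0
    · refine ⟨{0, n - 1}, ⟨(memA _).2 (Or.inl rfl), by simp⟩, ?_⟩
      rintro C ⟨hC, hiC⟩; exact (mem0 C hC hiC).1 (Or.inl rfl)
    · rcases eq_or_ne i (n - 1) with rfl | hne'
      · refine ⟨{0, n - 1}, ⟨(memA _).2 (Or.inl rfl), by simp⟩, ?_⟩
        rintro C ⟨hC, hiC⟩; exact (mem0 C hC hiC).1 (Or.inr rfl)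
      · obtain ⟨B, hB, hiB⟩ := hcov i (by omega) (by omega)
        refine ⟨B, ⟨(memA _).2 (Or.inr hB), hiB⟩, ?_⟩
        rintro C ⟨hC, hiC⟩
        have hC' := (mem0 C hC hiC).2 (by omega) (by omega)
        exact huniq C hC' B hB i hiC hiB
  · -- NCN
    intro B hB C hC hBC a ha c hc b hb d hd ⟨h1, h2, h3⟩
    rcases (memA C).1 hC with rfl | hCs
    · simp at hb hd
      rcases hb with rfl | rfl
      · omega
      · rcases hd with rfl | rfl
        · omega
        · have : c < n := by
            rcases (memA B).1 hB with rfl | hBs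
            · simp at hc; omega
            · have := hbd' B hBs c hc; omega
          omega
    · rcases (memA B).1 hB with rfl | hBs
      · simp at ha hc
        have hb' := hbd' C hCs b hb
        have hd' := hbd' C hCs d hd
        rcases ha with rfl | rfl
        · rcases hc with rfl | rfl
          · omega
          · omega
        · omega
      · exact hnc B hBs C hCs hBC a ha c hc b hb d hd ⟨h1, h2, h3⟩
  · -- Poor
    intro B hB i hi j hj
    rcases (memA B).1 hB with rfl | hBs
    · simp at hi hj
      rcases hi with rfl | rfl <;> rcases hj with rfl | rfl <;> omega
    · exact hpoor B hBs i hi j hj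
  · -- Sym
    show mir n (PhiB n Q) = PhiB n Q
    unfold PhiB mir
    rw [Finset.image_insert, mirB_pair]
    have : Finset.image (mirB n) (sh 1 Q) = sh 1 Q := by
      have h1 : mir n (sh 1 Q) = sh 1 (mir (n - 2) Q) :=
        mir_sh hQg.1.2.1 (by omega)
      have h2 : mir (n - 2) Q = Q := hQs
      rw [← mir]; rw [h1, h2]
    rw [this]

end AB

lemma mem_PhiA {n : ℕ} {Q : Finset (Finset ℕ)} {B' : Finset ℕ} :
    B' ∈ PhiA n Q ↔ B' = {0} ∨ B' = {n - 1} ∨ B' ∈ sh 1 Q := by simp [PhiA]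

lemma mem_PhiB {n : ℕ} {Q : Finset (Finset ℕ)} {B' : Finset ℕ} :
    B' ∈ PhiB n Q ↔ B' = {0, n - 1} ∨ B' ∈ sh 1 Q := by simp [PhiB]

lemma sh1_not_sub {n : ℕ} {Q : Finset (Finset ℕ)} (hQ : Good (n - 2) Q) (hn : 3 ≤ n) :
    ∀ B ∈ sh 1 Q, ¬ B ⊆ {0, n - 1} := by
  intro B hB hsub
  obtain ⟨hne, hbd, _⟩ := sh_props (c := 1) hQ
  obtain ⟨x, hx⟩ := hne B hB
  have h1 := hbd B hB x hx
  have := hsub hx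
  simp at this
  omega

lemma exS_PhiA {n : ℕ} {Q : Finset (Finset ℕ)} (hQ : Good (n - 2) Q) (hn : 3 ≤ n) :
    exS n (PhiA n Q) = Q := by
  unfold exS PhiA
  rw [Finset.filter_insert, Finset.filter_insert]
  have h0 : (({0} : Finset ℕ) ⊆ {0, n - 1}) := by intro x hx; simp at hx; simp [hx]
  have h1 : (({n - 1} : Finset ℕ) ⊆ {0, n - 1}) := by intro x hx; simp at hx; simp [hx]
  rw [if_neg (by simpa using h0), if_neg (by simpa using h1)]
  rw [Finset.filter_true_of_mem (sh1_not_sub hQ hn), unsh_sh]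

lemma exS_PhiB {n : ℕ} {Q : Finset (Finset ℕ)} (hQ : Good (n - 2) Q) (hn : 3 ≤ n) :
    exS n (PhiB n Q) = Q := by
  unfold exS PhiB
  rw [Finset.filter_insert]
  rw [if_neg (by simp)]
  rw [Finset.filter_true_of_mem (sh1_not_sub hQ hn), unsh_sh]

lemma caseA {n : ℕ} {P : Finset (Finset ℕ)} (hn : 3 ≤ n) (hP : SGood n P)
    (h0 : ({0} : Finset ℕ) ∈ P) :
    SGood (n - 2) (exS n P) ∧ P = PhiA n (exS n P) := by
  obtain ⟨⟨⟨hne, hbd, hcov⟩, hnc, hpoor⟩, hsym⟩ := hP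
  have hsym' : mir n P = P := hsym
  have hlast : ({n - 1} : Finset ℕ) ∈ P := by
    rw [← hsym']
    exact mem_mir.2 ⟨{0}, h0, mirB_zero.symm⟩
  set P' := P.filter (fun B => ¬ B ⊆ {0, n - 1}) with hP'def
  have hP'sub : P' ⊆ P := Finset.filter_subset _ _
  have hnp : NPartN n P := ⟨hne, hbd, hcov⟩
  have hbd' : ∀ B ∈ P', ∀ i ∈ B, 1 ≤ i ∧ i < 1 + (n - 2) := by
    intro B hB i hi
    obtain ⟨hBP, hBs⟩ := Finset.mem_filter.1 hB
    have hin : i < n := hbd B hBP i hi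
    have hi0 : i ≠ 0 := by
      rintro rfl
      exact hBs (by rw [np_disj hnp hBP h0 hi (by simp)]; intro x hx; simp at hx; simp [hx])
    have hi1 : i ≠ n - 1 := by
      rintro rfl
      exact hBs (by rw [np_disj hnp hBP hlast hi (by simp)]; intro x hx; simp at hx; simp [hx])
    omega
  have hcov' : ∀ i, 1 ≤ i → i < 1 + (n - 2) → ∃ B ∈ P', i ∈ B := by
    intro i h1 h2
    obtain ⟨B, ⟨hB, hiB⟩, _⟩ := hcov i (by omega)
    refine ⟨B, Finset.mem_filter.2 ⟨hB, ?_⟩, hiB⟩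
    intro hsub
    have := hsub hiB
    simp at this
    omega
  obtain ⟨hgood, hround⟩ := good_unsh (c := 1) (m := n - 2)
    (fun B hB => hne B (hP'sub hB)) hbd' hcov'
    (fun B hB C hC i hiB hiC => np_disj hnp (hP'sub hB) (hP'sub hC) hiB hiC)
    (ncn_subset hP'sub hnc) (poorn_subset hP'sub hpoor)
  have hmirP' : mir n P' = P' := by
    have hsubm : mir n P' ⊆ P' := by
      intro B hB
      obtain ⟨B₀, hB₀, rfl⟩ := mem_mir.1 hB
      have hB₀P := hP'sub hB₀
      refine Finset.mem_filter.2 ⟨by rw [← hsym']; exact mem_mir.2 ⟨B₀, hB₀P, rfl⟩, ?_⟩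
      obtain ⟨x, hx⟩ := hne B₀ hB₀P
      have hxb := hbd' B₀ hB₀ x hx
      intro hsub
      have hmem : n - 1 - x ∈ mirB n B₀ := mem_mirB.2 ⟨x, hx, rfl⟩
      have := hsub hmem
      simp at this
      omega
    refine Finset.Subset.antisymm hsubm ?_
    have := Finset.image_subset_image (f := mirB n) hsubm
    rwa [← mir, ← mir, mir_mir (fun B hB i hi => by have := hbd' B hB i hi; omega)] at this
  have hsymQ : SymN (n - 2) (exS n P) := by
    show mir (n - 2) (unsh 1 P') = unsh 1 P'
    rw [mir_unsh (n := n) hbd' (by omega), hmirP']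
  refine ⟨⟨hgood, hsymQ⟩, ?_⟩
  have : PhiA n (exS n P) = insert {0} (insert {n - 1} P') := by
    unfold PhiA exS
    rw [hround]
  rw [this]
  ext B
  simp only [Finset.mem_insert]
  constructor
  · intro hB
    by_cases hsub : B ⊆ {0, n - 1}
    · obtain ⟨x, hx⟩ := hne B hB
      have := hsub hx
      simp at this
      rcases this with rfl | rfl
      · exact Or.inl (np_disj hnp hB h0 hx (by simp))
      · exact Or.inr (Or.inl (np_disj hnp hB hlast hx (by simp)))
    · exact Or.inr (Or.inr (Finset.mem_filter.2 ⟨hB, hsub⟩))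
  · rintro (rfl | rfl | hB)
    · exact h0
    · exact hlast
    · exact hP'sub hB

lemma caseB {n : ℕ} {P : Finset (Finset ℕ)} (hn : 3 ≤ n) (hP : SGood n P)
    (h0 : ({0, n - 1} : Finset ℕ) ∈ P) :
    SGood (n - 2) (exS n P) ∧ P = PhiB n (exS n P) := by
  obtain ⟨⟨⟨hne, hbd, hcov⟩, hnc, hpoor⟩, hsym⟩ := hP
  have hsym' : mir n P = P := hsym
  set P' := P.filter (fun B => ¬ B ⊆ {0, n - 1}) with hP'def
  have hP'sub : P' ⊆ P := Finset.filter_subset _ _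
  have hnp : NPartN n P := ⟨hne, hbd, hcov⟩
  have hbd' : ∀ B ∈ P', ∀ i ∈ B, 1 ≤ i ∧ i < 1 + (n - 2) := by
    intro B hB i hi
    obtain ⟨hBP, hBs⟩ := Finset.mem_filter.1 hB
    have hin : i < n := hbd B hBP i hi
    have hi0 : i ≠ 0 := by
      rintro rfl
      exact hBs (by rw [np_disj hnp hBP h0 hi (by simp)])
    have hi1 : i ≠ n - 1 := by
      rintro rfl
      exact hBs (by rw [np_disj hnp hBP h0 hi (by simp)])
    omega
  have hcov' : ∀ i, 1 ≤ i → i < 1 + (n - 2) → ∃ B ∈ P', i ∈ B := by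
    intro i h1 h2
    obtain ⟨B, ⟨hB, hiB⟩, _⟩ := hcov i (by omega)
    refine ⟨B, Finset.mem_filter.2 ⟨hB, ?_⟩, hiB⟩
    intro hsub
    have := hsub hiB
    simp at this
    omega
  obtain ⟨hgood, hround⟩ := good_unsh (c := 1) (m := n - 2)
    (fun B hB => hne B (hP'sub hB)) hbd' hcov'
    (fun B hB C hC i hiB hiC => np_disj hnp (hP'sub hB) (hP'sub hC) hiB hiC)
    (ncn_subset hP'sub hnc) (poorn_subset hP'sub hpoor)
  have hmirP' : mir n P' = P' := by
    have hsubm : mir n P' ⊆ P' := by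
      intro B hB
      obtain ⟨B₀, hB₀, rfl⟩ := mem_mir.1 hB
      have hB₀P := hP'sub hB₀
      refine Finset.mem_filter.2 ⟨by rw [← hsym']; exact mem_mir.2 ⟨B₀, hB₀P, rfl⟩, ?_⟩
      obtain ⟨x, hx⟩ := hne B₀ hB₀P
      have hxb := hbd' B₀ hB₀ x hx
      intro hsub
      have hmem : n - 1 - x ∈ mirB n B₀ := mem_mirB.2 ⟨x, hx, rfl⟩
      have := hsub hmem
      simp at this
      omega
    refine Finset.Subset.antisymm hsubm ?_
    have := Finset.image_subset_image (f := mirB n) hsubm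
    rwa [← mir, ← mir, mir_mir (fun B hB i hi => by have := hbd' B hB i hi; omega)] at this
  have hsymQ : SymN (n - 2) (exS n P) := by
    show mir (n - 2) (unsh 1 P') = unsh 1 P'
    rw [mir_unsh (n := n) hbd' (by omega), hmirP']
  refine ⟨⟨hgood, hsymQ⟩, ?_⟩
  have : PhiB n (exS n P) = insert {0, n - 1} P' := by
    unfold PhiB exS
    rw [hround]
  rw [this]
  ext B
  simp only [Finset.mem_insert]
  constructor
  · intro hB
    by_cases hsub : B ⊆ {0, n - 1}
    · obtain ⟨x, hx⟩ := hne B hB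
      have := hsub hx
      simp at this
      rcases this with rfl | rfl
      · exact Or.inl (np_disj hnp hB h0 hx (by simp))
      · exact Or.inl (np_disj hnp hB h0 hx (by simp))
    · exact Or.inr (Finset.mem_filter.2 ⟨hB, hsub⟩)
  · rintro (rfl | hB)
    · exact h0
    · exact hP'sub hB

/-! ### Class J -/

def addE (n k : ℕ) (B : Finset ℕ) : Finset ℕ :=
  ((if k ∈ B then ({0} : Finset ℕ) else ∅) ∪
    (if n - 1 - k ∈ B then ({n - 1} : Finset ℕ) else ∅)) ∪ B

def PhiJ (n k : ℕ) (π Q : Finset (Finset ℕ)) : Finset (Finset ℕ) :=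
  (sh 1 π ∪ mir n (sh 1 π)) ∪ (sh k Q).image (addE n k)

lemma mem_addE {n k : ℕ} {B : Finset ℕ} {i : ℕ} :
    i ∈ addE n k B ↔ (i = 0 ∧ k ∈ B) ∨ (i = n - 1 ∧ n - 1 - k ∈ B) ∨ i ∈ B := by
  unfold addE
  split_ifs with h1 h2 h2 <;> simp [h1, h2] <;> tauto

lemma addE_sub {n k : ℕ} {B : Finset ℕ} : B ⊆ addE n k B := by
  intro i hi; exact mem_addE.2 (Or.inr (Or.inr hi))

lemma addE_self {n k : ℕ} {B : Finset ℕ} (h1 : k ∉ B) (h2 : n - 1 - k ∉ B) :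
    addE n k B = B := by
  unfold addE; simp [h1, h2]

lemma addE_inter {n k : ℕ} {B : Finset ℕ} (hbd : ∀ i ∈ B, k ≤ i ∧ i ≤ n - 1 - k)
    (hk : 1 ≤ k) (hkn : 2 * k + 1 ≤ n) :
    addE n k B ∩ Finset.Icc k (n - 1 - k) = B := by
  ext i
  simp only [Finset.mem_inter, Finset.mem_Icc, mem_addE]
  constructor
  · rintro ⟨h | h | h, h2⟩
    · omega
    · omega
    · exact h
  · intro hi
    have := hbd i hi
    exact ⟨Or.inr (Or.inr hi), by omega⟩

lemma mem_PhiJ {n k : ℕ} {π Q : Finset (Finset ℕ)} {C : Finset ℕ} :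
    C ∈ PhiJ n k π Q ↔
      C ∈ sh 1 π ∨ C ∈ mir n (sh 1 π) ∨ ∃ C₀ ∈ sh k Q, C = addE n k C₀ := by
  simp [PhiJ, eq_comm, or_assoc]

lemma J_bounds {n k : ℕ} {π Q : Finset (Finset ℕ)} (hk : 2 ≤ k) (hn : 2 * k + 1 ≤ n)
    (hπ : Good (k - 1) π) (hQ : Good (n - 2 * k) Q) :
    (∀ B ∈ sh 1 π, ∀ i ∈ B, 1 ≤ i ∧ i ≤ k - 1) ∧
    (∀ B ∈ mir n (sh 1 π), ∀ i ∈ B, n - k ≤ i ∧ i ≤ n - 2) ∧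
    (∀ B ∈ sh k Q, ∀ i ∈ B, k ≤ i ∧ i ≤ n - 1 - k) := by
  obtain ⟨-, hbd1, -⟩ := sh_props (c := 1) hπ
  obtain ⟨-, hbd2, -⟩ := sh_props (c := k) hQ
  refine ⟨?_, ?_, ?_⟩
  · intro B hB i hi; have := hbd1 B hB i hi; omega
  · intro B hB i hi
    obtain ⟨B₀, hB₀, rfl⟩ := mem_mir.1 hB
    obtain ⟨j, hj, rfl⟩ := mem_mirB.1 hi
    have := hbd1 B₀ hB₀ j hj
    omega
  · intro B hB i hi; have := hbd2 B hB i hi; omega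

section JGood

variable {n k : ℕ} {π Q : Finset (Finset ℕ)}

lemma J_elt {n k : ℕ} {π Q : Finset (Finset ℕ)} (hk : 2 ≤ k) (hn : 2 * k + 1 ≤ n)
    (hπ : Good (k - 1) π) (hQ : Good (n - 2 * k) Q) :
    ∀ C ∈ PhiJ n k π Q, ∀ i ∈ C,
      (1 ≤ i ∧ i ≤ k - 1 ∧ C ∈ sh 1 π) ∨
      (n - k ≤ i ∧ i ≤ n - 2 ∧ C ∈ mir n (sh 1 π)) ∨
      (∃ C₀ ∈ sh k Q, C = addE n k C₀ ∧
        ((i = 0 ∧ k ∈ C₀) ∨ (i = n - 1 ∧ n - 1 - k ∈ C₀) ∨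
          (k ≤ i ∧ i ≤ n - 1 - k ∧ i ∈ C₀))) := by
  obtain ⟨hb1, hb2, hb3⟩ := J_bounds hk hn hπ hQ
  intro C hC i hi
  rcases mem_PhiJ.1 hC with h | h | ⟨C₀, hC₀, rfl⟩
  · have := hb1 C h i hi; exact Or.inl ⟨by omega, by omega, h⟩
  · have := hb2 C h i hi; exact Or.inr (Or.inl ⟨by omega, by omega, h⟩)
  · refine Or.inr (Or.inr ⟨C₀, hC₀, rfl, ?_⟩)
    rcases mem_addE.1 hi with h | h | h
    · exact Or.inl h
    · exact Or.inr (Or.inl h)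
    · have := hb3 C₀ hC₀ i h
      exact Or.inr (Or.inr ⟨by omega, by omega, h⟩)

lemma J_uniq (hk : 2 ≤ k) (hn : 2 * k + 1 ≤ n)
    (hπ : Good (k - 1) π) (hQ : Good (n - 2 * k) Q) :
    ∀ C ∈ PhiJ n k π Q, ∀ C' ∈ PhiJ n k π Q, ∀ i, i ∈ C → i ∈ C' → C = C' := by
  obtain ⟨hne1, hbd1, hcov1, huniq1, hnc1, hpoor1⟩ := sh_props (c := 1) hπ
  obtain ⟨hne3, hbd3, hcov3, huniq3, hnc3, hpoor3⟩ := sh_props (c := k) hQ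
  intro C hC C' hC' i hiC hiC'
  rcases J_elt hk hn hπ hQ C hC i hiC with ⟨l1, l2, hf⟩ | ⟨l1, l2, hf⟩ |
    ⟨C₀, hC₀, rfl, hcase⟩ <;>
    rcases J_elt hk hn hπ hQ C' hC' i hiC' with ⟨r1, r2, hf'⟩ | ⟨r1, r2, hf'⟩ |
      ⟨C₀', hC₀', rfl, hcase'⟩
  · exact huniq1 C hf C' hf' i hiC hiC'
  · omega
  · rcases hcase' with ⟨h, _⟩ | ⟨h, _⟩ | ⟨h, h2, _⟩ <;> omega
  · omega
  · -- both in mirror family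
    obtain ⟨B₁, hB₁, rfl⟩ := mem_mir.1 hf
    obtain ⟨B₁', hB₁', rfl⟩ := mem_mir.1 hf'
    obtain ⟨j, hj, hje⟩ := mem_mirB.1 hiC
    obtain ⟨j', hj', hje'⟩ := mem_mirB.1 hiC'
    have bj := hbd1 B₁ hB₁ j hj
    have bj' := hbd1 B₁' hB₁' j' hj'
    have : j = j' := by omega
    subst this
    rw [huniq1 B₁ hB₁ B₁' hB₁' j hj hj']
  · rcases hcase' with ⟨h, _⟩ | ⟨h, _⟩ | ⟨h, h2, _⟩ <;> omega
  · rcases hcase with ⟨h, _⟩ | ⟨h, _⟩ | ⟨h, h2, _⟩ <;> omega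
  · rcases hcase with ⟨h, _⟩ | ⟨h, _⟩ | ⟨h, h2, _⟩ <;> omega
  · -- both in addE family
    rcases hcase with ⟨rfl, hm⟩ | ⟨rfl, hm⟩ | ⟨hl, hl2, hm⟩ <;>
      rcases hcase' with ⟨he', hm'⟩ | ⟨he', hm'⟩ | ⟨hl', hl2', hm'⟩
    · rw [huniq3 C₀ hC₀ C₀' hC₀' k hm hm']
    · omega
    · omega
    · omega
    · rw [huniq3 C₀ hC₀ C₀' hC₀' (n - 1 - k) hm hm']
    · omega
    · omega
    · omega
    · rw [huniq3 C₀ hC₀ C₀' hC₀' i hm hm']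

lemma sgood_PhiJ (hk : 2 ≤ k) (hn : 2 * k + 1 ≤ n)
    (hπ : Good (k - 1) π) (hQ : SGood (n - 2 * k) Q) : SGood n (PhiJ n k π Q) := by
  obtain ⟨hQg, hQs⟩ := hQ
  obtain ⟨hne1, hbd1, hcov1, huniq1, hnc1, hpoor1⟩ := sh_props (c := 1) hπ
  obtain ⟨hne3, hbd3, hcov3, huniq3, hnc3, hpoor3⟩ := sh_props (c := k) hQg
  obtain ⟨hb1, hb2, hb3⟩ := J_bounds hk hn hπ hQg
  have hm2k : 1 ≤ n - 2 * k := by omega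
  refine ⟨⟨⟨?_, ?_, ?_⟩, ?_, ?_⟩, ?_⟩
  · -- nonempty
    intro C hC
    rcases mem_PhiJ.1 hC with h | h | ⟨C₀, hC₀, rfl⟩
    · exact hne1 C h
    · obtain ⟨B₁, hB₁, rfl⟩ := mem_mir.1 h
      exact (hne1 B₁ hB₁).image _
    · exact (hne3 C₀ hC₀).mono addE_sub
  · -- bounds
    intro C hC i hi
    rcases J_elt hk hn hπ hQg C hC i hi with ⟨l1, l2, _⟩ | ⟨l1, l2, _⟩ |
      ⟨C₀, hC₀, rfl, hcase⟩
    · omega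
    · omega
    · rcases hcase with ⟨rfl, _⟩ | ⟨rfl, _⟩ | ⟨h1, h2, _⟩ <;> omega
  · -- cover
    intro i hi
    have main : ∃ C ∈ PhiJ n k π Q, i ∈ C := by
      rcases Nat.lt_or_ge i 1 with h | h
      · -- i = 0
        obtain ⟨B₀, hB₀, hkB₀⟩ := hcov3 k (le_refl k) (by omega)
        refine ⟨addE n k B₀, mem_PhiJ.2 (Or.inr (Or.inr ⟨B₀, hB₀, rfl⟩)), ?_⟩
        exact mem_addE.2 (Or.inl ⟨by omega, hkB₀⟩)
      rcases Nat.lt_or_ge i k with h2 | h2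
      · obtain ⟨B, hB, hiB⟩ := hcov1 i h (by omega)
        exact ⟨B, mem_PhiJ.2 (Or.inl hB), hiB⟩
      rcases le_or_gt i (n - 1 - k) with h3 | h3
      · obtain ⟨B₀, hB₀, hiB₀⟩ := hcov3 i h2 (by omega)
        exact ⟨addE n k B₀, mem_PhiJ.2 (Or.inr (Or.inr ⟨B₀, hB₀, rfl⟩)), addE_sub hiB₀⟩
      rcases le_or_gt i (n - 2) with h4 | h4
      · obtain ⟨B, hB, hjB⟩ := hcov1 (n - 1 - i) (by omega) (by omega)
        refine ⟨mirB n B, mem_PhiJ.2 (Or.inr (Or.inl (mem_mir.2 ⟨B, hB, rfl⟩))), ?_⟩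
        refine mem_mirB.2 ⟨n - 1 - i, hjB, by omega⟩
      · -- i = n - 1
        obtain ⟨B₀, hB₀, hkB₀⟩ := hcov3 (n - 1 - k) (by omega) (by omega)
        refine ⟨addE n k B₀, mem_PhiJ.2 (Or.inr (Or.inr ⟨B₀, hB₀, rfl⟩)), ?_⟩
        exact mem_addE.2 (Or.inr (Or.inl ⟨by omega, hkB₀⟩))
    obtain ⟨C, hC, hiC⟩ := main
    exact ⟨C, ⟨hC, hiC⟩, fun C' ⟨hC', hiC'⟩ =>
      J_uniq hk hn hπ hQg C' hC' C hC i hiC' hiC⟩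
  · -- NCN
    intro B hB C hC hBC a ha c hc b hb d hd ⟨h1, h2, h3⟩
    rcases mem_PhiJ.1 hB with hBf | hBf | ⟨B₀, hB₀, rfl⟩ <;>
      rcases mem_PhiJ.1 hC with hCf | hCf | ⟨C₀, hC₀, rfl⟩
    · exact hnc1 B hBf C hCf hBC a ha c hc b hb d hd ⟨h1, h2, h3⟩
    · have l1 := hb1 B hBf c hc
      have r1 := hb2 C hCf b hb
      omega
    · have l1 := hb1 B hBf a ha
      have l2 := hb1 B hBf c hc
      have : (b = 0 ∧ k ∈ C₀) ∨ (b = n - 1 ∧ n - 1 - k ∈ C₀) ∨ b ∈ C₀ := mem_addE.1 hb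
      rcases this with ⟨rfl, _⟩ | ⟨rfl, _⟩ | hbm
      · omega
      · omega
      · have := hb3 C₀ hC₀ b hbm; omega
    · have l1 := hb2 B hBf a ha
      have r1 := hb1 C hCf b hb
      omega
    · -- both mirror
      obtain ⟨B₁, hB₁, rfl⟩ := mem_mir.1 hBf
      obtain ⟨C₁, hC₁, rfl⟩ := mem_mir.1 hCf
      have hne' : C₁ ≠ B₁ := by rintro rfl; exact hBC rfl
      obtain ⟨a₀, ha₀, rfl⟩ := mem_mirB.1 ha
      obtain ⟨c₀, hc₀, rfl⟩ := mem_mirB.1 hc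
      obtain ⟨b₀, hb₀, rfl⟩ := mem_mirB.1 hb
      obtain ⟨d₀, hd₀, rfl⟩ := mem_mirB.1 hd
      have ba := hbd1 B₁ hB₁ a₀ ha₀
      have bc := hbd1 B₁ hB₁ c₀ hc₀
      have bb := hbd1 C₁ hC₁ b₀ hb₀
      have bd := hbd1 C₁ hC₁ d₀ hd₀
      exact hnc1 C₁ hC₁ B₁ hB₁ hne' d₀ hd₀ b₀ hb₀ c₀ hc₀ a₀ ha₀ (by omega)
    · -- mirror vs addE
      have l1 := hb2 B hBf a ha
      have l2 := hb2 B hBf c hc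
      rcases mem_addE.1 hb with ⟨rfl, _⟩ | ⟨rfl, _⟩ | hbm
      · omega
      · omega
      · have := hb3 C₀ hC₀ b hbm; omega
    · -- addE vs sh1
      have r1 := hb1 C hCf b hb
      have r2 := hb1 C hCf d hd
      rcases mem_addE.1 ha with ⟨rfl, _⟩ | ⟨rfl, _⟩ | ham
      · rcases mem_addE.1 hc with ⟨rfl, _⟩ | ⟨rfl, _⟩ | hcm
        · omega
        · omega
        · have := hb3 B₀ hB₀ c hcm; omega
      · omega
      · have := hb3 B₀ hB₀ a ham; omega
    · -- addE vs mirror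
      have r1 := hb2 C hCf b hb
      have r2 := hb2 C hCf d hd
      rcases mem_addE.1 hc with ⟨rfl, _⟩ | ⟨rfl, _⟩ | hcm
      · omega
      · omega
      · have := hb3 B₀ hB₀ c hcm; omega
    · -- both addE
      have hne0 : B₀ ≠ C₀ := by rintro rfl; exact hBC rfl
      rcases mem_addE.1 hb with ⟨rfl, _⟩ | ⟨rfl, _⟩ | hbm
      · omega
      · rcases mem_addE.1 hc with ⟨rfl, _⟩ | ⟨rfl, hcm⟩ | hcm
        · omega
        · omega
        · have := hb3 B₀ hB₀ c hcm; omega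
      have hbb := hb3 C₀ hC₀ b hbm
      rcases mem_addE.1 hc with ⟨rfl, _⟩ | ⟨rfl, _⟩ | hcm
      · omega
      · -- c = n - 1 : then d > n - 1 impossible
        rcases mem_addE.1 hd with ⟨rfl, _⟩ | ⟨rfl, _⟩ | hdm
        · omega
        · omega
        · have := hb3 C₀ hC₀ d hdm; omega
      have hcb := hb3 B₀ hB₀ c hcm
      -- now b, c are core elements
      have ha' : ∃ a', a' ∈ B₀ ∧ a' < b := by
        rcases mem_addE.1 ha with ⟨rfl, hm⟩ | ⟨rfl, hm⟩ | ham
        · refine ⟨k, hm, ?_⟩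
          have : b ≠ k := fun e => hne0 (huniq3 B₀ hB₀ C₀ hC₀ k hm (e ▸ hbm))
          omega
        · omega
        · exact ⟨a, ham, h1⟩
      have hd' : ∃ d', d' ∈ C₀ ∧ c < d' := by
        rcases mem_addE.1 hd with ⟨rfl, hm⟩ | ⟨rfl, hm⟩ | hdm
        · omega
        · refine ⟨n - 1 - k, hm, ?_⟩
          have : c ≠ n - 1 - k := fun e => hne0 (huniq3 B₀ hB₀ C₀ hC₀ (n - 1 - k) (e ▸ hcm) hm)
          omega
        · exact ⟨d, hdm, h3⟩
      obtain ⟨a', ha'm, ha'lt⟩ := ha'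
      obtain ⟨d', hd'm, hd'lt⟩ := hd'
      exact hnc3 B₀ hB₀ C₀ hC₀ hne0 a' ha'm c hcm b hbm d' hd'm ⟨ha'lt, h2, hd'lt⟩
  · -- Poor
    intro C hC i hi j hj
    rcases mem_PhiJ.1 hC with hCf | hCf | ⟨C₀, hC₀, rfl⟩
    · exact hpoor1 C hCf i hi j hj
    · obtain ⟨B₁, hB₁, rfl⟩ := mem_mir.1 hCf
      obtain ⟨i₀, hi₀, rfl⟩ := mem_mirB.1 hi
      obtain ⟨j₀, hj₀, rfl⟩ := mem_mirB.1 hj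
      have b1 := hbd1 B₁ hB₁ i₀ hi₀
      have b2 := hbd1 B₁ hB₁ j₀ hj₀
      have := hpoor1 B₁ hB₁ j₀ hj₀ i₀ hi₀
      omega
    · rcases mem_addE.1 hi with ⟨rfl, _⟩ | ⟨rfl, _⟩ | him <;>
        rcases mem_addE.1 hj with ⟨rfl, _⟩ | ⟨rfl, _⟩ | hjm
      · omega
      · omega
      · have := hb3 C₀ hC₀ j hjm; omega
      · omega
      · omega
      · have := hb3 C₀ hC₀ j hjm; omega
      · have := hb3 C₀ hC₀ i him; omega
      · have := hb3 C₀ hC₀ i him; omega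
      · exact hpoor3 C₀ hC₀ i him j hjm
  · -- Sym
    show mir n (PhiJ n k π Q) = PhiJ n k π Q
    unfold PhiJ mir
    rw [Finset.image_union, Finset.image_union]
    have e1 : Finset.image (mirB n) (sh 1 π) = mir n (sh 1 π) := rfl
    have e2 : Finset.image (mirB n) (mir n (sh 1 π)) = sh 1 π := by
      rw [← mir]
      exact mir_mir (fun B hB i hi => by have := hb1 B hB i hi; omega)
    have key : ∀ B₀ ∈ sh k Q, mirB n (addE n k B₀) = addE n k (mirB n B₀) := by
      intro B₀ hB₀
      have hbb := hb3 B₀ hB₀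
      have hk1 : k ∈ mirB n B₀ ↔ n - 1 - k ∈ B₀ := by
        rw [mem_mirB]
        constructor
        · rintro ⟨j, hj, hje⟩
          have := hbb j hj
          have : j = n - 1 - k := by omega
          rwa [← this]
        · intro h
          exact ⟨n - 1 - k, h, by omega⟩
      have hk2 : n - 1 - k ∈ mirB n B₀ ↔ k ∈ B₀ := by
        rw [mem_mirB]
        constructor
        · rintro ⟨j, hj, hje⟩
          have := hbb j hj
          have : j = k := by omega
          rwa [← this]
        · intro h
          exact ⟨k, h, by omega⟩
      ext i
      constructor
      · intro hmem
        obtain ⟨j, hj, rfl⟩ := mem_mirB.1 hmem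
        rcases mem_addE.1 hj with ⟨rfl, hm⟩ | ⟨rfl, hm⟩ | hjm
        · exact mem_addE.2 (Or.inr (Or.inl ⟨by omega, hk2.2 hm⟩))
        · exact mem_addE.2 (Or.inl ⟨by omega, hk1.2 hm⟩)
        · exact mem_addE.2 (Or.inr (Or.inr (mem_mirB.2 ⟨j, hjm, rfl⟩)))
      · intro hmem
        rcases mem_addE.1 hmem with ⟨rfl, hm⟩ | ⟨rfl, hm⟩ | him
        · exact mem_mirB.2 ⟨n - 1, mem_addE.2 (Or.inr (Or.inl ⟨rfl, hk1.1 hm⟩)), by omega⟩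
        · exact mem_mirB.2 ⟨0, mem_addE.2 (Or.inl ⟨rfl, hk2.1 hm⟩), by omega⟩
        · obtain ⟨j, hj, rfl⟩ := mem_mirB.1 him
          exact mem_mirB.2 ⟨j, addE_sub hj, rfl⟩
    have e3 : Finset.image (mirB n) ((sh k Q).image (addE n k)) =
        (sh k Q).image (addE n k) := by
      rw [Finset.image_image]
      have : (sh k Q).image (mirB n ∘ addE n k) = (sh k Q).image (addE n k ∘ mirB n) :=
        Finset.image_congr (fun B₀ hB₀ => key B₀ hB₀)
      rw [this, ← Finset.image_image]
      have : (sh k Q).image (mirB n) = sh k Q := by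
        have h1 : mir n (sh k Q) = sh k (mir (n - 2 * k) Q) :=
          mir_sh hQg.1.2.1 (by omega)
        have h2 : mir (n - 2 * k) Q = Q := hQs
        rw [← mir, h1, h2]
      rw [this]
    rw [e1, e2, e3, Finset.union_comm (mir n (sh 1 π)) (sh 1 π)]

end JGood

def exPi (k : ℕ) (P : Finset (Finset ℕ)) : Finset (Finset ℕ) :=
  unsh 1 (P.filter (· ⊆ Finset.Icc 1 (k - 1)))

def exQ (n k : ℕ) (P : Finset (Finset ℕ)) : Finset (Finset ℕ) :=
  unsh k ((P.image (· ∩ Finset.Icc k (n - 1 - k))).erase ∅)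

section JExtract

variable {n k : ℕ} {π Q : Finset (Finset ℕ)}

lemma exPi_PhiJ (hk : 2 ≤ k) (hn : 2 * k + 1 ≤ n)
    (hπ : Good (k - 1) π) (hQ : Good (n - 2 * k) Q) :
    exPi k (PhiJ n k π Q) = π := by
  obtain ⟨hb1, hb2, hb3⟩ := J_bounds hk hn hπ hQ
  obtain ⟨hne1, -⟩ := sh_props (c := 1) hπ
  obtain ⟨hne3, -⟩ := sh_props (c := k) hQ
  unfold exPi PhiJ
  rw [Finset.filter_union, Finset.filter_union]
  rw [Finset.filter_true_of_mem (fun B hB => by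
    intro i hi
    have := hb1 B hB i hi
    simp only [Finset.mem_Icc]
    omega)]
  rw [Finset.filter_false_of_mem (fun B hB hsub => by
    obtain ⟨B₁, hB₁, rfl⟩ := mem_mir.1 hB
    obtain ⟨x, hx⟩ := (hne1 B₁ hB₁).image (f := fun i => n - 1 - i)
    have hx' : x ∈ mirB n B₁ := hx
    have := hb2 _ hB x hx'
    have := hsub hx'
    simp only [Finset.mem_Icc] at this
    omega)]
  rw [Finset.filter_false_of_mem (fun B hB hsub => by
    simp only [Finset.mem_image] at hB
    obtain ⟨B₀, hB₀, rfl⟩ := hB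
    obtain ⟨x, hx⟩ := hne3 B₀ hB₀
    have := hb3 B₀ hB₀ x hx
    have := hsub (addE_sub hx)
    simp only [Finset.mem_Icc] at this
    omega)]
  rw [Finset.union_empty, Finset.union_empty, unsh_sh]

lemma exQ_PhiJ (hk : 2 ≤ k) (hn : 2 * k + 1 ≤ n)
    (hπ : Good (k - 1) π) (hQ : Good (n - 2 * k) Q) :
    exQ n k (PhiJ n k π Q) = Q := by
  obtain ⟨hb1, hb2, hb3⟩ := J_bounds hk hn hπ hQ
  obtain ⟨hne3, -⟩ := sh_props (c := k) hQ
  unfold exQ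
  have key : ((PhiJ n k π Q).image (· ∩ Finset.Icc k (n - 1 - k))).erase ∅ = sh k Q := by
    ext D
    simp only [Finset.mem_erase, Finset.mem_image]
    constructor
    · rintro ⟨hDne, C, hC, rfl⟩
      rcases mem_PhiJ.1 hC with h | h | ⟨C₀, hC₀, rfl⟩
      · exfalso
        apply hDne
        rw [Finset.eq_empty_iff_forall_notMem]
        intro x hx
        obtain ⟨hx1, hx2⟩ := Finset.mem_inter.1 hx
        have := hb1 C h x hx1
        simp only [Finset.mem_Icc] at hx2
        omega
      · exfalso
        apply hDne
        rw [Finset.eq_empty_iff_forall_notMem]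
        intro x hx
        obtain ⟨hx1, hx2⟩ := Finset.mem_inter.1 hx
        have := hb2 C h x hx1
        simp only [Finset.mem_Icc] at hx2
        omega
      · rw [addE_inter (hb3 C₀ hC₀) (by omega) hn]
        exact hC₀
    · intro hD
      refine ⟨?_, addE n k D, mem_PhiJ.2 (Or.inr (Or.inr ⟨D, hD, rfl⟩)), ?_⟩
      · obtain ⟨x, hx⟩ := hne3 D hD
        intro h
        rw [h] at hx
        exact absurd hx (Finset.notMem_empty x)
      · rw [addE_inter (hb3 D hD) (by omega) hn]
  rw [key, unsh_sh]

lemma zero_block_PhiJ (hk : 2 ≤ k) (hn : 2 * k + 1 ≤ n)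
    (hπ : Good (k - 1) π) (hQ : Good (n - 2 * k) Q) :
    ∀ C ∈ PhiJ n k π Q, 0 ∈ C → ∃ C₀ ∈ sh k Q, C = addE n k C₀ ∧ k ∈ C₀ := by
  intro C hC h0
  rcases J_elt hk hn hπ hQ C hC 0 h0 with ⟨l1, _⟩ | ⟨l1, l2, _⟩ | ⟨C₀, hC₀, rfl, hcase⟩
  · omega
  · omega
  · rcases hcase with ⟨_, hm⟩ | ⟨he, _⟩ | ⟨hl, _⟩
    · exact ⟨C₀, hC₀, rfl, hm⟩
    · omega
    · omega

lemma PhiJ_k_eq {n k k' : ℕ} {π Q π' Q' : Finset (Finset ℕ)}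
    (hk : 2 ≤ k) (hn : 2 * k + 1 ≤ n) (hπ : Good (k - 1) π) (hQ : Good (n - 2 * k) Q)
    (hk' : 2 ≤ k') (hn' : 2 * k' + 1 ≤ n) (hπ' : Good (k' - 1) π')
    (hQ' : Good (n - 2 * k') Q')
    (heq : PhiJ n k π Q = PhiJ n k' π' Q') : k = k' := by
  obtain ⟨hb1, hb2, hb3⟩ := J_bounds hk hn hπ hQ
  obtain ⟨hb1', hb2', hb3'⟩ := J_bounds hk' hn' hπ' hQ'
  obtain ⟨-, -, hcov3, -⟩ := sh_props (c := k) hQ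
  obtain ⟨B₀, hB₀, hkB₀⟩ := hcov3 k (le_refl k) (by omega)
  have hmem : addE n k B₀ ∈ PhiJ n k' π' Q' := by
    rw [← heq]; exact mem_PhiJ.2 (Or.inr (Or.inr ⟨B₀, hB₀, rfl⟩))
  have h0 : (0 : ℕ) ∈ addE n k B₀ := mem_addE.2 (Or.inl ⟨rfl, hkB₀⟩)
  obtain ⟨C₀', hC₀', hCe, hk'C⟩ := zero_block_PhiJ hk' hn' hπ' hQ' _ hmem h0
  -- k ∈ addE n k' C₀'
  have hkin : k ∈ addE n k' C₀' := by rw [← hCe]; exact addE_sub hkB₀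
  have hk'in : k' ∈ addE n k B₀ := by rw [hCe]; exact addE_sub hk'C
  rcases mem_addE.1 hkin with ⟨he, _⟩ | ⟨he, _⟩ | hm
  · omega
  · omega
  · have h1 := hb3' C₀' hC₀' k hm
    rcases mem_addE.1 hk'in with ⟨he, _⟩ | ⟨he, _⟩ | hm'
    · omega
    · omega
    · have h2 := hb3 B₀ hB₀ k' hm'
      omega

end JExtract

lemma caseJ {n k : ℕ} {P B₀ : Finset ℕ → Prop} : True := trivial

lemma caseJ' {n k : ℕ} {P : Finset (Finset ℕ)} {B₀ : Finset ℕ}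
    (hn3 : 3 ≤ n) (hP : SGood n P) (hB₀ : B₀ ∈ P) (h00 : 0 ∈ B₀)
    (hnot1 : B₀ ≠ {0}) (hnot2 : B₀ ≠ {0, n - 1})
    (hkB : k ∈ B₀) (hk0 : k ≠ 0) (hkmin : ∀ x ∈ B₀, x ≠ 0 → k ≤ x) :
    2 ≤ k ∧ 2 * k + 1 ≤ n ∧ Good (k - 1) (exPi k P) ∧ SGood (n - 2 * k) (exQ n k P) ∧
      P = PhiJ n k (exPi k P) (exQ n k P) := by
  obtain ⟨⟨⟨hne, hbd, hcov⟩, hnc, hpoor⟩, hsym⟩ := hP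
  have hsym' : mir n P = P := hsym
  have hnp : NPartN n P := ⟨hne, hbd, hcov⟩
  set B₀' := mirB n B₀ with hB₀'def
  have hB₀' : B₀' ∈ P := by rw [← hsym']; exact mem_mir.2 ⟨B₀, hB₀, rfl⟩
  have hlast : n - 1 ∈ B₀' := mem_mirB.2 ⟨0, h00, by omega⟩
  have hkn : k < n := hbd _ hB₀ k hkB
  have hk2 : 2 ≤ k := by have := hpoor B₀ hB₀ 0 h00 k hkB; omega
  have hmirmem : ∀ x ∈ B₀, n - 1 - x ∈ B₀' := fun x hx => mem_mirB.2 ⟨x, hx, rfl⟩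
  have hnk' : n - 1 - k ∈ B₀' := hmirmem k hkB
  have hnlast_iff : n - 1 ∈ B₀ → B₀' = B₀ := fun h => np_disj hnp hB₀' hB₀ hlast h
  have hzero_iff : 0 ∈ B₀' → B₀' = B₀ := fun h => np_disj hnp hB₀' hB₀ h h00
  -- Step A : 2 * k + 1 ≤ n
  have hk21 : 2 * k + 1 ≤ n := by
    by_cases heqs : B₀' = B₀
    · have hmk : n - 1 - k ∈ B₀ := heqs ▸ hnk'
      have hnk0 : n - 1 - k ≠ 0 := by
        intro h
        apply hnot2
        have hkn1 : k = n - 1 := by omega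
        ext x
        simp only [Finset.mem_insert, Finset.mem_singleton]
        constructor
        · intro hx
          rcases eq_or_ne x 0 with rfl | hx0
          · exact Or.inl rfl
          · have := hkmin x hx hx0
            have := hbd B₀ hB₀ x hx
            right; omega
        · rintro (rfl | rfl)
          · exact h00
          · rwa [← hkn1]
      have := hkmin _ hmk hnk0
      omega
    · have hnlast : n - 1 ∉ B₀ := fun h => heqs (hnlast_iff h)
      have hkne : k ≠ n - 1 := fun e => hnlast (e ▸ hkB)
      by_contra hcon
      have hBne : B₀ ≠ B₀' := fun e => heqs e.symm
      have := hnc B₀ hB₀ B₀' hB₀' hBne 0 h00 k hkB (n - 1 - k) hnk' (n - 1) hlast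
      omega
  -- Step B : structure of B₀ and B₀'
  have hB₀sub : ∀ x ∈ B₀, x = 0 ∨ (k ≤ x ∧ x ≤ n - 1 - k) ∨ x = n - 1 := by
    intro x hx
    rcases eq_or_ne x 0 with rfl | hx0
    · exact Or.inl rfl
    rcases eq_or_ne x (n - 1) with rfl | hxn
    · exact Or.inr (Or.inr rfl)
    have hxk := hkmin x hx hx0
    have hxn' := hbd B₀ hB₀ x hx
    refine Or.inr (Or.inl ⟨hxk, ?_⟩)
    by_contra hcon
    have hx' : n - 1 - x ∈ B₀' := hmirmem x hx
    by_cases heqs : B₀' = B₀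
    · have hmm : n - 1 - x ∈ B₀ := heqs ▸ hx'
      have h1 : n - 1 - x ≠ 0 := by omega
      have := hkmin _ hmm h1
      omega
    · have hBne : B₀ ≠ B₀' := fun e => heqs e.symm
      have := hnc B₀ hB₀ B₀' hB₀' hBne 0 h00 x hx (n - 1 - x) hx' (n - 1) hlast
      omega
  have hB₀'sub : ∀ x ∈ B₀', x = n - 1 ∨ (k ≤ x ∧ x ≤ n - 1 - k) ∨ x = 0 := by
    intro x hx
    obtain ⟨y, hy, rfl⟩ := mem_mirB.1 hx
    have hyb := hbd B₀ hB₀ y hy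
    rcases hB₀sub y hy with rfl | ⟨h1, h2⟩ | he
    · left; rfl
    · right; left; omega
    · right; right; omega
  -- Step C : classification of the other blocks
  have hnotB₀ : ∀ C ∈ P, C ≠ B₀ → ∀ x ∈ C, x ≠ 0 :=
    fun C hC hCne x hx he => hCne (np_disj hnp hC hB₀ (he ▸ hx) h00)
  have hnotB₀' : ∀ C ∈ P, C ≠ B₀' → ∀ x ∈ C, x ≠ n - 1 :=
    fun C hC hCne x hx he => hCne (np_disj hnp hC hB₀' (he ▸ hx) hlast)
  have hmix1 : ∀ C ∈ P, C ≠ B₀ → ∀ x ∈ C, ∀ y ∈ C, x ≤ k - 1 → k ≤ y → False := by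
    intro C hC hCne x hx y hy hx1 hy1
    have hx0 : x ≠ 0 := hnotB₀ C hC hCne x hx
    have hyk : y ≠ k := fun e => hCne (np_disj hnp hC hB₀ (e ▸ hy) hkB)
    have hBne : B₀ ≠ C := fun e => hCne e.symm
    have := hnc B₀ hB₀ C hC hBne 0 h00 k hkB x hx y hy
    omega
  have hmix2 : ∀ C ∈ P, C ≠ B₀ → C ≠ B₀' → ∀ x ∈ C, ∀ y ∈ C,
      n - k ≤ x → y ≤ n - 1 - k → False := by
    intro C hC hCne hCne' x hx y hy hx1 hy1
    have hxn : x ≠ n - 1 := hnotB₀' C hC hCne' x hx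
    have hxb := hbd C hC x hx
    have hynk : y ≠ n - 1 - k := fun e => hCne' (np_disj hnp hC hB₀' (e ▸ hy) hnk')
    have := hnc C hC B₀' hB₀' hCne' y hy x hx (n - 1 - k) hnk' (n - 1) hlast
    omega
  have hClass : ∀ C ∈ P, C ≠ B₀ → C ≠ B₀' →
      (∀ x ∈ C, 1 ≤ x ∧ x ≤ k - 1) ∨ (∀ x ∈ C, k ≤ x ∧ x ≤ n - 1 - k) ∨
      (∀ x ∈ C, n - k ≤ x ∧ x ≤ n - 2) := by
    intro C hC hCne hCne'
    have hbds : ∀ x ∈ C, 1 ≤ x ∧ x ≤ n - 2 := by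
      intro x hx
      have h1 := hnotB₀ C hC hCne x hx
      have h2 := hnotB₀' C hC hCne' x hx
      have h3 := hbd C hC x hx
      omega
    obtain ⟨y, hy⟩ := hne C hC
    have hyb := hbds y hy
    rcases le_or_gt y (k - 1) with hyr | hyr
    · left
      intro x hx
      have hxb := hbds x hx
      refine ⟨by omega, ?_⟩
      by_contra hcon
      exact hmix1 C hC hCne y hy x hx hyr (by omega)
    rcases le_or_gt y (n - 1 - k) with hyr2 | hyr2
    · right; left
      intro x hx
      have hxb := hbds x hx
      constructor
      · by_contra hcon
        exact hmix1 C hC hCne x hx y hy (by omega) (by omega)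
      · by_contra hcon
        exact hmix2 C hC hCne hCne' x hx y hy (by omega) hyr2
    · right; right
      intro x hx
      have hxb := hbds x hx
      refine ⟨?_, by omega⟩
      by_contra hcon
      exact hmix2 C hC hCne hCne' y hy x hx (by omega) (by omega)
  -- Step D : the π part
  set Pf := P.filter (· ⊆ Finset.Icc 1 (k - 1)) with hPfdef
  have hPfsub : Pf ⊆ P := Finset.filter_subset _ _
  have hPfbd : ∀ B ∈ Pf, ∀ i ∈ B, 1 ≤ i ∧ i < 1 + (k - 1) := by
    intro B hB i hi
    have := (Finset.mem_filter.1 hB).2 hi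
    simp only [Finset.mem_Icc] at this
    omega
  have hPfcov : ∀ i, 1 ≤ i → i < 1 + (k - 1) → ∃ B ∈ Pf, i ∈ B := by
    intro i h1 h2
    obtain ⟨C, ⟨hC, hiC⟩, -⟩ := hcov i (by omega)
    have hCne : C ≠ B₀ := by
      intro e
      rcases hB₀sub i (e ▸ hiC) with h | h | h <;> omega
    have hCne' : C ≠ B₀' := by
      intro e
      rcases hB₀'sub i (e ▸ hiC) with h | h | h <;> omega
    rcases hClass C hC hCne hCne' with h | h | h
    · refine ⟨C, Finset.mem_filter.2 ⟨hC, ?_⟩, hiC⟩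
      intro x hx
      simp only [Finset.mem_Icc]
      exact h x hx
    · have := h i hiC; omega
    · have := h i hiC; omega
  obtain ⟨hπgood, hπround⟩ := good_unsh (c := 1) (m := k - 1)
    (fun B hB => hne B (hPfsub hB)) hPfbd hPfcov
    (fun B hB C hC i hiB hiC => np_disj hnp (hPfsub hB) (hPfsub hC) hiB hiC)
    (ncn_subset hPfsub hnc) (poorn_subset hPfsub hpoor)
  -- Step E : the Q part
  set Qm := (P.image (· ∩ Finset.Icc k (n - 1 - k))).erase ∅ with hQmdef
  have memQm : ∀ D, D ∈ Qm ↔ D ≠ ∅ ∧ ∃ C ∈ P, D = C ∩ Finset.Icc k (n - 1 - k) := by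
    intro D
    simp only [hQmdef, Finset.mem_erase, Finset.mem_image]
    constructor
    · rintro ⟨h1, C, hC, rfl⟩; exact ⟨h1, C, hC, rfl⟩
    · rintro ⟨h1, C, hC, rfl⟩; exact ⟨h1, C, hC, rfl⟩
  have hQmne : ∀ D ∈ Qm, D.Nonempty := by
    intro D hD
    exact Finset.nonempty_iff_ne_empty.2 ((memQm D).1 hD).1
  have hQmbd : ∀ D ∈ Qm, ∀ i ∈ D, k ≤ i ∧ i < k + (n - 2 * k) := by
    intro D hD i hi
    obtain ⟨-, C, hC, rfl⟩ := (memQm D).1 hD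
    have := (Finset.mem_inter.1 hi).2
    simp only [Finset.mem_Icc] at this
    omega
  have hQmcov : ∀ i, k ≤ i → i < k + (n - 2 * k) → ∃ D ∈ Qm, i ∈ D := by
    intro i h1 h2
    obtain ⟨C, ⟨hC, hiC⟩, -⟩ := hcov i (by omega)
    refine ⟨C ∩ Finset.Icc k (n - 1 - k), (memQm _).2 ⟨?_, C, hC, rfl⟩, ?_⟩
    · intro h
      have : i ∈ C ∩ Finset.Icc k (n - 1 - k) :=
        Finset.mem_inter.2 ⟨hiC, Finset.mem_Icc.2 ⟨h1, by omega⟩⟩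
      rw [h] at this
      exact absurd this (Finset.notMem_empty i)
    · exact Finset.mem_inter.2 ⟨hiC, Finset.mem_Icc.2 ⟨h1, by omega⟩⟩
  have hQmuniq : ∀ D ∈ Qm, ∀ D' ∈ Qm, ∀ i, i ∈ D → i ∈ D' → D = D' := by
    intro D hD D' hD' i hiD hiD'
    obtain ⟨-, C, hC, rfl⟩ := (memQm D).1 hD
    obtain ⟨-, C', hC', rfl⟩ := (memQm D').1 hD'
    have h1 := (Finset.mem_inter.1 hiD).1
    have h2 := (Finset.mem_inter.1 hiD').1
    rw [np_disj hnp hC hC' h1 h2]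
  have hQmnc : NCN Qm := by
    intro D hD D' hD' hDD' a ha c hc b hb d hd
    obtain ⟨-, C, hC, rfl⟩ := (memQm D).1 hD
    obtain ⟨-, C', hC', rfl⟩ := (memQm D').1 hD'
    have hCC' : C ≠ C' := by rintro rfl; exact hDD' rfl
    exact hnc C hC C' hC' hCC' a (Finset.mem_inter.1 ha).1 c (Finset.mem_inter.1 hc).1
      b (Finset.mem_inter.1 hb).1 d (Finset.mem_inter.1 hd).1
  have hQmpoor : PoorN Qm := by
    intro D hD i hi j hj
    obtain ⟨-, C, hC, rfl⟩ := (memQm D).1 hD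
    exact hpoor C hC i (Finset.mem_inter.1 hi).1 j (Finset.mem_inter.1 hj).1
  obtain ⟨hQgood, hQround⟩ := good_unsh (c := k) (m := n - 2 * k)
    hQmne hQmbd hQmcov hQmuniq hQmnc hQmpoor
  -- Sym for the Q part
  have hmirinter : ∀ C ∈ P, mirB n (C ∩ Finset.Icc k (n - 1 - k)) =
      (mirB n C) ∩ Finset.Icc k (n - 1 - k) := by
    intro C hC
    ext x
    constructor
    · intro hx
      obtain ⟨y, hy, rfl⟩ := mem_mirB.1 hx
      obtain ⟨hy1, hy2⟩ := Finset.mem_inter.1 hy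
      simp only [Finset.mem_Icc] at hy2
      refine Finset.mem_inter.2 ⟨mem_mirB.2 ⟨y, hy1, rfl⟩, Finset.mem_Icc.2 (by omega)⟩
    · intro hx
      obtain ⟨hx1, hx2⟩ := Finset.mem_inter.1 hx
      obtain ⟨y, hy, rfl⟩ := mem_mirB.1 hx1
      simp only [Finset.mem_Icc] at hx2
      have := hbd C hC y hy
      refine mem_mirB.2 ⟨y, Finset.mem_inter.2 ⟨hy, Finset.mem_Icc.2 (by omega)⟩, rfl⟩
  have hmirQm : mir n Qm = Qm := by
    have hsubm : mir n Qm ⊆ Qm := by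
      intro D hD
      obtain ⟨D₀, hD₀, rfl⟩ := mem_mir.1 hD
      obtain ⟨hne0, C, hC, rfl⟩ := (memQm D₀).1 hD₀
      rw [hmirinter C hC]
      refine (memQm _).2 ⟨?_, mirB n C, by rw [← hsym']; exact mem_mir.2 ⟨C, hC, rfl⟩, rfl⟩
      rw [← hmirinter C hC]
      have : (C ∩ Finset.Icc k (n - 1 - k)).Nonempty := Finset.nonempty_iff_ne_empty.2 hne0
      exact Finset.nonempty_iff_ne_empty.1 (this.image _)
    refine Finset.Subset.antisymm hsubm ?_
    have := Finset.image_subset_image (f := mirB n) hsubm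
    rwa [← mir, ← mir, mir_mir (fun B hB i hi => by have := hQmbd B hB i hi; omega)] at this
  have hQsym : SymN (n - 2 * k) (exQ n k P) := by
    show mir (n - 2 * k) (unsh k Qm) = unsh k Qm
    rw [mir_unsh (n := n) hQmbd (by omega), hmirQm]
  -- Step F : reconstruction
  have hexpi : exPi k P = unsh 1 Pf := rfl
  have hexq : exQ n k P = unsh k Qm := rfl
  have hkInt : k ∈ B₀ ∩ Finset.Icc k (n - 1 - k) :=
    Finset.mem_inter.2 ⟨hkB, Finset.mem_Icc.2 ⟨le_refl k, by omega⟩⟩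
  have hnkInt : n - 1 - k ∈ B₀ ∩ Finset.Icc k (n - 1 - k) ↔ n - 1 ∈ B₀ := by
    constructor
    · intro h
      have h1 := (Finset.mem_inter.1 h).1
      have : B₀ = B₀' := np_disj hnp hB₀ hB₀' h1 hnk'
      rw [this]; exact hlast
    · intro h
      have heq : B₀' = B₀ := hnlast_iff h
      refine Finset.mem_inter.2 ⟨heq ▸ hnk', Finset.mem_Icc.2 ⟨by omega, le_refl _⟩⟩
  have haddB₀ : addE n k (B₀ ∩ Finset.Icc k (n - 1 - k)) = B₀ := by
    ext x
    rw [mem_addE]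
    constructor
    · rintro (⟨rfl, -⟩ | ⟨rfl, hm⟩ | hm)
      · exact h00
      · exact hnkInt.1 hm
      · exact (Finset.mem_inter.1 hm).1
    · intro hx
      rcases hB₀sub x hx with rfl | ⟨h1, h2⟩ | rfl
      · exact Or.inl ⟨rfl, hkInt⟩
      · exact Or.inr (Or.inr (Finset.mem_inter.2 ⟨hx, Finset.mem_Icc.2 ⟨h1, h2⟩⟩))
      · exact Or.inr (Or.inl ⟨rfl, hnkInt.2 hx⟩)
  have hnkInt' : n - 1 - k ∈ B₀' ∩ Finset.Icc k (n - 1 - k) :=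
    Finset.mem_inter.2 ⟨hnk', Finset.mem_Icc.2 ⟨by omega, le_refl _⟩⟩
  have hkInt' : k ∈ B₀' ∩ Finset.Icc k (n - 1 - k) ↔ 0 ∈ B₀' := by
    constructor
    · intro h
      have h1 := (Finset.mem_inter.1 h).1
      have : B₀' = B₀ := np_disj hnp hB₀' hB₀ h1 hkB
      rw [this]; exact h00
    · intro h
      have heq : B₀' = B₀ := hzero_iff h
      exact Finset.mem_inter.2 ⟨heq ▸ hkB, Finset.mem_Icc.2 ⟨le_refl _, by omega⟩⟩
  have haddB₀' : addE n k (B₀' ∩ Finset.Icc k (n - 1 - k)) = B₀' := by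
    ext x
    rw [mem_addE]
    constructor
    · rintro (⟨rfl, hm⟩ | ⟨rfl, -⟩ | hm)
      · exact hkInt'.1 hm
      · exact hlast
      · exact (Finset.mem_inter.1 hm).1
    · intro hx
      rcases hB₀'sub x hx with rfl | ⟨h1, h2⟩ | rfl
      · exact Or.inr (Or.inl ⟨rfl, hnkInt'⟩)
      · exact Or.inr (Or.inr (Finset.mem_inter.2 ⟨hx, Finset.mem_Icc.2 ⟨h1, h2⟩⟩))
      · exact Or.inl ⟨rfl, hkInt'.2 hx⟩
  have haddMid : ∀ C ∈ P, C ≠ B₀ → C ≠ B₀' → (∀ x ∈ C, k ≤ x ∧ x ≤ n - 1 - k) →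
      C ∩ Finset.Icc k (n - 1 - k) = C ∧ addE n k C = C := by
    intro C hC hCne hCne' hmid
    have hCsub : C ⊆ Finset.Icc k (n - 1 - k) := by
      intro x hx
      exact Finset.mem_Icc.2 (hmid x hx)
    constructor
    · exact Finset.inter_eq_left.2 hCsub
    · refine addE_self ?_ ?_
      · intro h
        exact hCne (np_disj hnp hC hB₀ h hkB)
      · intro h
        exact hCne' (np_disj hnp hC hB₀' h hnk')
  refine ⟨hk2, hk21, hπgood, ⟨hQgood, hQsym⟩, ?_⟩
  have hPhiJeq : PhiJ n k (exPi k P) (exQ n k P) =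
      (Pf ∪ mir n Pf) ∪ Qm.image (addE n k) := by
    unfold PhiJ
    rw [hexpi, hexq, hπround, hQround]
  rw [hPhiJeq]
  ext C
  simp only [Finset.mem_union, Finset.mem_image]
  constructor
  · intro hC
    rcases eq_or_ne C B₀ with hCeq | hCne
    · rw [hCeq] at hC ⊢
      refine Or.inr ⟨B₀ ∩ Finset.Icc k (n - 1 - k), (memQm _).2 ⟨?_, B₀, hC, rfl⟩, haddB₀⟩
      intro h
      rw [h] at hkInt
      exact absurd hkInt (Finset.notMem_empty k)
    rcases eq_or_ne C B₀' with hCeq | hCne'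
    · rw [hCeq] at hC ⊢
      refine Or.inr ⟨B₀' ∩ Finset.Icc k (n - 1 - k), (memQm _).2 ⟨?_, B₀', hC, rfl⟩, haddB₀'⟩
      intro h
      rw [h] at hnkInt'
      exact absurd hnkInt' (Finset.notMem_empty _)
    rcases hClass C hC hCne hCne' with hreg | hreg | hreg
    · refine Or.inl (Or.inl (Finset.mem_filter.2 ⟨hC, ?_⟩))
      intro x hx
      exact Finset.mem_Icc.2 (hreg x hx)
    · obtain ⟨he1, he2⟩ := haddMid C hC hCne hCne' hreg
      refine Or.inr ⟨C ∩ Finset.Icc k (n - 1 - k), (memQm _).2 ⟨?_, C, hC, rfl⟩, by rw [he1, he2]⟩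
      rw [he1]
      obtain ⟨x, hx⟩ := hne C hC
      intro h
      rw [h] at hx
      exact absurd hx (Finset.notMem_empty x)
    · refine Or.inl (Or.inr (mem_mir.2 ⟨mirB n C, ?_, ?_⟩))
      · refine Finset.mem_filter.2 ⟨by rw [← hsym']; exact mem_mir.2 ⟨C, hC, rfl⟩, ?_⟩
        intro x hx
        obtain ⟨y, hy, rfl⟩ := mem_mirB.1 hx
        have := hreg y hy
        exact Finset.mem_Icc.2 (by omega)
      · exact (mirB_mirB (fun i hi => hbd C hC i hi)).symm
  · rintro ((hC | hC) | ⟨D, hD, rfl⟩)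
    · exact hPfsub hC
    · obtain ⟨D, hD, rfl⟩ := mem_mir.1 hC
      rw [← hsym']
      exact mem_mir.2 ⟨D, hPfsub hD, rfl⟩
    · obtain ⟨hDne, C', hC', rfl⟩ := (memQm D).1 hD
      obtain ⟨y, hy⟩ := Finset.nonempty_iff_ne_empty.2 hDne
      have hy1 := (Finset.mem_inter.1 hy).1
      have hy2 := (Finset.mem_inter.1 hy).2
      simp only [Finset.mem_Icc] at hy2
      rcases eq_or_ne C' B₀ with hCeq | hCne
      · rw [hCeq, haddB₀]; exact hB₀
      rcases eq_or_ne C' B₀' with hCeq | hCne'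
      · rw [hCeq, haddB₀']; exact hB₀'
      rcases hClass C' hC' hCne hCne' with hreg | hreg | hreg
      · have := hreg y hy1; omega
      · obtain ⟨he1, he2⟩ := haddMid C' hC' hCne hCne' hreg
        rw [he1, he2]; exact hC'
      · have := hreg y hy1; omega

/-! ### Finiteness and counting helpers -/

lemma finite_sub {m : ℕ} {pred : Finset (Finset ℕ) → Prop}
    (h : ∀ Q, pred Q → ∀ B ∈ Q, ∀ i ∈ B, i < m) : Finite {Q // pred Q} := by
  apply Finite.of_injective
    (f := fun (Q : {Q // pred Q}) =>
      (⟨Q.1, by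
        simp only [Finset.mem_powerset]
        intro B hB
        simp only [Finset.mem_powerset]
        intro i hi
        simp only [Finset.mem_range]
        exact h Q.1 Q.2 B hB i hi⟩ :
        {S // S ∈ (Finset.range m).powerset.powerset}))
  intro a b hab
  have h2 := congrArg Subtype.val hab
  exact Subtype.ext h2

lemma finite_good (m : ℕ) : Finite {Q // Good m Q} :=
  finite_sub (fun _ hQ => hQ.1.2.1)

lemma finite_sgood (m : ℕ) : Finite {Q // SGood m Q} :=
  finite_sub (fun _ hQ => hQ.1.1.2.1)

lemma nat_card_sigma {ι : Type*} [Fintype ι] (f : ι → Type*) [∀ i, Finite (f i)] :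
    Nat.card (Σ i, f i) = ∑ i, Nat.card (f i) := by
  classical
  haveI : ∀ i, Fintype (f i) := fun i => Fintype.ofFinite _
  rw [Nat.card_eq_fintype_card, Fintype.card_sigma]
  exact Finset.sum_congr rfl (fun i _ => (Nat.card_eq_fintype_card).symm)

/-! ### distinctness of the classes -/

lemma PhiA_ne_PhiB {n : ℕ} {Q₁ Q₂ : Finset (Finset ℕ)} (hn : 3 ≤ n)
    (hQ₂ : Good (n - 2) Q₂) : PhiA n Q₁ ≠ PhiB n Q₂ := by
  intro h
  have h0 : ({0} : Finset ℕ) ∈ PhiB n Q₂ := by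
    rw [← h]; exact mem_PhiA.2 (Or.inl rfl)
  rcases mem_PhiB.1 h0 with he | hm
  · have : n - 1 ∈ ({0} : Finset ℕ) := by rw [he]; simp
    simp at this
    omega
  · obtain ⟨-, hbd, -⟩ := sh_props (c := 1) hQ₂
    have := hbd _ hm 0 (by simp)
    omega

lemma PhiA_ne_PhiJ {n k : ℕ} {Q₁ π Q₂ : Finset (Finset ℕ)} (hk : 2 ≤ k)
    (hkn : 2 * k + 1 ≤ n) (hπ : Good (k - 1) π) (hQ₂ : Good (n - 2 * k) Q₂) :
    PhiA n Q₁ ≠ PhiJ n k π Q₂ := by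
  intro h
  have h0 : ({0} : Finset ℕ) ∈ PhiJ n k π Q₂ := by
    rw [← h]; exact mem_PhiA.2 (Or.inl rfl)
  obtain ⟨C₀, hC₀, hCe, hkC⟩ := zero_block_PhiJ hk hkn hπ hQ₂ _ h0 (by simp)
  have : k ∈ ({0} : Finset ℕ) := by rw [hCe]; exact addE_sub hkC
  simp at this
  omega

lemma PhiB_ne_PhiJ {n k : ℕ} {Q₁ π Q₂ : Finset (Finset ℕ)} (hk : 2 ≤ k)
    (hkn : 2 * k + 1 ≤ n) (hπ : Good (k - 1) π) (hQ₂ : Good (n - 2 * k) Q₂) :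
    PhiB n Q₁ ≠ PhiJ n k π Q₂ := by
  intro h
  have h0 : ({0, n - 1} : Finset ℕ) ∈ PhiJ n k π Q₂ := by
    rw [← h]; exact mem_PhiB.2 (Or.inl rfl)
  obtain ⟨C₀, hC₀, hCe, hkC⟩ := zero_block_PhiJ hk hkn hπ hQ₂ _ h0 (by simp)
  have hkmem : k ∈ ({0, n - 1} : Finset ℕ) := by rw [hCe]; exact addE_sub hkC
  obtain ⟨-, -, hb3⟩ := J_bounds hk hkn hπ hQ₂
  have := hb3 C₀ hC₀ k hkC
  simp only [Finset.mem_insert, Finset.mem_singleton] at hkmem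
  omega

/-! ### the master classification -/

lemma classify {n : ℕ} {P : Finset (Finset ℕ)} (hn : 3 ≤ n) (hP : SGood n P) :
    (SGood (n - 2) (exS n P) ∧ P = PhiA n (exS n P)) ∨
    (SGood (n - 2) (exS n P) ∧ P = PhiB n (exS n P)) ∨
    (∃ k, 2 ≤ k ∧ 2 * k + 1 ≤ n ∧ Good (k - 1) (exPi k P) ∧
      SGood (n - 2 * k) (exQ n k P) ∧ P = PhiJ n k (exPi k P) (exQ n k P)) := by
  obtain ⟨B₀, ⟨hB₀, h00⟩, -⟩ := hP.1.1.2.2 0 (by omega)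
  by_cases h1 : B₀ = {0}
  · exact Or.inl (caseA hn hP (h1 ▸ hB₀))
  by_cases h2 : B₀ = {0, n - 1}
  · exact Or.inr (Or.inl (caseB hn hP (h2 ▸ hB₀)))
  · refine Or.inr (Or.inr ?_)
    have hne0 : (B₀.erase 0).Nonempty := by
      rw [Finset.nonempty_iff_ne_empty]
      intro h
      rcases (Finset.erase_eq_empty_iff _ _).1 h with h' | h'
      · rw [h'] at h00; exact absurd h00 (Finset.notMem_empty 0)
      · exact h1 h'
    set k := (B₀.erase 0).min' hne0 with hkdef
    have hkmem := (B₀.erase 0).min'_mem hne0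
    rw [Finset.mem_erase] at hkmem
    have hkmin : ∀ x ∈ B₀, x ≠ 0 → k ≤ x := by
      intro x hx hx0
      exact Finset.min'_le _ x (Finset.mem_erase.2 ⟨hx0, hx⟩)
    obtain ⟨hh1, hh2, hh3, hh4, hh5⟩ :=
      caseJ' hn hP hB₀ h00 h1 h2 hkmem.2 hkmem.1 hkmin
    exact ⟨k, hh1, hh2, hh3, hh4, hh5⟩

def TJ (n : ℕ) : Type :=
  Σ j : {x : ℕ // x ∈ Finset.Icc 3 ((n + 1) / 2)},
    {Q : Finset (Finset ℕ) // Good ((j : ℕ) - 2) Q} ×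
      {Q : Finset (Finset ℕ) // SGood (n + 2 - 2 * (j : ℕ)) Q}

def TT (n : ℕ) : Type :=
  {Q : Finset (Finset ℕ) // SGood (n - 2) Q} ⊕
    ({Q : Finset (Finset ℕ) // SGood (n - 2) Q} ⊕ TJ n)

def fenc (n : ℕ) (hn : 3 ≤ n) : TT n → {P : Finset (Finset ℕ) // SGood n P}
  | Sum.inl Q => ⟨PhiA n Q.1, sgood_PhiA hn Q.2⟩
  | Sum.inr (Sum.inl Q) => ⟨PhiB n Q.1, sgood_PhiB hn Q.2⟩
  | Sum.inr (Sum.inr ⟨j, π, Q⟩) => ⟨PhiJ n ((j : ℕ) - 1) π.1 Q.1, by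
      have hj := j.2
      rw [Finset.mem_Icc] at hj
      refine sgood_PhiJ (by omega) (by omega) ?_ ?_
      · have e : (j : ℕ) - 1 - 1 = (j : ℕ) - 2 := by omega
        rw [e]; exact π.2
      · have e : n - 2 * ((j : ℕ) - 1) = n + 2 - 2 * (j : ℕ) := by omega
        rw [e]; exact Q.2⟩

lemma j_facts {n : ℕ} (j : {x : ℕ // x ∈ Finset.Icc 3 ((n + 1) / 2)})
    (π : {Q : Finset (Finset ℕ) // Good ((j : ℕ) - 2) Q})
    (Q : {Q : Finset (Finset ℕ) // SGood (n + 2 - 2 * (j : ℕ)) Q}) :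
    2 ≤ (j : ℕ) - 1 ∧ 2 * ((j : ℕ) - 1) + 1 ≤ n ∧
      Good ((j : ℕ) - 1 - 1) π.1 ∧ Good (n - 2 * ((j : ℕ) - 1)) Q.1 ∧
      SGood (n - 2 * ((j : ℕ) - 1)) Q.1 := by
  have hj := j.2
  rw [Finset.mem_Icc] at hj
  have e1 : (j : ℕ) - 1 - 1 = (j : ℕ) - 2 := by omega
  have e2 : n - 2 * ((j : ℕ) - 1) = n + 2 - 2 * (j : ℕ) := by omega
  refine ⟨by omega, by omega, ?_, ?_, ?_⟩
  · rw [e1]; exact π.2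
  · rw [e2]; exact Q.2.1
  · rw [e2]; exact Q.2

lemma fenc_inj (n : ℕ) (hn : 3 ≤ n) : Function.Injective (fenc n hn) := by
  rintro (Q | Q | ⟨j, π, Q⟩) (Q' | Q' | ⟨j', π', Q'⟩) h
  · have hv := congrArg Subtype.val h
    have hv2 : PhiA n Q.1 = PhiA n Q'.1 := hv
    have e : Q.1 = Q'.1 := by
      rw [← exS_PhiA Q.2.1 hn, ← exS_PhiA Q'.2.1 hn, hv2]
    exact congrArg Sum.inl (Subtype.ext e)
  · have hv := congrArg Subtype.val h
    have hv2 : PhiA n Q.1 = PhiB n Q'.1 := hv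
    exact absurd hv2 (PhiA_ne_PhiB hn Q'.2.1)
  · have hv := congrArg Subtype.val h
    have hv2 : PhiA n Q.1 = PhiJ n ((j' : ℕ) - 1) π'.1 Q'.1 := hv
    obtain ⟨f1, f2, f3, f4, -⟩ := j_facts j' π' Q'
    exact absurd hv2 (PhiA_ne_PhiJ f1 f2 f3 f4)
  · have hv := congrArg Subtype.val h
    have hv2 : PhiB n Q.1 = PhiA n Q'.1 := hv
    exact absurd hv2.symm (PhiA_ne_PhiB hn Q.2.1)
  · have hv := congrArg Subtype.val h
    have hv2 : PhiB n Q.1 = PhiB n Q'.1 := hv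
    have e : Q.1 = Q'.1 := by
      rw [← exS_PhiB Q.2.1 hn, ← exS_PhiB Q'.2.1 hn, hv2]
    exact congrArg (fun x => Sum.inr (Sum.inl x)) (Subtype.ext e)
  · have hv := congrArg Subtype.val h
    have hv2 : PhiB n Q.1 = PhiJ n ((j' : ℕ) - 1) π'.1 Q'.1 := hv
    obtain ⟨f1, f2, f3, f4, -⟩ := j_facts j' π' Q'
    exact absurd hv2 (PhiB_ne_PhiJ f1 f2 f3 f4)
  · have hv := congrArg Subtype.val h
    have hv2 : PhiJ n ((j : ℕ) - 1) π.1 Q.1 = PhiA n Q'.1 := hv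
    obtain ⟨f1, f2, f3, f4, -⟩ := j_facts j π Q
    exact absurd hv2.symm (PhiA_ne_PhiJ f1 f2 f3 f4)
  · have hv := congrArg Subtype.val h
    have hv2 : PhiJ n ((j : ℕ) - 1) π.1 Q.1 = PhiB n Q'.1 := hv
    obtain ⟨f1, f2, f3, f4, -⟩ := j_facts j π Q
    exact absurd hv2.symm (PhiB_ne_PhiJ f1 f2 f3 f4)
  · have hv := congrArg Subtype.val h
    have hv2 : PhiJ n ((j : ℕ) - 1) π.1 Q.1 = PhiJ n ((j' : ℕ) - 1) π'.1 Q'.1 := hv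
    obtain ⟨f1, f2, f3, f4, -⟩ := j_facts j π Q
    obtain ⟨g1, g2, g3, g4, -⟩ := j_facts j' π' Q'
    have hkk : (j : ℕ) - 1 = (j' : ℕ) - 1 := PhiJ_k_eq f1 f2 f3 f4 g1 g2 g3 g4 hv2
    have hj := j.2
    have hj' := j'.2
    rw [Finset.mem_Icc] at hj hj'
    have hjj : j = j' := Subtype.ext (by omega)
    subst hjj
    have hπe : π = π' := Subtype.ext (by
      rw [← exPi_PhiJ f1 f2 f3 f4, ← exPi_PhiJ g1 g2 g3 g4, hv2])
    have hQe : Q = Q' := Subtype.ext (by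
      rw [← exQ_PhiJ f1 f2 f3 f4, ← exQ_PhiJ g1 g2 g3 g4, hv2])
    rw [hπe, hQe]

lemma fenc_surj (n : ℕ) (hn : 3 ≤ n) : Function.Surjective (fenc n hn) := by
  rintro ⟨P, hP⟩
  rcases classify hn hP with ⟨hQ, hPe⟩ | ⟨hQ, hPe⟩ | ⟨k, hk2, hk21, hπ, hQ, hPe⟩
  · exact ⟨Sum.inl ⟨exS n P, hQ⟩, Subtype.ext hPe.symm⟩
  · exact ⟨Sum.inr (Sum.inl ⟨exS n P, hQ⟩), Subtype.ext hPe.symm⟩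
  · have hmem : k + 1 ∈ Finset.Icc 3 ((n + 1) / 2) := by
      rw [Finset.mem_Icc]; omega
    refine ⟨Sum.inr (Sum.inr ⟨⟨k + 1, hmem⟩, ⟨exPi k P, ?_⟩, ⟨exQ n k P, ?_⟩⟩), ?_⟩
    · have e : k + 1 - 2 = k - 1 := by omega
      rw [show ((⟨k + 1, hmem⟩ : {x : ℕ // x ∈ Finset.Icc 3 ((n + 1) / 2)}) : ℕ) = k + 1
        from rfl, e]
      exact hπ
    · have e : n + 2 - 2 * (k + 1) = n - 2 * k := by omega
      rw [show ((⟨k + 1, hmem⟩ : {x : ℕ // x ∈ Finset.Icc 3 ((n + 1) / 2)}) : ℕ) = k + 1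
        from rfl, e]
      exact hQ
    · exact Subtype.ext hPe.symm

lemma main_card {n : ℕ} (hn : 3 ≤ n) :
    Nat.card {P : Finset (Finset ℕ) // SGood n P} =
      2 * Nat.card {Q : Finset (Finset ℕ) // SGood (n - 2) Q} +
      ∑ j ∈ Finset.Icc 3 ((n + 1) / 2),
        Nat.card {Q : Finset (Finset ℕ) // Good (j - 2) Q} *
          Nat.card {Q : Finset (Finset ℕ) // SGood (n + 2 - 2 * j) Q} := by
  classical
  haveI h1 : ∀ m, Finite {Q : Finset (Finset ℕ) // Good m Q} := finite_good
  haveI h2 : ∀ m, Finite {Q : Finset (Finset ℕ) // SGood m Q} := finite_sgood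
  haveI h3 : ∀ (j : {x : ℕ // x ∈ Finset.Icc 3 ((n + 1) / 2)}),
      Finite ({Q : Finset (Finset ℕ) // Good ((j : ℕ) - 2) Q} ×
        {Q : Finset (Finset ℕ) // SGood (n + 2 - 2 * (j : ℕ)) Q}) := fun j => by
    haveI := h1 ((j : ℕ) - 2)
    haveI := h2 (n + 2 - 2 * (j : ℕ))
    infer_instance
  haveI h4 : Finite (TJ n) := by
    unfold TJ
    infer_instance
  have hbij : Function.Bijective (fenc n hn) := ⟨fenc_inj n hn, fenc_surj n hn⟩
  have hcongr := Nat.card_congr (Equiv.ofBijective _ hbij)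
  rw [← hcongr]
  show Nat.card (TT n) = _
  unfold TT
  rw [Nat.card_sum, Nat.card_sum]
  have hTJ : Nat.card (TJ n) = ∑ j ∈ Finset.Icc 3 ((n + 1) / 2),
      Nat.card {Q : Finset (Finset ℕ) // Good (j - 2) Q} *
        Nat.card {Q : Finset (Finset ℕ) // SGood (n + 2 - 2 * j) Q} := by
    unfold TJ
    rw [nat_card_sigma]
    rw [← Finset.sum_coe_sort (Finset.Icc 3 ((n + 1) / 2))
      (fun j => Nat.card {Q : Finset (Finset ℕ) // Good (j - 2) Q} *
        Nat.card {Q : Finset (Finset ℕ) // SGood (n + 2 - 2 * j) Q})]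
    exact Finset.sum_congr rfl (fun j _ => Nat.card_prod _ _)
  rw [hTJ]
  ring


/-! ### transfer between the `Fin` world and the `ℕ` world -/

def F (n : ℕ) (P : Finset (Finset (Fin n))) : Finset (Finset ℕ) :=
  P.image (fun B => B.image Fin.val)

lemma F_inj (n : ℕ) : Function.Injective (F n) := by
  apply Finset.image_injective
  exact Finset.image_injective Fin.val_injective

lemma mem_image_val {n : ℕ} {B : Finset (Fin n)} {i : ℕ} :
    i ∈ B.image Fin.val ↔ ∃ h : i < n, (⟨i, h⟩ : Fin n) ∈ B := by
  simp only [Finset.mem_image]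
  constructor
  · rintro ⟨a, ha, rfl⟩; exact ⟨a.isLt, by simpa using ha⟩
  · rintro ⟨h, hm⟩; exact ⟨⟨i, h⟩, hm, rfl⟩
lemma part_iff {n : ℕ} {P : Finset (Finset (Fin n))} :
    IsPartition n P ↔ NPartN n (F n P) := by
  constructor
  · rintro ⟨h1, h2⟩
    refine ⟨?_, ?_, ?_⟩
    · rintro B hB
      simp only [F, Finset.mem_image] at hB
      obtain ⟨B₀, hB₀, rfl⟩ := hB
      exact (h1 B₀ hB₀).image _
    · rintro B hB i hi
      simp only [F, Finset.mem_image] at hB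
      obtain ⟨B₀, hB₀, rfl⟩ := hB
      rw [mem_image_val] at hi
      exact hi.1
    · intro i hi
      obtain ⟨B, ⟨hB, hiB⟩, hu⟩ := h2 ⟨i, hi⟩
      refine ⟨B.image Fin.val, ⟨?_, ?_⟩, ?_⟩
      · exact Finset.mem_image_of_mem _ hB
      · rw [mem_image_val]; exact ⟨hi, hiB⟩
      · rintro C ⟨hC, hiC⟩
        simp only [F, Finset.mem_image] at hC
        obtain ⟨C₀, hC₀, rfl⟩ := hC
        rw [mem_image_val] at hiC
        obtain ⟨_, hm⟩ := hiC
        rw [hu C₀ ⟨hC₀, hm⟩]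
  · rintro ⟨h1, h2, h3⟩
    constructor
    · intro B hB
      have := h1 (B.image Fin.val) (Finset.mem_image_of_mem _ hB)
      obtain ⟨x, hx⟩ := this
      rw [mem_image_val] at hx
      exact ⟨_, hx.2⟩
    · intro i
      obtain ⟨B, ⟨hB, hiB⟩, hu⟩ := h3 i.val i.isLt
      simp only [F, Finset.mem_image] at hB
      obtain ⟨B₀, hB₀, rfl⟩ := hB
      rw [mem_image_val] at hiB
      obtain ⟨_, hm⟩ := hiB
      refine ⟨B₀, ⟨hB₀, by simpa using hm⟩, ?_⟩
      rintro C ⟨hC, hiC⟩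
      have : C.image Fin.val = B₀.image Fin.val := by
        apply hu
        refine ⟨Finset.mem_image_of_mem _ hC, ?_⟩
        rw [mem_image_val]; exact ⟨i.isLt, by simpa using hiC⟩
      exact Finset.image_injective Fin.val_injective this
lemma nc_iff {n : ℕ} {P : Finset (Finset (Fin n))} :
    NCPart n P ↔ NCN (F n P) := by
  constructor
  · intro h B hB C hC hne a ha c hc b hb d hd
    simp only [F, Finset.mem_image] at hB hC
    obtain ⟨B₀, hB₀, rfl⟩ := hB
    obtain ⟨C₀, hC₀, rfl⟩ := hC
    simp only [Finset.mem_image] at ha hb hc hd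
    obtain ⟨a₀, ha₀, rfl⟩ := ha
    obtain ⟨b₀, hb₀, rfl⟩ := hb
    obtain ⟨c₀, hc₀, rfl⟩ := hc
    obtain ⟨d₀, hd₀, rfl⟩ := hd
    have hne₀ : B₀ ≠ C₀ := fun h' => hne (by rw [h'])
    have := h B₀ hB₀ C₀ hC₀ hne₀ a₀ ha₀ c₀ hc₀ b₀ hb₀ d₀ hd₀
    exact this
  · intro h B hB C hC hne a ha c hc b hb d hd
    have hne' : B.image Fin.val ≠ C.image Fin.val := by
      intro h'
      exact hne (Finset.image_injective Fin.val_injective h')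
    have := h _ (Finset.mem_image_of_mem _ hB) _ (Finset.mem_image_of_mem _ hC) hne'
      a.val (Finset.mem_image_of_mem _ ha) c.val (Finset.mem_image_of_mem _ hc)
      b.val (Finset.mem_image_of_mem _ hb) d.val (Finset.mem_image_of_mem _ hd)
    exact this

lemma poor_iff {n : ℕ} {P : Finset (Finset (Fin n))} :
    NoConsec n P ↔ PoorN (F n P) := by
  constructor
  · intro h B hB i hi j hj
    simp only [F, Finset.mem_image] at hB
    obtain ⟨B₀, hB₀, rfl⟩ := hB
    simp only [Finset.mem_image] at hi hj
    obtain ⟨i₀, hi₀, rfl⟩ := hi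
    obtain ⟨j₀, hj₀, rfl⟩ := hj
    exact h B₀ hB₀ i₀ hi₀ j₀ hj₀
  · intro h B hB i hi j hj
    exact h _ (Finset.mem_image_of_mem _ hB) _ (Finset.mem_image_of_mem _ hi) _
      (Finset.mem_image_of_mem _ hj)

lemma F_compl {n : ℕ} (P : Finset (Finset (Fin n))) :
    F n (P.image (fun B => B.image Fin.rev)) =
      (F n P).image (fun B => B.image (fun i => n - 1 - i)) := by
  simp only [F, Finset.image_image]
  apply Finset.image_congr
  intro B _
  simp only [Function.comp]
  rw [Finset.image_image, Finset.image_image]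
  apply Finset.image_congr
  intro i _
  simp only [Function.comp]
  rw [Fin.val_rev]
  omega

lemma sym_iff {n : ℕ} {P : Finset (Finset (Fin n))} :
    SelfCompl n P ↔ SymN n (F n P) := by
  constructor
  · intro h
    rw [SymN, ← F_compl, h]
  · intro h
    apply F_inj n
    rw [F_compl, h]

noncomputable def ofN (n : ℕ) (Q : Finset (Finset ℕ)) : Finset (Finset (Fin n)) :=
  Q.image (fun B => B.preimage (Fin.val (n := n)) Fin.val_injective.injOn)

lemma F_ofN {n : ℕ} {Q : Finset (Finset ℕ)} (h : ∀ B ∈ Q, ∀ i ∈ B, i < n) :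
    F n (ofN n Q) = Q := by
  unfold F ofN
  rw [Finset.image_image]
  have key : ∀ B ∈ Q,
      ((B.preimage (Fin.val (n := n)) Fin.val_injective.injOn).image Fin.val) = B := by
    intro B hB
    ext i
    rw [mem_image_val]
    constructor
    · rintro ⟨h', hm⟩; simpa using hm
    · intro hi
      exact ⟨h B hB i hi, by simpa using hi⟩
  calc Q.image _ = Q.image id := Finset.image_congr (by intro B hB; simpa using key B hB)
  _ = Q := Finset.image_id

/-! ### transfer to `M` and `L` -/

lemma M_card (m : ℕ) : M m = Nat.card {Q : Finset (Finset ℕ) // Good m Q} := by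
  unfold M
  apply Nat.card_congr
  refine Equiv.ofBijective
    (fun P => ⟨F m P.1, part_iff.1 P.2.1, nc_iff.1 P.2.2.1, poor_iff.1 P.2.2.2⟩) ⟨?_, ?_⟩
  · intro a b hab
    have hv := congrArg Subtype.val hab
    exact Subtype.ext (F_inj m hv)
  · rintro ⟨Q, hQ⟩
    have hbd : ∀ B ∈ Q, ∀ i ∈ B, i < m := hQ.1.2.1
    have hF : F m (ofN m Q) = Q := F_ofN hbd
    refine ⟨⟨ofN m Q, ?_, ?_, ?_⟩, Subtype.ext hF⟩
    · rw [part_iff, hF]; exact hQ.1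
    · rw [nc_iff, hF]; exact hQ.2.1
    · rw [poor_iff, hF]; exact hQ.2.2

lemma L_card (m : ℕ) : L m = Nat.card {Q : Finset (Finset ℕ) // SGood m Q} := by
  unfold L
  apply Nat.card_congr
  refine Equiv.ofBijective
    (fun P => ⟨F m P.1, ⟨part_iff.1 P.2.1, nc_iff.1 P.2.2.1, poor_iff.1 P.2.2.2.1⟩,
      sym_iff.1 P.2.2.2.2⟩) ⟨?_, ?_⟩
  · intro a b hab
    have hv := congrArg Subtype.val hab
    exact Subtype.ext (F_inj m hv)
  · rintro ⟨Q, hQ⟩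
    have hbd : ∀ B ∈ Q, ∀ i ∈ B, i < m := hQ.1.1.2.1
    have hF : F m (ofN m Q) = Q := F_ofN hbd
    refine ⟨⟨ofN m Q, ?_, ?_, ?_, ?_⟩, Subtype.ext hF⟩
    · rw [part_iff, hF]; exact hQ.1.1
    · rw [nc_iff, hF]; exact hQ.1.2.1
    · rw [poor_iff, hF]; exact hQ.1.2.2
    · rw [sym_iff, hF]; exact hQ.2

/-! ### base cases -/

lemma sgood0 : SGood 0 (∅ : Finset (Finset ℕ)) := by
  refine ⟨⟨⟨?_, ?_, ?_⟩, ?_, ?_⟩, ?_⟩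
  · intro B hB; exact absurd hB (Finset.notMem_empty B)
  · intro B hB; exact absurd hB (Finset.notMem_empty B)
  · intro i hi; omega
  · intro B hB; exact absurd hB (Finset.notMem_empty B)
  · intro B hB; exact absurd hB (Finset.notMem_empty B)
  · show mir 0 ∅ = ∅
    simp [mir]

lemma sg0_uniq : ∀ Q : Finset (Finset ℕ), SGood 0 Q → Q = ∅ := by
  intro Q h
  rw [Finset.eq_empty_iff_forall_notMem]
  intro B hB
  obtain ⟨x, hx⟩ := h.1.1.1 B hB
  have := h.1.1.2.1 B hB x hx
  omega

lemma card_sg0 : Nat.card {Q : Finset (Finset ℕ) // SGood 0 Q} = 1 := by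
  haveI : Unique {Q : Finset (Finset ℕ) // SGood 0 Q} :=
    { default := ⟨∅, sgood0⟩, uniq := fun Q => Subtype.ext (sg0_uniq Q.1 Q.2) }
  exact Nat.card_unique

lemma sgood1 : SGood 1 ({{0}} : Finset (Finset ℕ)) := by
  refine ⟨⟨⟨?_, ?_, ?_⟩, ?_, ?_⟩, ?_⟩
  · intro B hB
    rw [Finset.mem_singleton] at hB
    exact ⟨0, by rw [hB]; simp⟩
  · intro B hB i hi
    rw [Finset.mem_singleton] at hB
    rw [hB, Finset.mem_singleton] at hi
    omega
  · intro i hi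
    have hi0 : i = 0 := by omega
    subst hi0
    refine ⟨{0}, ⟨Finset.mem_singleton_self _, Finset.mem_singleton_self _⟩, ?_⟩
    rintro C ⟨hC, -⟩
    exact Finset.mem_singleton.1 hC
  · intro B hB C hC hne
    rw [Finset.mem_singleton] at hB hC
    exact absurd (hB.trans hC.symm) hne
  · intro B hB i hi j hj
    rw [Finset.mem_singleton] at hB
    rw [hB, Finset.mem_singleton] at hi hj
    omega
  · show SymN 1 {{0}}
    unfold SymN
    simp

lemma sg1_uniq : ∀ Q : Finset (Finset ℕ), SGood 1 Q → Q = {{0}} := by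
  intro Q h
  obtain ⟨B, ⟨hB, h0⟩, -⟩ := h.1.1.2.2 0 (by omega)
  have hBe : B = {0} := by
    apply Finset.eq_singleton_iff_unique_mem.2
    refine ⟨h0, fun x hx => by have := h.1.1.2.1 B hB x hx; omega⟩
  ext C
  rw [Finset.mem_singleton]
  constructor
  · intro hC
    obtain ⟨x, hx⟩ := h.1.1.1 C hC
    have hx0 : x = 0 := by have := h.1.1.2.1 C hC x hx; omega
    rw [← hBe]
    exact np_disj h.1.1 hC hB (hx0 ▸ hx) h0
  · rintro rfl
    exact hBe ▸ hB

lemma card_sg1 : Nat.card {Q : Finset (Finset ℕ) // SGood 1 Q} = 1 := by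
  haveI : Unique {Q : Finset (Finset ℕ) // SGood 1 Q} :=
    { default := ⟨{{0}}, sgood1⟩, uniq := fun Q => Subtype.ext (sg1_uniq Q.1 Q.2) }
  exact Nat.card_unique

lemma sgood2 : SGood 2 ({{0}, {1}} : Finset (Finset ℕ)) := by
  have hmem : ∀ B : Finset ℕ, B ∈ ({{0}, {1}} : Finset (Finset ℕ)) ↔ B = {0} ∨ B = {1} := by
    intro B; simp
  refine ⟨⟨⟨?_, ?_, ?_⟩, ?_, ?_⟩, ?_⟩
  · intro B hB
    rcases (hmem B).1 hB with rfl | rfl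
    · exact ⟨0, by simp⟩
    · exact ⟨1, by simp⟩
  · intro B hB i hi
    rcases (hmem B).1 hB with rfl | rfl <;> (rw [Finset.mem_singleton] at hi; omega)
  · intro i hi
    rcases (by omega : i = 0 ∨ i = 1) with rfl | rfl
    · refine ⟨{0}, ⟨(hmem _).2 (Or.inl rfl), Finset.mem_singleton_self _⟩, ?_⟩
      rintro C ⟨hC, hC0⟩
      rcases (hmem C).1 hC with rfl | rfl
      · rfl
      · rw [Finset.mem_singleton] at hC0; omega
    · refine ⟨{1}, ⟨(hmem _).2 (Or.inr rfl), Finset.mem_singleton_self _⟩, ?_⟩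
      rintro C ⟨hC, hC0⟩
      rcases (hmem C).1 hC with rfl | rfl
      · rw [Finset.mem_singleton] at hC0; omega
      · rfl
  · intro B hB C hC hne a ha c hc b hb d hd
    rcases (hmem B).1 hB with rfl | rfl <;>
      (rw [Finset.mem_singleton] at ha hc; omega)
  · intro B hB i hi j hj
    rcases (hmem B).1 hB with rfl | rfl <;>
      (rw [Finset.mem_singleton] at hi hj; omega)
  · show SymN 2 {{0}, {1}}
    unfold SymN
    rw [Finset.image_insert, Finset.image_singleton, Finset.image_singleton,
      Finset.image_singleton]
    norm_num
    exact Finset.pair_comm _ _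

lemma sg2_uniq : ∀ Q : Finset (Finset ℕ), SGood 2 Q → Q = {{0}, {1}} := by
  intro Q h
  have hnp := h.1.1
  obtain ⟨B0, ⟨hB0, h00⟩, -⟩ := hnp.2.2 0 (by omega)
  obtain ⟨B1, ⟨hB1, h11⟩, -⟩ := hnp.2.2 1 (by omega)
  have hB0e : B0 = {0} := by
    apply Finset.eq_singleton_iff_unique_mem.2
    refine ⟨h00, fun x hx => ?_⟩
    have hb := hnp.2.1 B0 hB0 x hx
    rcases (by omega : x = 0 ∨ x = 1) with rfl | rfl
    · rfl
    · exact absurd rfl (h.1.2.2 B0 hB0 0 h00 1 hx)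
  have hB1e : B1 = {1} := by
    apply Finset.eq_singleton_iff_unique_mem.2
    refine ⟨h11, fun x hx => ?_⟩
    have hb := hnp.2.1 B1 hB1 x hx
    rcases (by omega : x = 0 ∨ x = 1) with rfl | rfl
    · exfalso
      have : B1 = B0 := np_disj hnp hB1 hB0 hx h00
      rw [this, hB0e] at h11
      rw [Finset.mem_singleton] at h11
      omega
    · rfl
  ext C
  simp only [Finset.mem_insert, Finset.mem_singleton]
  constructor
  · intro hC
    obtain ⟨x, hx⟩ := hnp.1 C hC
    have hb := hnp.2.1 C hC x hx
    rcases (by omega : x = 0 ∨ x = 1) with rfl | rfl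
    · left; rw [← hB0e]; exact np_disj hnp hC hB0 hx h00
    · right; rw [← hB1e]; exact np_disj hnp hC hB1 hx h11
  · rintro (rfl | rfl)
    · exact hB0e ▸ hB0
    · exact hB1e ▸ hB1

lemma card_sg2 : Nat.card {Q : Finset (Finset ℕ) // SGood 2 Q} = 1 := by
  haveI : Unique {Q : Finset (Finset ℕ) // SGood 2 Q} :=
    { default := ⟨{{0}, {1}}, sgood2⟩, uniq := fun Q => Subtype.ext (sg2_uniq Q.1 Q.2) }
  exact Nat.card_unique

lemma L_rec {n : ℕ} (hn : 3 ≤ n) :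
    L n = 2 * L (n - 2) +
      ∑ j ∈ Finset.Icc 3 ((n + 1) / 2), M (j - 2) * L (n + 2 - 2 * j) := by
  rw [L_card n, main_card hn, ← L_card (n - 2)]
  congr 1
  apply Finset.sum_congr rfl
  intro j _
  rw [← M_card (j - 2), ← L_card (n + 2 - 2 * j)]

end S13aux

theorem statement13 :
    L 0 = 1 ∧ L 1 = 1 ∧ L 2 = 1 ∧ L 3 = 2 ∧ L 4 = 2 ∧
    ∀ n, 4 < n →
      L n = 2 * L (n - 2) +
        ∑ j ∈ Finset.Icc 3 ((n + 1) / 2), M (j - 2) * L (n + 2 - 2 * j) := by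
  have h0 : L 0 = 1 := by rw [S13aux.L_card, S13aux.card_sg0]
  have h1 : L 1 = 1 := by rw [S13aux.L_card, S13aux.card_sg1]
  have h2 : L 2 = 1 := by rw [S13aux.L_card, S13aux.card_sg2]
  have h3 : L 3 = 2 := by
    rw [S13aux.L_rec (by omega : 3 ≤ 3)]
    have he : Finset.Icc 3 ((3 + 1) / 2) = ∅ := Finset.Icc_eq_empty (by omega)
    rw [he, Finset.sum_empty]
    norm_num [h1]
  have h4 : L 4 = 2 := by
    rw [S13aux.L_rec (by omega : 3 ≤ 4)]
    have he : Finset.Icc 3 ((4 + 1) / 2) = ∅ := Finset.Icc_eq_empty (by omega)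
    rw [he, Finset.sum_empty]
    norm_num [h2]
  exact ⟨h0, h1, h2, h3, h4, fun n hn => S13aux.L_rec (by omega)⟩
end

section
/- With L n the number of self-complementary noncrossing partitions of {1,…,n} into blocks with no consecutive integers, L (2n) = L (2n-1) for all n ≥ 1 (explicitly, there is a bijection obtained by merging the two central points). -/
/-!
Encode a partition by its equivalence relation. In an admissible partition of `k + 1` points
(`k` odd, `p` the middle point of `Fin k`), the two central points `p.castSucc` and `p.succ` lie
in distinct classes (no consecutive integers) that are mirror images of each other; a class
reaching past the centre would cross its mirror image, so one class lies in the left half and the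
other in the right half. Merging the two classes and collapsing the central points with
`p.predAbove` gives an admissible partition of `k` points; conversely, doubling the middle point
and cutting its class into a left and a right half recovers the original partition.
-/

open Finset

namespace Setoid

variable {m : ℕ}

def Noncrossing (r : Setoid (Fin m)) : Prop :=
  ∀ ⦃a b c d : Fin m⦄, a < b → b < c → c < d → r a c → r b d → r a b

def NoConsec (r : Setoid (Fin m)) : Prop :=
  ∀ ⦃i j : Fin m⦄, (i : ℕ) + 1 = j → ¬r i j

def RevInvariant (r : Setoid (Fin m)) : Prop :=
  ∀ ⦃i j : Fin m⦄, r i j → r i.rev j.rev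

structure Admissible (r : Setoid (Fin m)) : Prop where
  noncrossing : r.Noncrossing
  noConsec : r.NoConsec
  revInvariant : r.RevInvariant

theorem Noncrossing.comap {k : ℕ} {r : Setoid (Fin m)} (hr : r.Noncrossing) {f : Fin k → Fin m}
    (hf : Monotone f) : (r.comap f).Noncrossing := by
  intro a b c d hab hbc hcd hac hbd
  rw [comap_rel] at hac hbd ⊢
  rcases (hf hab.le).eq_or_lt with h₁ | h₁
  · exact h₁ ▸ r.refl _
  rcases (hf hbc.le).eq_or_lt with h₂ | h₂
  · rwa [h₂]
  rcases (hf hcd.le).eq_or_lt with h₃ | h₃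
  · exact r.trans hac (r.symm (h₃ ▸ hbd))
  exact hr h₁ h₂ h₃ hac hbd

open Classical in
noncomputable def blockOf (r : Setoid (Fin m)) (i : Fin m) : Finset (Fin m) :=
  {j | r i j}

noncomputable def blocks (r : Setoid (Fin m)) : Finset (Finset (Fin m)) :=
  univ.image r.blockOf

variable {r : Setoid (Fin m)}

@[simp]
theorem mem_blockOf {i j : Fin m} : j ∈ r.blockOf i ↔ r i j := by
  simp [blockOf]

theorem blockOf_eq_of_rel {i j : Fin m} (h : r i j) : r.blockOf i = r.blockOf j := by
  ext x
  simp only [mem_blockOf]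
  exact ⟨r.trans (r.symm h), r.trans h⟩

theorem mem_blocks {B : Finset (Fin m)} : B ∈ r.blocks ↔ ∃ i, r.blockOf i = B := by
  simp [blocks]

theorem blockOf_mem_blocks (i : Fin m) : r.blockOf i ∈ r.blocks :=
  mem_blocks.2 ⟨i, rfl⟩

theorem rel_iff_exists_mem_blocks {i j : Fin m} : r i j ↔ ∃ B ∈ r.blocks, i ∈ B ∧ j ∈ B := by
  constructor
  · intro h
    exact ⟨r.blockOf i, blockOf_mem_blocks i, mem_blockOf.2 (r.refl i), mem_blockOf.2 h⟩
  · rintro ⟨B, hB, hi, hj⟩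
    obtain ⟨x, rfl⟩ := mem_blocks.1 hB
    exact r.trans (r.symm (mem_blockOf.1 hi)) (mem_blockOf.1 hj)

theorem blocks_injective : Function.Injective (blocks : Setoid (Fin m) → _) := by
  intro r s h
  ext i j
  rw [rel_iff_exists_mem_blocks, h, ← rel_iff_exists_mem_blocks]

theorem isPartition_blocks (r : Setoid (Fin m)) : _root_.IsPartition m r.blocks := by
  refine ⟨fun B hB => ?_, fun i => ⟨r.blockOf i, ⟨blockOf_mem_blocks i, ?_⟩, ?_⟩⟩
  · obtain ⟨i, rfl⟩ := mem_blocks.1 hB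
    exact ⟨i, mem_blockOf.2 (r.refl i)⟩
  · exact mem_blockOf.2 (r.refl i)
  · rintro B ⟨hB, hiB⟩
    obtain ⟨x, rfl⟩ := mem_blocks.1 hB
    exact blockOf_eq_of_rel (mem_blockOf.1 hiB)

theorem image_rev_blocks (r : Setoid (Fin m)) :
    r.blocks.image (fun B => B.image Fin.rev) = (r.comap Fin.rev).blocks := by
  have key (i : Fin m) : (r.blockOf i).image Fin.rev = (r.comap Fin.rev).blockOf i.rev := by
    ext j
    simp only [mem_image, mem_blockOf, comap_rel, Fin.rev_rev]
    exact ⟨fun ⟨x, hx, hxj⟩ => hxj ▸ by rwa [Fin.rev_rev], fun h => ⟨j.rev, h, Fin.rev_rev j⟩⟩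
  ext B
  simp only [mem_image, mem_blocks]
  constructor
  · rintro ⟨_, ⟨i, rfl⟩, rfl⟩
    exact ⟨i.rev, (key i).symm⟩
  · rintro ⟨i, rfl⟩
    exact ⟨_, ⟨i.rev, rfl⟩, by rw [key, Fin.rev_rev]⟩

theorem noConsec_blocks_iff : _root_.NoConsec m r.blocks ↔ r.NoConsec := by
  constructor
  · intro h i j hij hr
    obtain ⟨B, hB, hi, hj⟩ := rel_iff_exists_mem_blocks.1 hr
    exact h B hB i hi j hj hij
  · intro h B hB i hi j hj hij
    exact h hij (rel_iff_exists_mem_blocks.2 ⟨B, hB, hi, hj⟩)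

theorem ncPart_blocks_iff : NCPart m r.blocks ↔ r.Noncrossing := by
  constructor
  · intro h a b c d hab hbc hcd hac hbd
    by_contra hab'
    have hne : r.blockOf a ≠ r.blockOf b := fun he =>
      hab' (mem_blockOf.1 (he ▸ mem_blockOf.2 (r.refl b)))
    exact h _ (blockOf_mem_blocks a) _ (blockOf_mem_blocks b) hne a (mem_blockOf.2 (r.refl a))
      c (mem_blockOf.2 hac) b (mem_blockOf.2 (r.refl b)) d (mem_blockOf.2 hbd) ⟨hab, hbc, hcd⟩
  · rintro h B hB C hC hBC a ha c hc b hb d hd ⟨hab, hbc, hcd⟩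
    obtain ⟨x, rfl⟩ := mem_blocks.1 hB
    obtain ⟨y, rfl⟩ := mem_blocks.1 hC
    rw [mem_blockOf] at ha hb hc hd
    have hab' := h hab hbc hcd (r.trans (r.symm ha) hc) (r.trans (r.symm hb) hd)
    exact hBC (blockOf_eq_of_rel (r.trans ha (r.trans hab' (r.symm hb))))

theorem selfCompl_blocks_iff : SelfCompl m r.blocks ↔ r.RevInvariant := by
  rw [SelfCompl, image_rev_blocks, blocks_injective.eq_iff]
  constructor
  · intro h i j hij
    rw [← h] at hij
    exact hij
  · intro h
    ext i j
    exact ⟨fun hij => by simpa using h hij, fun hij => h hij⟩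

end Setoid

namespace IsPartition

variable {m : ℕ} {P : Finset (Finset (Fin m))}

theorem eq_of_mem (hP : IsPartition m P) {B C : Finset (Fin m)} {i : Fin m} (hB : B ∈ P)
    (hC : C ∈ P) (hiB : i ∈ B) (hiC : i ∈ C) : B = C :=
  (hP.2 i).unique ⟨hB, hiB⟩ ⟨hC, hiC⟩

def setoid (hP : IsPartition m P) : Setoid (Fin m) where
  r i j := ∃ B ∈ P, i ∈ B ∧ j ∈ B
  iseqv :=
    { refl := fun i => (hP.2 i).exists.imp fun _ hB => ⟨hB.1, hB.2, hB.2⟩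
      symm := fun ⟨B, hB, hi, hj⟩ => ⟨B, hB, hj, hi⟩
      trans := fun ⟨B, hB, hi, hj⟩ ⟨_, hC, hj', hk⟩ => ⟨B, hB, hi, hP.eq_of_mem hC hB hj' hj ▸ hk⟩ }

theorem blockOf_setoid (hP : IsPartition m P) {B : Finset (Fin m)} {i : Fin m} (hB : B ∈ P)
    (hi : i ∈ B) : hP.setoid.blockOf i = B := by
  ext j
  rw [Setoid.mem_blockOf]
  exact ⟨fun ⟨C, hC, hiC, hjC⟩ => hP.eq_of_mem hC hB hiC hi ▸ hjC, fun hj => ⟨B, hB, hi, hj⟩⟩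

theorem blocks_setoid (hP : IsPartition m P) : hP.setoid.blocks = P := by
  ext B
  rw [Setoid.mem_blocks]
  constructor
  · rintro ⟨i, rfl⟩
    obtain ⟨C, ⟨hC, hiC⟩, -⟩ := hP.2 i
    rwa [hP.blockOf_setoid hC hiC]
  · intro hB
    obtain ⟨i, hi⟩ := hP.1 B hB
    exact ⟨i, hP.blockOf_setoid hB hi⟩

end IsPartition

theorem Setoid.setoid_isPartition_blocks {m : ℕ} (r : Setoid (Fin m)) :
    (isPartition_blocks r).setoid = r :=
  Setoid.ext fun _ _ => rel_iff_exists_mem_blocks.symm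

theorem L_eq_card (m : ℕ) : L m = Nat.card {r : Setoid (Fin m) // r.Admissible} := by
  refine Nat.card_congr
    { toFun := fun P => ⟨P.2.1.setoid, ?_⟩
      invFun := fun r => ⟨r.1.blocks, r.1.isPartition_blocks, Setoid.ncPart_blocks_iff.2 r.2.1,
        Setoid.noConsec_blocks_iff.2 r.2.2, Setoid.selfCompl_blocks_iff.2 r.2.3⟩
      left_inv := fun P => Subtype.ext P.2.1.blocks_setoid
      right_inv := fun r => Subtype.ext r.1.setoid_isPartition_blocks }
  obtain ⟨P, hP, hNC, hCo, hSC⟩ := P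
  rw [← hP.blocks_setoid] at hNC hCo hSC
  exact ⟨Setoid.ncPart_blocks_iff.1 hNC, Setoid.noConsec_blocks_iff.1 hCo,
    Setoid.selfCompl_blocks_iff.1 hSC⟩


namespace Fin

variable {k : ℕ}

theorem val_predAbove (p : Fin k) (i : Fin (k + 1)) :
    (p.predAbove i : ℕ) = if (p : ℕ) < i then (i : ℕ) - 1 else i := by
  rw [predAbove]
  split_ifs with h₁ h₂ h₂ <;> rw [lt_def, val_castSucc] at h₁ <;>
    simp only [val_pred, coe_castPred] <;> omega

theorem val_succAbove (p : Fin (k + 1)) (i : Fin k) :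
    (p.succAbove i : ℕ) = if (i : ℕ) < p then (i : ℕ) else i + 1 := by
  rw [succAbove]
  split_ifs with h₁ h₂ h₂ <;> rw [lt_def, val_castSucc] at h₁ <;>
    simp only [val_castSucc, val_succ] <;> omega

variable {p : Fin k}

theorem rev_castSucc_of_rev_eq (hp : p.rev = p) : p.castSucc.rev = p.succ := by
  rw [rev_castSucc, hp]

theorem rev_succ_of_rev_eq (hp : p.rev = p) : p.succ.rev = p.castSucc := by
  rw [rev_succ, hp]

theorem predAbove_rev_of_rev_eq (hp : p.rev = p) (i : Fin (k + 1)) :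
    p.predAbove i.rev = (p.predAbove i).rev := by
  rw [rev_predAbove, hp]

theorem rev_le_castSucc_iff (hp : p.rev = p) {i : Fin (k + 1)} :
    i.rev ≤ p.castSucc ↔ ¬i ≤ p.castSucc := by
  rw [rev_le_iff, rev_castSucc_of_rev_eq hp, le_castSucc_iff, not_lt]

end Fin

namespace Setoid

section MergeClasses

variable {α : Type*}

def mergeClasses (r : Setoid α) (u v : α) : Setoid α where
  r x y := r x y ∨ ((r x u ∨ r x v) ∧ (r y u ∨ r y v))
  iseqv :=
    { refl := fun x => Or.inl (r.refl x)
      symm := fun h => h.elim (fun h => Or.inl (r.symm h)) fun h => Or.inr h.symm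
      trans := by
        rintro x y z (hxy | ⟨hx, hy⟩) (hyz | ⟨hy', hz⟩)
        · exact Or.inl (r.trans hxy hyz)
        · exact Or.inr ⟨hy'.imp (r.trans hxy) (r.trans hxy), hz⟩
        · exact Or.inr ⟨hx, hy.imp (r.trans (r.symm hyz)) (r.trans (r.symm hyz))⟩
        · exact Or.inr ⟨hx, hz⟩ }

theorem mergeClasses_iff {r : Setoid α} {u v x y : α} :
    r.mergeClasses u v x y ↔ r x y ∨ ((r x u ∨ r x v) ∧ (r y u ∨ r y v)) :=
  Iff.rfl

theorem mergeClasses_rel_left_right (r : Setoid α) (u v : α) : r.mergeClasses u v u v :=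
  Or.inr ⟨Or.inl (r.refl u), Or.inr (r.refl v)⟩

end MergeClasses

variable {k : ℕ}

-- `p.castSucc.succAbove` is a section of `p.predAbove`: this is the image of the merged relation
-- under the collapse `p.predAbove` of the two central points.
def mergeAt (r : Setoid (Fin (k + 1))) (p : Fin k) : Setoid (Fin k) :=
  (r.mergeClasses p.castSucc p.succ).comap p.castSucc.succAbove

-- Pull back along `p.predAbove`, then cut the class of `p` into its points `≤ p.castSucc` and its
-- points `≥ p.succ`.
def splitAt (s : Setoid (Fin k)) (p : Fin k) : Setoid (Fin (k + 1)) :=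
  s.comap p.predAbove ⊓ ker fun i => s (p.predAbove i) p ∧ i ≤ p.castSucc

section Split

variable {s : Setoid (Fin k)} {p : Fin k}

theorem splitAt_iff {i j : Fin (k + 1)} :
    s.splitAt p i j ↔ s (p.predAbove i) (p.predAbove j) ∧
      (s (p.predAbove i) p ∧ i ≤ p.castSucc ↔ s (p.predAbove j) p ∧ j ≤ p.castSucc) := by
  rw [splitAt, inf_iff_and, comap_rel, ker_def, eq_iff_iff]

theorem Noncrossing.splitAt (hs : s.Noncrossing) (p : Fin k) : (s.splitAt p).Noncrossing := by
  intro a b c d hab hbc hcd hac hbd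
  rw [splitAt_iff] at hac hbd ⊢
  have hab' : s (p.predAbove a) (p.predAbove b) :=
    hs.comap (Fin.predAbove_right_monotone p) hab hbc hcd hac.1 hbd.1
  refine ⟨hab', fun ⟨ha, hal⟩ => ⟨s.trans (s.symm hab') ha, ?_⟩,
    fun ⟨hb, hbl⟩ => ⟨s.trans hab' hb, hab.le.trans hbl⟩⟩
  exact hbc.le.trans (hac.2.1 ⟨ha, hal⟩).2

theorem NoConsec.splitAt (hs : s.NoConsec) (p : Fin k) : (s.splitAt p).NoConsec := by
  intro i j hij h
  rw [splitAt_iff] at h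
  by_cases hi : i = p.castSucc
  · have hj : j = p.succ := Fin.ext (by simp [← hij, hi])
    subst hi hj
    simp at h
  · refine hs ?_ h.1
    have := Fin.val_ne_of_ne hi
    rw [Fin.val_castSucc] at this
    rw [Fin.val_predAbove, Fin.val_predAbove]
    split_ifs <;> omega

theorem RevInvariant.splitAt (hs : s.RevInvariant) (hp : p.rev = p) :
    (s.splitAt p).RevInvariant := by
  have hcentre (i : Fin (k + 1)) : s (p.predAbove i.rev) p ↔ s (p.predAbove i) p := by
    rw [Fin.predAbove_rev_of_rev_eq hp]
    exact ⟨fun h => by simpa [hp] using hs h, fun h => by simpa [hp] using hs h⟩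
  intro i j h
  rw [splitAt_iff] at h ⊢
  rw [hcentre, hcentre, Fin.rev_le_castSucc_iff hp, Fin.rev_le_castSucc_iff hp,
    Fin.predAbove_rev_of_rev_eq hp, Fin.predAbove_rev_of_rev_eq hp]
  have : s (p.predAbove i) p ↔ s (p.predAbove j) p := ⟨s.trans (s.symm h.1), s.trans h.1⟩
  exact ⟨hs h.1, by tauto⟩

theorem mergeClasses_splitAt_iff {i j : Fin (k + 1)} :
    (s.splitAt p).mergeClasses p.castSucc p.succ i j ↔ s (p.predAbove i) (p.predAbove j) := by
  have hcentre (x : Fin (k + 1)) :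
      (s.splitAt p x p.castSucc ∨ s.splitAt p x p.succ) ↔ s (p.predAbove x) p := by
    simp only [splitAt_iff, Fin.predAbove_castSucc_self, Fin.predAbove_succ_self, le_refl,
      not_le.2 Fin.castSucc_lt_succ, and_true, and_false, iff_true_intro (s.refl p)]
    tauto
  rw [mergeClasses_iff, hcentre, hcentre, splitAt_iff]
  constructor
  · rintro (h | ⟨hi, hj⟩)
    · exact h.1
    · exact s.trans hi (s.symm hj)
  · intro h
    by_cases hi : s (p.predAbove i) p
    · exact Or.inr ⟨hi, s.trans (s.symm h) hi⟩
    · exact Or.inl ⟨h, iff_of_false (fun h' => hi h'.1) fun h' => hi (s.trans h h'.1)⟩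

theorem mergeAt_splitAt (s : Setoid (Fin k)) (p : Fin k) : (s.splitAt p).mergeAt p = s := by
  ext x y
  rw [mergeAt, comap_rel, mergeClasses_splitAt_iff, Fin.predAbove_succAbove,
    Fin.predAbove_succAbove]

end Split

section Merge

variable {p : Fin k} {r : Setoid (Fin (k + 1))}

theorem mergeClasses_succAbove_predAbove (r : Setoid (Fin (k + 1))) (p : Fin k)
    (i : Fin (k + 1)) :
    r.mergeClasses p.castSucc p.succ (p.castSucc.succAbove (p.predAbove i)) i := by
  by_cases hi : i = p.castSucc
  · subst hi
    rw [Fin.predAbove_castSucc_self, Fin.succAbove_castSucc_self]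
    exact (r.mergeClasses _ _).symm (mergeClasses_rel_left_right r _ _)
  · rw [Fin.succAbove_predAbove hi]

theorem mergeClasses_castSucc_succAbove (r : Setoid (Fin (k + 1))) (p z : Fin k) :
    r.mergeClasses p.castSucc p.succ (p.castSucc.succAbove z) (p.succ.succAbove z) := by
  by_cases hz : z = p
  · subst hz
    rw [Fin.succAbove_castSucc_self, Fin.succAbove_succ_self]
    exact (r.mergeClasses _ _).symm (mergeClasses_rel_left_right r _ _)
  · have := Fin.val_ne_of_ne hz
    rw [show p.castSucc.succAbove z = p.succ.succAbove z from Fin.ext (by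
      rw [Fin.val_succAbove, Fin.val_succAbove, Fin.val_castSucc, Fin.val_succ]
      split_ifs <;> omega)]

theorem mergeAt_predAbove_iff {i j : Fin (k + 1)} :
    r.mergeAt p (p.predAbove i) (p.predAbove j) ↔ r.mergeClasses p.castSucc p.succ i j := by
  have hi := mergeClasses_succAbove_predAbove r p i
  have hj := mergeClasses_succAbove_predAbove r p j
  rw [mergeAt, comap_rel]
  set R := r.mergeClasses p.castSucc p.succ
  exact ⟨fun h => R.trans (R.trans (R.symm hi) h) hj, fun h => R.trans (R.trans hi h) (R.symm hj)⟩

theorem mergeAt_predAbove_centre_iff {i : Fin (k + 1)} :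
    r.mergeAt p (p.predAbove i) p ↔ r i p.castSucc ∨ r i p.succ := by
  have := mergeAt_predAbove_iff (r := r) (p := p) (i := i) (j := p.castSucc)
  rw [Fin.predAbove_castSucc_self] at this
  rw [this, mergeClasses_iff]
  exact ⟨fun h => h.elim Or.inl And.left, fun h => Or.inr ⟨h, Or.inl (r.refl _)⟩⟩

namespace Admissible

variable (hr : r.Admissible) (hp : p.rev = p)
include hr

theorem not_rel_castSucc_succ (p : Fin k) : ¬r p.castSucc p.succ :=
  hr.noConsec (by simp)

include hp

theorem le_castSucc_of_rel {x : Fin (k + 1)} (h : r x p.castSucc) : x ≤ p.castSucc := by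
  by_contra hx
  rw [not_le] at hx
  have hhix : p.succ < x := by
    refine lt_of_le_of_ne (Fin.castSucc_lt_iff_succ_le.1 hx) ?_
    rintro rfl
    exact hr.not_rel_castSucc_succ p (r.symm h)
  have hrev : r x.rev p.succ := by
    simpa [Fin.rev_castSucc_of_rev_eq hp] using hr.revInvariant h
  have hxrev : x.rev < p.castSucc := by
    rwa [Fin.rev_lt_iff, Fin.rev_castSucc_of_rev_eq hp]
  have := hr.noncrossing hxrev Fin.castSucc_lt_succ hhix hrev (r.symm h)
  exact hr.not_rel_castSucc_succ p (r.trans (r.symm this) hrev)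

theorem succ_le_of_rel {x : Fin (k + 1)} (h : r x p.succ) : p.succ ≤ x := by
  have hrev : r x.rev p.castSucc := by
    simpa [Fin.rev_succ_of_rev_eq hp] using hr.revInvariant h
  have := hr.le_castSucc_of_rel hp hrev
  rwa [Fin.rev_le_iff, Fin.rev_castSucc_of_rev_eq hp] at this

theorem rel_centre_of_lt_of_lt {x y t s : Fin (k + 1)} (hx : r x p.castSucc) (hy : r y p.succ)
    (hxt : x < t) (hty : t < y) (hts : r t s) (hs : s < x ∨ y < s) :
    r t p.castSucc ∨ r t p.succ := by
  have hxlo := hr.le_castSucc_of_rel hp hx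
  have hhiy := hr.succ_le_of_rel hp hy
  rcases lt_trichotomy t p.castSucc with htlo | rfl | hlot
  · left
    rcases hs with hsx | hys
    · have := hr.noncrossing hsx hxt htlo (r.symm hts) hx
      exact r.trans (r.trans hts this) hx
    · have := hr.noncrossing hxt htlo (Fin.castSucc_lt_succ.trans_le (hhiy.trans hys.le)) hx hts
      exact r.trans (r.symm this) hx
  · exact Or.inl (r.refl _)
  rcases (Fin.castSucc_lt_iff_succ_le.1 hlot).eq_or_lt with rfl | hhit
  · exact Or.inr (r.refl _)
  right
  rcases hs with hsx | hys
  · have hshi := hsx.trans_le (hxlo.trans Fin.castSucc_lt_succ.le)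
    exact r.trans hts (hr.noncrossing hshi hhit hty (r.symm hts) (r.symm hy))
  · exact r.symm (hr.noncrossing hhit hty hys (r.symm hy) hts)

theorem noncrossing_mergeClasses : (r.mergeClasses p.castSucc p.succ).Noncrossing := by
  have centre_pair {b d : Fin (k + 1)} (hb : r b p.castSucc ∨ r b p.succ)
      (hd : r d p.castSucc ∨ r d p.succ) (hbd : ¬r b d) (hlt : b < d) :
      r b p.castSucc ∧ r d p.succ := by
    rcases hb with hb | hb <;> rcases hd with hd | hd
    · exact absurd (r.trans hb (r.symm hd)) hbd
    · exact ⟨hb, hd⟩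
    · exact absurd (((hr.succ_le_of_rel hp hb).trans hlt.le).trans (hr.le_castSucc_of_rel hp hd))
        (not_le.2 Fin.castSucc_lt_succ)
    · exact absurd (r.trans hb (r.symm hd)) hbd
  intro a b c d hab hbc hcd hac hbd
  rcases hac with hac | ⟨ha, hc⟩ <;> rcases hbd with hbd | ⟨hb, hd⟩
  · exact Or.inl (hr.noncrossing hab hbc hcd hac hbd)
  · by_cases hbd' : r b d
    · exact Or.inl (hr.noncrossing hab hbc hcd hac hbd')
    obtain ⟨hbl, hdh⟩ := centre_pair hb hd hbd' (hbc.trans hcd)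
    have hc := hr.rel_centre_of_lt_of_lt hp hbl hdh hbc hcd (r.symm hac) (Or.inl hab)
    exact Or.inr ⟨hc.imp (r.trans hac) (r.trans hac), hb⟩
  · by_cases hac' : r a c
    · exact Or.inl (hr.noncrossing hab hbc hcd hac' hbd)
    obtain ⟨hal, hch⟩ := centre_pair ha hc hac' (hab.trans hbc)
    exact Or.inr ⟨ha, hr.rel_centre_of_lt_of_lt hp hal hch hab hbc hbd (Or.inr hcd)⟩
  · exact Or.inr ⟨ha, hb⟩

theorem noncrossing_mergeAt : (r.mergeAt p).Noncrossing :=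
  (hr.noncrossing_mergeClasses hp).comap (Fin.strictMono_succAbove _).monotone

theorem not_mergeClasses_of_succ {i j : Fin (k + 1)} (hij : (i : ℕ) + 1 = j)
    (hi : i ≠ p.castSucc) : ¬r.mergeClasses p.castSucc p.succ i j := by
  have := Fin.val_ne_of_ne hi
  rw [Fin.val_castSucc] at this
  rintro (h | ⟨hi' | hi', hj | hj⟩)
  · exact hr.noConsec hij h
  · exact hr.noConsec hij (r.trans hi' (r.symm hj))
  · have h₁ := hr.le_castSucc_of_rel hp hi'
    have h₂ := hr.succ_le_of_rel hp hj
    rw [Fin.le_def, Fin.val_castSucc] at h₁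
    rw [Fin.le_def, Fin.val_succ] at h₂
    omega
  · have h₁ := hr.succ_le_of_rel hp hi'
    have h₂ := hr.le_castSucc_of_rel hp hj
    rw [Fin.le_def, Fin.val_succ] at h₁
    rw [Fin.le_def, Fin.val_castSucc] at h₂
    omega
  · exact hr.noConsec hij (r.trans hi' (r.symm hj))

theorem noConsec_mergeAt : (r.mergeAt p).NoConsec := by
  intro x y hxy h
  rw [mergeAt, comap_rel] at h
  have hne := Fin.succAbove_ne p.castSucc x
  by_cases hy : y = p
  · subst hy
    rw [Fin.succAbove_castSucc_self] at h
    refine hr.not_mergeClasses_of_succ hp ?_ hne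
      ((r.mergeClasses _ _).trans h ((r.mergeClasses _ _).symm (mergeClasses_rel_left_right r _ _)))
    rw [Fin.val_succAbove, Fin.val_castSucc]
    split_ifs <;> omega
  · have := Fin.val_ne_of_ne hy
    refine hr.not_mergeClasses_of_succ hp ?_ hne h
    rw [Fin.val_succAbove, Fin.val_succAbove, Fin.val_castSucc]
    split_ifs <;> omega

theorem splitAt_mergeAt : (r.mergeAt p).splitAt p = r := by
  have hlow (x : Fin (k + 1)) :
      ((r x p.castSucc ∨ r x p.succ) ∧ x ≤ p.castSucc) ↔ r x p.castSucc :=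
    ⟨fun ⟨hx, hle⟩ => hx.resolve_right fun h =>
        (hle.trans_lt Fin.castSucc_lt_succ).not_ge (hr.succ_le_of_rel hp h),
      fun h => ⟨Or.inl h, hr.le_castSucc_of_rel hp h⟩⟩
  ext i j
  rw [splitAt_iff, mergeAt_predAbove_iff, mergeAt_predAbove_centre_iff,
    mergeAt_predAbove_centre_iff, hlow, hlow, mergeClasses_iff]
  constructor
  · rintro ⟨h | ⟨hi, hj⟩, hij⟩
    · exact h
    by_cases hil : r i p.castSucc
    · exact r.trans hil (r.symm (hij.1 hil))
    · exact r.trans (hi.resolve_left hil) (r.symm (hj.resolve_left (mt hij.2 hil)))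
  · exact fun h => ⟨Or.inl h, r.trans (r.symm h), r.trans h⟩

end Admissible

theorem RevInvariant.mergeClasses (hr : r.RevInvariant) (hp : p.rev = p) :
    (r.mergeClasses p.castSucc p.succ).RevInvariant := by
  have hcentre (x : Fin (k + 1)) (h : r x p.castSucc ∨ r x p.succ) :
      r x.rev p.castSucc ∨ r x.rev p.succ :=
    (h.imp (fun h => by simpa [Fin.rev_castSucc_of_rev_eq hp] using hr h)
      fun h => by simpa [Fin.rev_succ_of_rev_eq hp] using hr h).symm
  rintro i j (h | ⟨hi, hj⟩)
  · exact Or.inl (hr h)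
  · exact Or.inr ⟨hcentre i hi, hcentre j hj⟩

theorem RevInvariant.mergeAt (hr : r.RevInvariant) (hp : p.rev = p) :
    (r.mergeAt p).RevInvariant := by
  intro x y h
  have := hr.mergeClasses hp h
  rw [Fin.rev_succAbove, Fin.rev_succAbove, Fin.rev_castSucc_of_rev_eq hp] at this
  set R := r.mergeClasses p.castSucc p.succ
  exact R.trans (mergeClasses_castSucc_succAbove r p x.rev)
    (R.trans this (R.symm (mergeClasses_castSucc_succAbove r p y.rev)))

end Merge

end Setoid

def admissibleMergeEquiv {k : ℕ} {p : Fin k} (hp : p.rev = p) :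
    {r : Setoid (Fin (k + 1)) // r.Admissible} ≃ {s : Setoid (Fin k) // s.Admissible} where
  toFun r := ⟨r.1.mergeAt p, r.2.noncrossing_mergeAt hp, r.2.noConsec_mergeAt hp,
    r.2.revInvariant.mergeAt hp⟩
  invFun s := ⟨s.1.splitAt p, s.2.noncrossing.splitAt p, s.2.noConsec.splitAt p,
    s.2.revInvariant.splitAt hp⟩
  left_inv r := Subtype.ext (r.2.splitAt_mergeAt hp)
  right_inv s := Subtype.ext (s.1.mergeAt_splitAt p)

theorem L_succ_of_odd {k : ℕ} (hk : Odd k) : L (k + 1) = L k := by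
  obtain ⟨m, rfl⟩ := hk
  rw [L_eq_card, L_eq_card]
  have hp : (⟨m, by omega⟩ : Fin (2 * m + 1)).rev = ⟨m, by omega⟩ :=
    Fin.ext (by simp only [Fin.val_rev]; omega)
  exact Nat.card_congr (admissibleMergeEquiv hp)

theorem statement14 : ∀ n : ℕ, 1 ≤ n → L (2 * n) = L (2 * n - 1) := by
  intro n hn
  have := L_succ_of_odd (k := 2 * n - 1) ⟨n - 1, by omega⟩
  rwa [Nat.sub_add_cancel (by omega)] at this
end

section
/- Let A (n,k) be the number of partitions of {1,…,n} into exactly k+1 blocks, none of which contains two consecutive integers, that are invariant under complementation (j ↦ n+1-j inside blocks). Then A (1,0) = 1, A (n,0) = 0 for n > 1, A (n, n-1) = 1, and for n ≥ 5 and 2 ≤ k ≤ n-3: A (n,k) = k·A (n-2,k) + A (n-2,k-1) + A (n-2,k-2). -/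
/-- `A n k` is the number of self-complementary partitions of `{1,…,n}` into
exactly `k+1` blocks, none containing two consecutive integers (crossings
allowed). -/
noncomputable def A (n k : ℕ) : ℕ :=
  Nat.card {P : Finset (Finset (Fin n)) //
    IsPartition n P ∧ NoConsec n P ∧ SelfCompl n P ∧ P.card = k + 1}

namespace SC

lemma part_disjoint {n} {P : Finset (Finset (Fin n))} (h : IsPartition n P)
    {B C : Finset (Fin n)} (hB : B ∈ P) (hC : C ∈ P) (hne : B ≠ C) {i : Fin n}
    (hiB : i ∈ B) : i ∉ C := by
  intro hiC
  obtain ⟨D, _, hu⟩ := h.2 i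
  exact hne ((hu B ⟨hB, hiB⟩).trans (hu C ⟨hC, hiC⟩).symm)

lemma mem_rev {n} {P : Finset (Finset (Fin n))} (h : SelfCompl n P)
    {B : Finset (Fin n)} (hB : B ∈ P) : B.image Fin.rev ∈ P := by
  rw [← h]
  exact Finset.mem_image_of_mem _ hB

lemma partA : A 1 0 = 1 := by
  rw [A, Nat.card_eq_one_iff_unique]
  constructor
  · constructor
    rintro ⟨P, hP1, _, _, hP4⟩ ⟨Q, hQ1, _, _, hQ4⟩
    have hkey : ∀ (R : Finset (Finset (Fin 1))), IsPartition 1 R → R.card = 1 →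
        R = {{0}} := by
      intro R hR hRc
      obtain ⟨B, hB⟩ := Finset.card_eq_one.mp hRc
      subst hB
      obtain ⟨C, ⟨hC, h0C⟩, _⟩ := hR.2 0
      have : C = B := Finset.mem_singleton.mp hC
      subst this
      congr 1
      apply Finset.eq_singleton_iff_unique_mem.mpr
      exact ⟨h0C, fun x _ => Subsingleton.elim x 0⟩
    simp only [Subtype.mk.injEq]
    rw [hkey P hP1 hP4, hkey Q hQ1 hQ4]
  · refine ⟨⟨{{0}}, ⟨?_, ?_⟩, ?_, ?_, rfl⟩⟩
    · intro B hB; rw [Finset.mem_singleton.mp hB]; exact ⟨0, by simp⟩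
    · intro i
      refine ⟨{0}, ⟨by simp, by simp [Subsingleton.elim i 0]⟩, ?_⟩
      rintro B ⟨hB, _⟩; exact Finset.mem_singleton.mp hB
    · intro B hB i hi j hj
      rw [Finset.mem_singleton.mp hB] at hi hj
      simp only [Finset.mem_singleton] at hi hj
      subst hi; subst hj; simp
    · unfold SelfCompl; decide

lemma partB (n : ℕ) (h : 1 < n) : A n 0 = 0 := by
  rw [A, Nat.card_eq_zero]
  left
  constructor
  rintro ⟨P, hP1, hP2, _, hP4⟩
  obtain ⟨B, hB⟩ := Finset.card_eq_one.mp hP4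
  subst hB
  have h0 : (⟨0, by omega⟩ : Fin n) ∈ B := by
    obtain ⟨C, ⟨hC, hi⟩, _⟩ := hP1.2 ⟨0, by omega⟩
    rwa [Finset.mem_singleton.mp hC] at hi
  have h1 : (⟨1, by omega⟩ : Fin n) ∈ B := by
    obtain ⟨C, ⟨hC, hi⟩, _⟩ := hP1.2 ⟨1, by omega⟩
    rwa [Finset.mem_singleton.mp hC] at hi
  exact hP2 B (Finset.mem_singleton_self B) _ h0 _ h1 rfl

end SC

namespace SC

lemma sum_card {n} {P : Finset (Finset (Fin n))} (h : IsPartition n P) :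
    ∑ B ∈ P, B.card = n := by
  have hbu : P.biUnion id = Finset.univ := by
    ext i
    simp only [Finset.mem_biUnion, id, Finset.mem_univ, iff_true]
    obtain ⟨B, ⟨hB, hiB⟩, _⟩ := h.2 i
    exact ⟨B, hB, hiB⟩
  have := Finset.card_biUnion (s := P) (t := id) ?_
  · rw [hbu] at this; simpa using this.symm
  · intro B hB C hC hne
    change Disjoint B C
    rw [Finset.disjoint_left]
    exact fun {a} ha => part_disjoint h hB hC hne ha

lemma all_singletons {n} {P : Finset (Finset (Fin n))} (h : IsPartition n P)
    (hc : P.card = n) : P = Finset.univ.image (fun i : Fin n => {i}) := by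
  have hone : ∀ B ∈ P, B.card = 1 := by
    by_contra hx
    push_neg at hx
    obtain ⟨B₀, hB₀, hB₀c⟩ := hx
    have h1 : ∀ B ∈ P, 1 ≤ B.card := fun B hB => Finset.card_pos.mpr (h.1 B hB)
    have : ∑ _B ∈ P, 1 < ∑ B ∈ P, B.card := by
      apply Finset.sum_lt_sum h1
      exact ⟨B₀, hB₀, lt_of_le_of_ne (h1 B₀ hB₀) (Ne.symm hB₀c)⟩
    rw [sum_card h] at this
    simp [hc] at this
  ext B
  simp only [Finset.mem_image, Finset.mem_univ, true_and]
  constructor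
  · intro hB
    obtain ⟨b, hb⟩ := Finset.card_eq_one.mp (hone B hB)
    exact ⟨b, hb.symm⟩
  · rintro ⟨i, rfl⟩
    obtain ⟨B, ⟨hB, hiB⟩, _⟩ := h.2 i
    obtain ⟨b, hb⟩ := Finset.card_eq_one.mp (hone B hB)
    rw [hb] at hiB
    have hib := Finset.mem_singleton.mp hiB
    subst hib
    rwa [hb] at hB

lemma partC (n : ℕ) (h : 1 ≤ n) : A n (n - 1) = 1 := by
  have hn : n - 1 + 1 = n := by omega
  rw [A, Nat.card_eq_one_iff_unique]
  have hsing : ∀ (P : Finset (Finset (Fin n))),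
      IsPartition n P ∧ NoConsec n P ∧ SelfCompl n P ∧ P.card = n - 1 + 1 →
      P = Finset.univ.image (fun i : Fin n => {i}) := by
    rintro P ⟨h1, _, _, h4⟩
    exact all_singletons h1 (by omega)
  constructor
  · constructor
    rintro ⟨P, hP⟩ ⟨Q, hQ⟩
    simp only [Subtype.mk.injEq]
    rw [hsing P hP, hsing Q hQ]
  · refine ⟨⟨Finset.univ.image (fun i : Fin n => {i}), ⟨?_, ?_⟩, ?_, ?_, ?_⟩⟩
    · intro B hB
      obtain ⟨i, _, rfl⟩ := Finset.mem_image.mp hB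
      exact ⟨i, Finset.mem_singleton_self i⟩
    · intro i
      refine ⟨{i}, ⟨Finset.mem_image.mpr ⟨i, Finset.mem_univ i, rfl⟩,
        Finset.mem_singleton_self i⟩, ?_⟩
      rintro B ⟨hB, hiB⟩
      obtain ⟨j, _, rfl⟩ := Finset.mem_image.mp hB
      rw [Finset.mem_singleton.mp hiB]
    · intro B hB i hi j hj
      obtain ⟨b, _, rfl⟩ := Finset.mem_image.mp hB
      rw [Finset.mem_singleton.mp hi, Finset.mem_singleton.mp hj]
      omega
    · show Finset.image _ _ = _
      rw [Finset.image_image]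
      have : ((fun B => Finset.image Fin.rev B) ∘ fun i : Fin n => ({i} : Finset (Fin n)))
          = (fun i : Fin n => ({i} : Finset (Fin n))) ∘ Fin.rev := by
        funext i; simp
      rw [this, ← Finset.image_image,
        Finset.image_univ_of_surjective Fin.rev_involutive.surjective]
    · rw [Finset.card_image_of_injective _ (fun a b hab => by simpa using hab)]
      simp [hn]

end SC

namespace SC

def Full (n k : ℕ) (P : Finset (Finset (Fin n))) : Prop :=
  IsPartition n P ∧ NoConsec n P ∧ SelfCompl n P ∧ P.card = k + 1

lemma A_eq (n k : ℕ) : A n k = Nat.card {P // Full n k P} := rfl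

variable {m : ℕ}

/-- The embedding of `Fin m` into the middle of `Fin (m+2)`. -/
def up (i : Fin m) : Fin (m + 2) := ⟨i + 1, by omega⟩

/-- Intersect a block with the middle and relabel. -/
def dn (B : Finset (Fin (m + 2))) : Finset (Fin m) :=
  Finset.univ.filter fun j => up j ∈ B

def upIm (D : Finset (Fin m)) : Finset (Fin (m + 2)) := D.image up

/-- The top element of `Fin (m+2)`. -/
abbrev tp (m : ℕ) : Fin (m + 2) := Fin.last (m + 1)

/-- reverse image of a block -/
def rv {n : ℕ} (B : Finset (Fin n)) : Finset (Fin n) := B.image Fin.rev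

lemma up_injective : Function.Injective (up (m := m)) := by
  intro a b h
  have := congrArg Fin.val h
  simp only [up] at this
  exact Fin.ext (by omega)

@[simp] lemma mem_dn {B : Finset (Fin (m + 2))} {j : Fin m} : j ∈ dn B ↔ up j ∈ B := by
  simp [dn]

@[simp] lemma up_ne_zero (j : Fin m) : up j ≠ 0 := by
  intro h; have := congrArg Fin.val h; simp [up] at this

@[simp] lemma up_ne_tp (j : Fin m) : up j ≠ tp m := by
  intro h; have := congrArg Fin.val h; simp [up, tp, Fin.last] at this; omega

@[simp] lemma zero_notmem_upIm (D : Finset (Fin m)) : (0 : Fin (m+2)) ∉ upIm D := by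
  simp only [upIm, Finset.mem_image, not_exists]
  rintro j ⟨_, h⟩
  exact up_ne_zero j h

@[simp] lemma tp_notmem_upIm (D : Finset (Fin m)) : tp m ∉ upIm D := by
  simp only [upIm, Finset.mem_image, not_exists]
  rintro j ⟨_, h⟩
  exact up_ne_tp j h

@[simp] lemma dn_upIm (D : Finset (Fin m)) : dn (upIm D) = D := by
  ext j
  simp only [mem_dn, upIm, Finset.mem_image]
  constructor
  · rintro ⟨i, hi, hij⟩
    rwa [← up_injective hij]
  · exact fun h => ⟨j, h, rfl⟩

lemma exists_up {x : Fin (m + 2)} (h0 : x ≠ 0) (hl : x ≠ tp m) : ∃ j : Fin m, up j = x := by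
  have h0' : (x : ℕ) ≠ 0 := fun h => h0 (Fin.ext (by simp [h]))
  have hl' : (x : ℕ) ≠ m + 1 := fun h => hl (Fin.ext (by simp [tp, Fin.last, h]))
  have hx := x.isLt
  exact ⟨⟨(x : ℕ) - 1, by omega⟩, Fin.ext (by simp [up]; omega)⟩

lemma mem_upIm_dn {B : Finset (Fin (m + 2))} {x : Fin (m + 2)} :
    x ∈ upIm (dn B) ↔ x ∈ B ∧ x ≠ 0 ∧ x ≠ tp m := by
  constructor
  · intro hx
    obtain ⟨j, hj, rfl⟩ := Finset.mem_image.mp hx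
    exact ⟨mem_dn.mp hj, up_ne_zero j, up_ne_tp j⟩
  · rintro ⟨hxB, h0, hl⟩
    obtain ⟨j, rfl⟩ := exists_up h0 hl
    exact Finset.mem_image.mpr ⟨j, mem_dn.mpr hxB, rfl⟩

lemma upIm_dn_eq {B : Finset (Fin (m + 2))} (h0 : (0 : Fin (m+2)) ∉ B) (hl : tp m ∉ B) :
    upIm (dn B) = B := by
  ext x
  rw [mem_upIm_dn]
  refine ⟨fun h => h.1, fun hx => ⟨hx, ?_, ?_⟩⟩
  · rintro rfl; exact h0 hx
  · rintro rfl; exact hl hx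

lemma up_rev (j : Fin m) : up j.rev = (up j).rev := by
  apply Fin.ext
  have := j.isLt
  simp [up, Fin.val_rev]
  omega

@[simp] lemma rv_rv {n : ℕ} (B : Finset (Fin n)) : rv (rv B) = B := by
  simp [rv, Finset.image_image, Function.comp_def]

lemma rv_injective {n : ℕ} : Function.Injective (rv (n := n)) := by
  intro a b h
  have := congrArg rv h
  simpa using this

@[simp] lemma mem_rv {n : ℕ} {B : Finset (Fin n)} {x : Fin n} : x ∈ rv B ↔ x.rev ∈ B := by
  simp only [rv, Finset.mem_image]
  constructor
  · rintro ⟨y, hy, rfl⟩; simpa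
  · intro h; exact ⟨x.rev, h, by simp⟩

lemma dn_rv (B : Finset (Fin (m + 2))) : dn (rv B) = rv (dn B) := by
  ext j
  simp only [mem_dn, mem_rv]
  rw [← up_rev]

lemma rev_zero_eq_tp : (0 : Fin (m+2)).rev = tp m := by
  apply Fin.ext; simp [tp, Fin.val_rev, Fin.last]

lemma rev_tp_eq_zero : (tp m).rev = 0 := by
  rw [← rev_zero_eq_tp, Fin.rev_rev]

lemma rv_upIm (D : Finset (Fin m)) : rv (upIm D) = upIm (rv D) := by
  simp only [rv, upIm, Finset.image_image]
  congr 1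
  funext j
  exact (up_rev j).symm

@[simp] lemma rv_zero_singleton : rv ({0} : Finset (Fin (m+2))) = {tp m} := by
  rw [rv, Finset.image_singleton, rev_zero_eq_tp]

@[simp] lemma rv_pair : rv ({0, tp m} : Finset (Fin (m+2))) = {0, tp m} := by
  rw [rv, Finset.image_insert, Finset.image_singleton, rev_zero_eq_tp, rev_tp_eq_zero,
    Finset.pair_comm]

lemma zero_ne_tp : (0 : Fin (m+2)) ≠ tp m := by
  intro h; have := congrArg Fin.val h; simp [tp, Fin.last] at this

end SC
namespace SC

variable {m k : ℕ} {P : Finset (Finset (Fin (m+2)))} {P₀ : Finset (Finset (Fin (m+2)))}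
  {P' : Finset (Finset (Fin m))}

lemma part_disjoint' {n} {P : Finset (Finset (Fin n))} (h : IsPartition n P)
    {B C : Finset (Fin n)} (hB : B ∈ P) (hC : C ∈ P) (hne : B ≠ C) {i : Fin n}
    (hiB : i ∈ B) : i ∉ C := by
  intro hiC
  obtain ⟨D, _, hu⟩ := h.2 i
  exact hne ((hu B ⟨hB, hiB⟩).trans (hu C ⟨hC, hiC⟩).symm)

lemma blocks_eq {n} {P : Finset (Finset (Fin n))} (h : IsPartition n P)
    {B C : Finset (Fin n)} (hB : B ∈ P) (hC : C ∈ P) {i : Fin n}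
    (hiB : i ∈ B) (hiC : i ∈ C) : B = C := by
  obtain ⟨D, _, hu⟩ := h.2 i
  exact (hu B ⟨hB, hiB⟩).trans (hu C ⟨hC, hiC⟩).symm

lemma selfCompl_rv (h : SelfCompl (m+2) P) : P.image rv = P := h

lemma selfCompl_rv' {n} {Q : Finset (Finset (Fin n))} (h : SelfCompl n Q) :
    Q.image rv = Q := h

lemma mem_rv_of_selfCompl {n} {Q : Finset (Finset (Fin n))} (h : SelfCompl n Q)
    {B : Finset (Fin n)} (hB : B ∈ Q) : rv B ∈ Q := by
  rw [← selfCompl_rv' h]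
  exact Finset.mem_image_of_mem _ hB

@[simp] lemma up_mem_upIm {D : Finset (Fin m)} {j : Fin m} : up j ∈ upIm D ↔ j ∈ D := by
  simp only [upIm, Finset.mem_image]
  constructor
  · rintro ⟨i, hi, hij⟩; rwa [← up_injective hij]
  · exact fun h => ⟨j, h, rfl⟩

lemma isPartition_image_dn (hP : IsPartition (m+2) P) (hsub : P₀ ⊆ P)
    (hne : ∀ B ∈ P₀, (dn B).Nonempty)
    (hcov : ∀ j : Fin m, ∃ B ∈ P₀, up j ∈ B) :
    IsPartition m (P₀.image dn) := by
  constructor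
  · intro D hD
    obtain ⟨B, hB, rfl⟩ := Finset.mem_image.mp hD
    exact hne B hB
  · intro j
    obtain ⟨B, hB, hjB⟩ := hcov j
    refine ⟨dn B, ⟨Finset.mem_image_of_mem _ hB, mem_dn.mpr hjB⟩, ?_⟩
    rintro y ⟨hy, hjy⟩
    obtain ⟨B', hB', rfl⟩ := Finset.mem_image.mp hy
    have : B' = B := blocks_eq hP (hsub hB') (hsub hB) (mem_dn.mp hjy) hjB
    rw [this]

lemma noconsec_image_dn (hP : NoConsec (m+2) P) (hsub : P₀ ⊆ P) :
    NoConsec m (P₀.image dn) := by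
  intro D hD i hi j hj hij
  obtain ⟨B, hB, rfl⟩ := Finset.mem_image.mp hD
  exact hP B (hsub hB) (up i) (mem_dn.mp hi) (up j) (mem_dn.mp hj) (by simp [up]; omega)

lemma selfcompl_image_dn (hrv : P₀.image rv = P₀) : SelfCompl m (P₀.image dn) := by
  show (P₀.image dn).image rv = P₀.image dn
  rw [Finset.image_image]
  have : rv ∘ dn = dn ∘ (rv (n := m+2)) := by
    funext B; exact (dn_rv B).symm
  rw [this, ← Finset.image_image, hrv]

lemma dn_nonempty {B : Finset (Fin (m+2))} (hB : B.Nonempty)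
    (h0 : (0 : Fin (m+2)) ∉ B) (hl : tp m ∉ B) : (dn B).Nonempty := by
  obtain ⟨x, hx⟩ := hB
  have hx0 : x ≠ 0 := by rintro rfl; exact h0 hx
  have hxl : x ≠ tp m := by rintro rfl; exact hl hx
  obtain ⟨j, rfl⟩ := exists_up hx0 hxl
  exact ⟨j, mem_dn.mpr hx⟩

lemma dn_injOn_avoid :
    ∀ B ∈ P₀, ∀ C ∈ P₀, ((0:Fin (m+2)) ∉ B) → (tp m ∉ B) → ((0:Fin (m+2)) ∉ C)
    → (tp m ∉ C) → dn B = dn C → B = C := by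
  intro B _ C _ hB0 hBl hC0 hCl h
  rw [← upIm_dn_eq hB0 hBl, ← upIm_dn_eq hC0 hCl, h]

/-! ### Case 1: `{0, tp} ∈ P` -/

lemma avoid1 (hP : IsPartition (m+2) P) (h1 : ({0, tp m} : Finset _) ∈ P) {B}
    (hB : B ∈ P.erase {0, tp m}) : (0:Fin (m+2)) ∉ B ∧ tp m ∉ B := by
  obtain ⟨hBne, hBP⟩ := Finset.mem_erase.mp hB
  constructor
  · intro h0; exact hBne (blocks_eq hP hBP h1 h0 (by simp))
  · intro hl; exact hBne (blocks_eq hP hBP h1 hl (by simp))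

lemma down1_full (h : Full (m+2) (k+1) P) (h1 : ({0, tp m} : Finset _) ∈ P) :
    Full m k ((P.erase {0, tp m}).image dn) := by
  obtain ⟨hpart, hnc, hsc, hcard⟩ := h
  have hsub : P.erase {0, tp m} ⊆ P := Finset.erase_subset _ _
  refine ⟨?_, noconsec_image_dn hnc hsub, ?_, ?_⟩
  · apply isPartition_image_dn hpart hsub
    · intro B hB
      exact dn_nonempty (hpart.1 B (hsub hB)) (avoid1 hpart h1 hB).1 (avoid1 hpart h1 hB).2
    · intro j
      obtain ⟨B, ⟨hB, hjB⟩, _⟩ := hpart.2 (up j)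
      refine ⟨B, Finset.mem_erase.mpr ⟨?_, hB⟩, hjB⟩
      rintro rfl
      rcases Finset.mem_insert.mp hjB with h | h
      · exact up_ne_zero j h
      · exact up_ne_tp j (Finset.mem_singleton.mp h)
  · apply selfcompl_image_dn
    rw [Finset.image_erase rv_injective, selfCompl_rv hsc, rv_pair]
  · rw [Finset.card_image_of_injOn, Finset.card_erase_of_mem h1, hcard]
    · omega
    · intro B hB C hC hdn
      exact dn_injOn_avoid B hB C hC (avoid1 hpart h1 hB).1 (avoid1 hpart h1 hB).2
        (avoid1 hpart h1 hC).1 (avoid1 hpart h1 hC).2 hdn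

end SC
namespace SC

variable {m k : ℕ} {P : Finset (Finset (Fin (m+2)))} {P' : Finset (Finset (Fin m))}

lemma pair_notmem_upIm_image : ({0, tp m} : Finset (Fin (m+2))) ∉ P'.image upIm := by
  intro h
  obtain ⟨D, _, hD⟩ := Finset.mem_image.mp h
  have : (0 : Fin (m+2)) ∈ upIm D := by rw [hD]; simp
  exact zero_notmem_upIm D this

lemma isPartition_insert_pair (hP' : IsPartition m P') :
    IsPartition (m+2) (insert {0, tp m} (P'.image upIm)) := by
  constructor
  · intro B hB
    rcases Finset.mem_insert.mp hB with rfl | hB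
    · exact ⟨0, by simp⟩
    · obtain ⟨D, hD, rfl⟩ := Finset.mem_image.mp hB
      obtain ⟨x, hx⟩ := hP'.1 D hD
      exact ⟨up x, up_mem_upIm.mpr hx⟩
  · intro i
    by_cases hi : i = 0 ∨ i = tp m
    · refine ⟨{0, tp m}, ⟨Finset.mem_insert_self _ _, by rcases hi with rfl | rfl <;> simp⟩, ?_⟩
      rintro y ⟨hy, hiy⟩
      rcases Finset.mem_insert.mp hy with rfl | hy
      · rfl
      · exfalso
        obtain ⟨D, _, rfl⟩ := Finset.mem_image.mp hy
        rcases hi with rfl | rfl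
        · exact zero_notmem_upIm D hiy
        · exact tp_notmem_upIm D hiy
    · push_neg at hi
      obtain ⟨j, rfl⟩ := exists_up hi.1 hi.2
      obtain ⟨D, ⟨hD, hjD⟩, hu⟩ := hP'.2 j
      refine ⟨upIm D, ⟨Finset.mem_insert_of_mem (Finset.mem_image_of_mem _ hD),
        up_mem_upIm.mpr hjD⟩, ?_⟩
      rintro y ⟨hy, hiy⟩
      rcases Finset.mem_insert.mp hy with rfl | hy
      · exfalso
        rcases Finset.mem_insert.mp hiy with h | h
        · exact up_ne_zero j h
        · exact up_ne_tp j (Finset.mem_singleton.mp h)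
      · obtain ⟨D', hD', rfl⟩ := Finset.mem_image.mp hy
        rw [hu D' ⟨hD', up_mem_upIm.mp hiy⟩]

lemma noconsec_insert_pair [NeZero m] (hnc : NoConsec m P') :
    NoConsec (m+2) (insert {0, tp m} (P'.image upIm)) := by
  have hm : m ≠ 0 := NeZero.ne m
  intro B hB i hi j hj hij
  rcases Finset.mem_insert.mp hB with rfl | hB
  · have hi' : (i : ℕ) = 0 ∨ (i : ℕ) = m + 1 := by
      rcases Finset.mem_insert.mp hi with rfl | h
      · left; rfl
      · right; rw [Finset.mem_singleton.mp h]; rfl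
    have hj' : (j : ℕ) = 0 ∨ (j : ℕ) = m + 1 := by
      rcases Finset.mem_insert.mp hj with rfl | h
      · left; rfl
      · right; rw [Finset.mem_singleton.mp h]; rfl
    omega
  · obtain ⟨D, hD, rfl⟩ := Finset.mem_image.mp hB
    obtain ⟨a, ha, rfl⟩ := Finset.mem_image.mp hi
    obtain ⟨b, hb, rfl⟩ := Finset.mem_image.mp hj
    have : (a : ℕ) + 1 = (b : ℕ) := by simp [up] at hij; omega
    exact hnc D hD a ha b hb this

lemma selfcompl_insert_pair (hsc : SelfCompl m P') :
    SelfCompl (m+2) (insert {0, tp m} (P'.image upIm)) := by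
  show Finset.image rv _ = _
  rw [Finset.image_insert, rv_pair, Finset.image_image]
  have : rv ∘ upIm = upIm ∘ (rv (n := m)) := by
    funext D; exact rv_upIm D
  rw [this, ← Finset.image_image, selfCompl_rv' hsc]

lemma up1_full [NeZero m] (h : Full m k P') :
    Full (m+2) (k+1) (insert {0, tp m} (P'.image upIm)) := by
  obtain ⟨hpart, hnc, hsc, hcard⟩ := h
  refine ⟨isPartition_insert_pair hpart, noconsec_insert_pair hnc,
    selfcompl_insert_pair hsc, ?_⟩
  have hinj : Function.Injective (upIm (m := m)) := fun a b hab =>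
    Finset.image_injective up_injective hab
  rw [Finset.card_insert_of_notMem pair_notmem_upIm_image,
    Finset.card_image_of_injective _ hinj, hcard]

lemma up1_down1 (h : IsPartition (m+2) P) (h1 : ({0, tp m} : Finset _) ∈ P) :
    insert {0, tp m} (((P.erase {0, tp m}).image dn).image upIm) = P := by
  rw [Finset.image_image]
  have : (P.erase {0, tp m}).image (upIm ∘ dn) = P.erase {0, tp m} := by
    rw [Finset.image_congr (g := id), Finset.image_id]
    intro B hB
    exact upIm_dn_eq (avoid1 h h1 hB).1 (avoid1 h h1 hB).2
  rw [this, Finset.insert_erase h1]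

lemma down1_up1 : ((insert {0, tp m} (P'.image upIm)).erase {0, tp m}).image dn = P' := by
  rw [Finset.erase_insert pair_notmem_upIm_image, Finset.image_image]
  rw [Finset.image_congr (g := id), Finset.image_id]
  intro D _
  exact dn_upIm D

lemma card1 [NeZero m] (k : ℕ) :
    Nat.card {P : Finset (Finset (Fin (m+2))) //
      Full (m+2) (k+1) P ∧ ({0, tp m} : Finset (Fin (m+2))) ∈ P} = A m k := by
  rw [A_eq]
  apply Nat.card_congr
  refine ⟨fun x => ⟨(x.1.erase {0, tp m}).image dn, down1_full x.2.1 x.2.2⟩,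
    fun y => ⟨insert {0, tp m} (y.1.image upIm), up1_full y.2, Finset.mem_insert_self _ _⟩,
    fun x => Subtype.ext (up1_down1 x.2.1.1 x.2.2), fun y => Subtype.ext down1_up1⟩

end SC
namespace SC

variable {m k : ℕ} {P : Finset (Finset (Fin (m+2)))} {P' : Finset (Finset (Fin m))}

@[simp] lemma rv_tp_singleton : rv ({tp m} : Finset (Fin (m+2))) = {0} := by
  rw [rv, Finset.image_singleton, rev_tp_eq_zero]

lemma zero_singleton_ne_tp_singleton : ({0} : Finset (Fin (m+2))) ≠ {tp m} := by
  intro h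
  exact zero_ne_tp (Finset.singleton_injective h)

lemma zero_singleton_notmem : ({0} : Finset (Fin (m+2))) ∉ P'.image upIm := by
  intro h
  obtain ⟨D, _, hD⟩ := Finset.mem_image.mp h
  have : (0 : Fin (m+2)) ∈ upIm D := by rw [hD]; simp
  exact zero_notmem_upIm D this

lemma tp_singleton_notmem : ({tp m} : Finset (Fin (m+2))) ∉ P'.image upIm := by
  intro h
  obtain ⟨D, _, hD⟩ := Finset.mem_image.mp h
  have : tp m ∈ upIm D := by rw [hD]; simp
  exact tp_notmem_upIm D this

lemma tp_singleton_mem (hsc : SelfCompl (m+2) P) (h2 : ({0} : Finset _) ∈ P) :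
    ({tp m} : Finset (Fin (m+2))) ∈ P := by
  have := mem_rv_of_selfCompl hsc h2
  rwa [rv_zero_singleton] at this

lemma avoid2 (hP : IsPartition (m+2) P) (h2 : ({0} : Finset _) ∈ P)
    (h2' : ({tp m} : Finset _) ∈ P) {B}
    (hB : B ∈ (P.erase {0}).erase {tp m}) : (0:Fin (m+2)) ∉ B ∧ tp m ∉ B := by
  rw [Finset.mem_erase, Finset.mem_erase] at hB
  obtain ⟨hBl, hB0, hBP⟩ := hB
  constructor
  · intro h0; exact hB0 (blocks_eq hP hBP h2 h0 (by simp))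
  · intro hl; exact hBl (blocks_eq hP hBP h2' hl (by simp))

lemma down2_full (h : Full (m+2) (k+1+1) P) (h2 : ({0} : Finset _) ∈ P) :
    Full m k (((P.erase {0}).erase {tp m}).image dn) := by
  obtain ⟨hpart, hnc, hsc, hcard⟩ := h
  have h2' := tp_singleton_mem hsc h2
  have hsub : (P.erase {0}).erase {tp m} ⊆ P :=
    (Finset.erase_subset _ _).trans (Finset.erase_subset _ _)
  refine ⟨?_, noconsec_image_dn hnc hsub, ?_, ?_⟩
  · apply isPartition_image_dn hpart hsub
    · intro B hB
      exact dn_nonempty (hpart.1 B (hsub hB)) (avoid2 hpart h2 h2' hB).1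
        (avoid2 hpart h2 h2' hB).2
    · intro j
      obtain ⟨B, ⟨hB, hjB⟩, _⟩ := hpart.2 (up j)
      refine ⟨B, ?_, hjB⟩
      rw [Finset.mem_erase, Finset.mem_erase]
      refine ⟨?_, ?_, hB⟩
      · rintro rfl; exact up_ne_tp j (Finset.mem_singleton.mp hjB)
      · rintro rfl; exact up_ne_zero j (Finset.mem_singleton.mp hjB)
  · apply selfcompl_image_dn
    rw [Finset.image_erase rv_injective, Finset.image_erase rv_injective,
      selfCompl_rv hsc, rv_zero_singleton, rv_tp_singleton]
    ext B
    rw [Finset.mem_erase, Finset.mem_erase, Finset.mem_erase, Finset.mem_erase]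
    tauto
  · rw [Finset.card_image_of_injOn, Finset.card_erase_of_mem,
      Finset.card_erase_of_mem h2, hcard]
    · omega
    · exact Finset.mem_erase.mpr ⟨Ne.symm zero_singleton_ne_tp_singleton, h2'⟩
    · intro B hB C hC hdn
      exact dn_injOn_avoid B hB C hC (avoid2 hpart h2 h2' hB).1 (avoid2 hpart h2 h2' hB).2
        (avoid2 hpart h2 h2' hC).1 (avoid2 hpart h2 h2' hC).2 hdn

lemma isPartition_insert_singles (hP' : IsPartition m P') :
    IsPartition (m+2) (insert {0} (insert {tp m} (P'.image upIm))) := by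
  constructor
  · intro B hB
    rcases Finset.mem_insert.mp hB with rfl | hB
    · exact ⟨0, by simp⟩
    rcases Finset.mem_insert.mp hB with rfl | hB
    · exact ⟨tp m, by simp⟩
    · obtain ⟨D, hD, rfl⟩ := Finset.mem_image.mp hB
      obtain ⟨x, hx⟩ := hP'.1 D hD
      exact ⟨up x, up_mem_upIm.mpr hx⟩
  · intro i
    by_cases hi0 : i = 0
    · subst hi0
      refine ⟨{0}, ⟨Finset.mem_insert_self _ _, Finset.mem_singleton_self _⟩, ?_⟩
      rintro y ⟨hy, hiy⟩
      rcases Finset.mem_insert.mp hy with rfl | hy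
      · rfl
      rcases Finset.mem_insert.mp hy with rfl | hy
      · exact absurd (Finset.mem_singleton.mp hiy) zero_ne_tp
      · exact absurd hiy (by
          obtain ⟨D, _, rfl⟩ := Finset.mem_image.mp hy
          exact zero_notmem_upIm D)
    by_cases hil : i = tp m
    · subst hil
      refine ⟨{tp m}, ⟨Finset.mem_insert_of_mem (Finset.mem_insert_self _ _),
        Finset.mem_singleton_self _⟩, ?_⟩
      rintro y ⟨hy, hiy⟩
      rcases Finset.mem_insert.mp hy with rfl | hy
      · exact absurd (Finset.mem_singleton.mp hiy).symm zero_ne_tp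
      rcases Finset.mem_insert.mp hy with rfl | hy
      · rfl
      · exact absurd hiy (by
          obtain ⟨D, _, rfl⟩ := Finset.mem_image.mp hy
          exact tp_notmem_upIm D)
    · obtain ⟨j, rfl⟩ := exists_up hi0 hil
      obtain ⟨D, ⟨hD, hjD⟩, hu⟩ := hP'.2 j
      refine ⟨upIm D, ⟨Finset.mem_insert_of_mem (Finset.mem_insert_of_mem
        (Finset.mem_image_of_mem _ hD)), up_mem_upIm.mpr hjD⟩, ?_⟩
      rintro y ⟨hy, hiy⟩
      rcases Finset.mem_insert.mp hy with rfl | hy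
      · exact absurd (Finset.mem_singleton.mp hiy) (up_ne_zero j)
      rcases Finset.mem_insert.mp hy with rfl | hy
      · exact absurd (Finset.mem_singleton.mp hiy) (up_ne_tp j)
      · obtain ⟨D', hD', rfl⟩ := Finset.mem_image.mp hy
        rw [hu D' ⟨hD', up_mem_upIm.mp hiy⟩]

lemma noconsec_insert_singles (hnc : NoConsec m P') :
    NoConsec (m+2) (insert {0} (insert {tp m} (P'.image upIm))) := by
  intro B hB i hi j hj hij
  rcases Finset.mem_insert.mp hB with rfl | hB
  · rw [Finset.mem_singleton.mp hi, Finset.mem_singleton.mp hj] at hij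
    simp at hij
  rcases Finset.mem_insert.mp hB with rfl | hB
  · rw [Finset.mem_singleton.mp hi, Finset.mem_singleton.mp hj] at hij
    simp [tp, Fin.last] at hij
  · obtain ⟨D, hD, rfl⟩ := Finset.mem_image.mp hB
    obtain ⟨a, ha, rfl⟩ := Finset.mem_image.mp hi
    obtain ⟨b, hb, rfl⟩ := Finset.mem_image.mp hj
    have : (a : ℕ) + 1 = (b : ℕ) := by simp [up] at hij; omega
    exact hnc D hD a ha b hb this

lemma selfcompl_insert_singles (hsc : SelfCompl m P') :
    SelfCompl (m+2) (insert {0} (insert {tp m} (P'.image upIm))) := by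
  show Finset.image rv _ = _
  rw [Finset.image_insert, Finset.image_insert, rv_zero_singleton, rv_tp_singleton,
    Finset.image_image]
  have : rv ∘ upIm = upIm ∘ (rv (n := m)) := by
    funext D; exact rv_upIm D
  rw [this, ← Finset.image_image, selfCompl_rv' hsc, Finset.insert_comm]

lemma up2_full (h : Full m k P') :
    Full (m+2) (k+1+1) (insert {0} (insert {tp m} (P'.image upIm))) := by
  obtain ⟨hpart, hnc, hsc, hcard⟩ := h
  refine ⟨isPartition_insert_singles hpart, noconsec_insert_singles hnc,
    selfcompl_insert_singles hsc, ?_⟩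
  have hinj : Function.Injective (upIm (m := m)) := fun a b hab =>
    Finset.image_injective up_injective hab
  rw [Finset.card_insert_of_notMem, Finset.card_insert_of_notMem tp_singleton_notmem,
    Finset.card_image_of_injective _ hinj, hcard]
  intro h
  rcases Finset.mem_insert.mp h with h | h
  · exact zero_singleton_ne_tp_singleton h
  · exact zero_singleton_notmem h

lemma up2_down2 (h : IsPartition (m+2) P) (hsc : SelfCompl (m+2) P)
    (h2 : ({0} : Finset _) ∈ P) :
    insert {0} (insert {tp m} ((((P.erase {0}).erase {tp m}).image dn).image upIm)) = P := by
  have h2' := tp_singleton_mem hsc h2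
  rw [Finset.image_image]
  have heq : ((P.erase {0}).erase {tp m}).image (upIm ∘ dn) = (P.erase {0}).erase {tp m} := by
    rw [Finset.image_congr (g := id), Finset.image_id]
    intro B hB
    exact upIm_dn_eq (avoid2 h h2 h2' hB).1 (avoid2 h h2 h2' hB).2
  rw [heq, Finset.insert_erase (Finset.mem_erase.mpr
    ⟨Ne.symm zero_singleton_ne_tp_singleton, h2'⟩), Finset.insert_erase h2]

lemma down2_up2 :
    (((insert {0} (insert {tp m} (P'.image upIm))).erase {0}).erase {tp m}).image dn = P' := by
  have h0 : ({0} : Finset (Fin (m+2))) ∉ insert {tp m} (P'.image upIm) := by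
    intro h
    rcases Finset.mem_insert.mp h with h | h
    · exact zero_singleton_ne_tp_singleton h
    · exact zero_singleton_notmem h
  rw [Finset.erase_insert h0, Finset.erase_insert tp_singleton_notmem, Finset.image_image]
  rw [Finset.image_congr (g := id), Finset.image_id]
  intro D _
  exact dn_upIm D

lemma card2 (k : ℕ) :
    Nat.card {P : Finset (Finset (Fin (m+2))) //
      Full (m+2) (k+1+1) P ∧ ({0} : Finset (Fin (m+2))) ∈ P} = A m k := by
  rw [A_eq]
  apply Nat.card_congr
  refine ⟨fun x => ⟨((x.1.erase {0}).erase {tp m}).image dn, down2_full x.2.1 x.2.2⟩,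
    fun y => ⟨insert {0} (insert {tp m} (y.1.image upIm)), up2_full y.2,
      Finset.mem_insert_self _ _⟩,
    fun x => Subtype.ext (up2_down2 x.2.1.1 x.2.1.2.2.1 x.2.2), fun y => Subtype.ext down2_up2⟩

end SC
namespace SC

variable {m k : ℕ} {P : Finset (Finset (Fin (m+2)))} {P' : Finset (Finset (Fin m))}

/-! ### Case 3 -/

def g (C D : Finset (Fin m)) : Finset (Fin (m+2)) :=
  (upIm D ∪ (if D = C then {0} else ∅)) ∪ (if D = rv C then {tp m} else ∅)

lemma mem_g {C D : Finset (Fin m)} {x : Fin (m+2)} :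
    x ∈ g C D ↔ x ∈ upIm D ∨ (D = C ∧ x = 0) ∨ (D = rv C ∧ x = tp m) := by
  simp only [g, Finset.mem_union]
  split_ifs <;> simp <;> tauto

@[simp] lemma up_mem_g {C D : Finset (Fin m)} {j : Fin m} : up j ∈ g C D ↔ j ∈ D := by
  rw [mem_g]
  simp only [up_mem_upIm]
  constructor
  · rintro (h | ⟨_, h⟩ | ⟨_, h⟩)
    · exact h
    · exact absurd h (up_ne_zero j)
    · exact absurd h (up_ne_tp j)
  · exact fun h => Or.inl h

@[simp] lemma zero_mem_g {C D : Finset (Fin m)} : (0 : Fin (m+2)) ∈ g C D ↔ D = C := by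
  rw [mem_g]
  constructor
  · rintro (h | ⟨h, _⟩ | ⟨_, h⟩)
    · exact absurd h (zero_notmem_upIm D)
    · exact h
    · exact absurd h zero_ne_tp
  · exact fun h => Or.inr (Or.inl ⟨h, rfl⟩)

@[simp] lemma tp_mem_g {C D : Finset (Fin m)} : tp m ∈ g C D ↔ D = rv C := by
  rw [mem_g]
  constructor
  · rintro (h | ⟨_, h⟩ | ⟨h, _⟩)
    · exact absurd h (tp_notmem_upIm D)
    · exact absurd h.symm zero_ne_tp
    · exact h
  · exact fun h => Or.inr (Or.inr ⟨h, rfl⟩)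

@[simp] lemma dn_g {C D : Finset (Fin m)} : dn (g C D) = D := by
  ext j
  rw [mem_dn, up_mem_g]

lemma rv_g {C D : Finset (Fin m)} : rv (g C D) = g C (rv D) := by
  ext x
  rw [mem_rv, mem_g, mem_g]
  have h1 : x.rev ∈ upIm D ↔ x ∈ upIm (rv D) := by
    rw [← rv_upIm, mem_rv]
  have h2 : x.rev = 0 ↔ x = tp m := by
    constructor
    · intro h; rw [← Fin.rev_rev x, h, rev_zero_eq_tp]
    · rintro rfl; exact rev_tp_eq_zero
  have h3 : x.rev = tp m ↔ x = 0 := by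
    constructor
    · intro h; rw [← Fin.rev_rev x, h, rev_tp_eq_zero]
    · rintro rfl; exact rev_zero_eq_tp
  have h4 : D = C ↔ rv D = rv C := ⟨fun h => by rw [h], fun h => rv_injective h⟩
  have h5 : D = rv C ↔ rv D = C := by
    constructor
    · rintro rfl; exact rv_rv C
    · rintro rfl; exact (rv_rv D).symm
  tauto

lemma g_nonempty {C D : Finset (Fin m)} (hD : D.Nonempty) : (g C D).Nonempty := by
  obtain ⟨x, hx⟩ := hD
  exact ⟨up x, up_mem_g.mpr hx⟩

/-- The block containing `0`. -/
noncomputable def B0 (hP : IsPartition (m+2) P) : Finset (Fin (m+2)) :=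
  Finset.choose (fun B => (0 : Fin (m+2)) ∈ B) P (hP.2 0)

lemma B0_mem (hP : IsPartition (m+2) P) : B0 hP ∈ P := Finset.choose_mem _ _ _

lemma zero_mem_B0 (hP : IsPartition (m+2) P) : (0 : Fin (m+2)) ∈ B0 hP :=
  Finset.choose_property (fun B => (0 : Fin (m+2)) ∈ B) P (hP.2 0)

lemma eq_B0 (hP : IsPartition (m+2) P) {B} (hB : B ∈ P) (h0 : (0 : Fin (m+2)) ∈ B) :
    B = B0 hP :=
  blocks_eq hP hB (B0_mem hP) h0 (zero_mem_B0 hP)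

lemma one_notmem_B0 [NeZero m] (hP : IsPartition (m+2) P) (hnc : NoConsec (m+2) P) :
    up (0 : Fin m) ∉ B0 hP := fun h =>
  hnc _ (B0_mem hP) 0 (zero_mem_B0 hP) (up 0) h (by simp [up])

lemma zero_notmem_dn_B0 [NeZero m] (hP : IsPartition (m+2) P) (hnc : NoConsec (m+2) P) :
    (0 : Fin m) ∉ dn (B0 hP) := by
  rw [mem_dn]
  exact one_notmem_B0 hP hnc

lemma dn_B0_nonempty (hP : IsPartition (m+2) P)
    (hn1 : ({0, tp m} : Finset _) ∉ P) (hn2 : ({0} : Finset _) ∉ P) :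
    (dn (B0 hP)).Nonempty := by
  by_contra hemp
  rw [Finset.not_nonempty_iff_eq_empty] at hemp
  have hsub : ∀ x ∈ B0 hP, x = 0 ∨ x = tp m := by
    intro x hx
    by_contra hcon
    push_neg at hcon
    obtain ⟨j, rfl⟩ := exists_up hcon.1 hcon.2
    have : j ∈ dn (B0 hP) := mem_dn.mpr hx
    rw [hemp] at this
    exact absurd this (Finset.notMem_empty j)
  by_cases hl : tp m ∈ B0 hP
  · apply hn1
    have : B0 hP = {0, tp m} := by
      ext x
      simp only [Finset.mem_insert, Finset.mem_singleton]
      constructor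
      · exact hsub x
      · rintro (rfl | rfl)
        · exact zero_mem_B0 hP
        · exact hl
    rw [← this]; exact B0_mem hP
  · apply hn2
    have : B0 hP = {0} := by
      ext x
      simp only [Finset.mem_singleton]
      constructor
      · intro hx
        rcases hsub x hx with h | h
        · exact h
        · exact absurd (h ▸ hx) hl
      · rintro rfl; exact zero_mem_B0 hP
    rw [← this]; exact B0_mem hP

lemma dn_nonempty_all (hP : IsPartition (m+2) P) (hsc : SelfCompl (m+2) P)
    (hn1 : ({0, tp m} : Finset _) ∉ P) (hn2 : ({0} : Finset _) ∉ P)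
    {B} (hB : B ∈ P) : (dn B).Nonempty := by
  by_cases h0 : (0 : Fin (m+2)) ∈ B
  · rw [eq_B0 hP hB h0]
    exact dn_B0_nonempty hP hn1 hn2
  by_cases hl : tp m ∈ B
  · have h0rv : (0 : Fin (m+2)) ∈ rv B := by
      rw [mem_rv, rev_zero_eq_tp]; exact hl
    have : rv B = B0 hP := eq_B0 hP (mem_rv_of_selfCompl hsc hB) h0rv
    have hBrv : B = rv (B0 hP) := by rw [← this, rv_rv]
    rw [hBrv, dn_rv]
    obtain ⟨j, hj⟩ := dn_B0_nonempty hP hn1 hn2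
    exact ⟨j.rev, mem_rv.mpr (by simpa using hj)⟩
  · exact dn_nonempty (hP.1 B hB) h0 hl

lemma dn_injOn (hP : IsPartition (m+2) P) (hsc : SelfCompl (m+2) P)
    (hn1 : ({0, tp m} : Finset _) ∉ P) (hn2 : ({0} : Finset _) ∉ P)
    {B C} (hB : B ∈ P) (hC : C ∈ P) (h : dn B = dn C) : B = C := by
  obtain ⟨j, hj⟩ := dn_nonempty_all hP hsc hn1 hn2 hB
  have hj' : j ∈ dn C := h ▸ hj
  exact blocks_eq hP hB hC (mem_dn.mp hj) (mem_dn.mp hj')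

lemma down3_full (h : Full (m+2) k P)
    (hn1 : ({0, tp m} : Finset _) ∉ P) (hn2 : ({0} : Finset _) ∉ P) :
    Full m k (P.image dn) := by
  obtain ⟨hpart, hnc, hsc, hcard⟩ := h
  refine ⟨?_, noconsec_image_dn hnc (le_refl P), ?_, ?_⟩
  · apply isPartition_image_dn hpart (le_refl P)
    · intro B hB
      exact dn_nonempty_all hpart hsc hn1 hn2 hB
    · intro j
      obtain ⟨B, ⟨hB, hjB⟩, _⟩ := hpart.2 (up j)
      exact ⟨B, hB, hjB⟩
  · exact selfcompl_image_dn (selfCompl_rv hsc)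
  · rw [Finset.card_image_of_injOn, hcard]
    intro B hB C hC hdn
    exact dn_injOn hpart hsc hn1 hn2 hB hC hdn

end SC
namespace SC

variable {m k : ℕ} {P : Finset (Finset (Fin (m+2)))} {P' : Finset (Finset (Fin m))}
  {C : Finset (Fin m)}

lemma g_injective (C : Finset (Fin m)) : Function.Injective (g C) := by
  intro D D' h
  have := congrArg dn h
  simpa using this

lemma up3_isPartition (hP' : IsPartition m P') (hsc : SelfCompl m P') (hC : C ∈ P') :
    IsPartition (m+2) (P'.image (g C)) := by
  constructor
  · intro B hB
    obtain ⟨D, hD, rfl⟩ := Finset.mem_image.mp hB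
    exact g_nonempty (hP'.1 D hD)
  · intro i
    by_cases hi0 : i = 0
    · subst hi0
      refine ⟨g C C, ⟨Finset.mem_image_of_mem _ hC, zero_mem_g.mpr rfl⟩, ?_⟩
      rintro y ⟨hy, hiy⟩
      obtain ⟨D', hD', rfl⟩ := Finset.mem_image.mp hy
      rw [zero_mem_g.mp hiy]
    by_cases hil : i = tp m
    · subst hil
      refine ⟨g C (rv C), ⟨Finset.mem_image_of_mem _ (mem_rv_of_selfCompl hsc hC),
        tp_mem_g.mpr rfl⟩, ?_⟩
      rintro y ⟨hy, hiy⟩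
      obtain ⟨D', hD', rfl⟩ := Finset.mem_image.mp hy
      rw [tp_mem_g.mp hiy]
    · obtain ⟨j, rfl⟩ := exists_up hi0 hil
      obtain ⟨D, ⟨hD, hjD⟩, hu⟩ := hP'.2 j
      refine ⟨g C D, ⟨Finset.mem_image_of_mem _ hD, up_mem_g.mpr hjD⟩, ?_⟩
      rintro y ⟨hy, hiy⟩
      obtain ⟨D', hD', rfl⟩ := Finset.mem_image.mp hy
      rw [hu D' ⟨hD', up_mem_g.mp hiy⟩]

lemma up3_noconsec [NeZero m] (hnc : NoConsec m P') (h0C : (0 : Fin m) ∉ C) :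
    NoConsec (m+2) (P'.image (g C)) := by
  have hm : m ≠ 0 := NeZero.ne m
  intro B hB i hi j hj hij
  obtain ⟨D, hD, rfl⟩ := Finset.mem_image.mp hB
  rcases mem_g.mp hi with hiU | ⟨hDC, rfl⟩ | ⟨hDrC, rfl⟩
  · obtain ⟨a, ha, rfl⟩ := Finset.mem_image.mp hiU
    rcases mem_g.mp hj with hjU | ⟨hDC, rfl⟩ | ⟨hDrC, rfl⟩
    · obtain ⟨b, hb, rfl⟩ := Finset.mem_image.mp hjU
      exact hnc D hD a ha b hb (by simp [up] at hij; omega)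
    · simp [up] at hij
    · -- up a followed by tp : then a = m-1 and rev a = 0 ∈ C
      have hav : (a : ℕ) = m - 1 := by
        have := a.isLt
        simp [up, tp, Fin.last] at hij
        omega
      have harev : a.rev = (0 : Fin m) := by
        apply Fin.ext
        rw [Fin.val_rev, Fin.val_zero]
        have := a.isLt
        omega
      rw [hDrC] at ha
      have : a.rev ∈ C := mem_rv.mp ha
      rw [harev] at this
      exact h0C this
  · rcases mem_g.mp hj with hjU | ⟨hDC', rfl⟩ | ⟨hDrC, rfl⟩
    · obtain ⟨b, hb, rfl⟩ := Finset.mem_image.mp hjU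
      have hb0 : b = 0 := by
        apply Fin.ext
        rw [Fin.val_zero]
        simp [up] at hij ⊢
        omega
      rw [hb0, hDC] at hb
      exact h0C hb
    · simp at hij
    · simp [tp, Fin.last] at hij
      omega
  · have := j.isLt
    simp [tp, Fin.last] at hij
    omega

lemma up3_selfcompl (hsc : SelfCompl m P') : SelfCompl (m+2) (P'.image (g C)) := by
  show Finset.image rv _ = _
  rw [Finset.image_image]
  have h1 : rv ∘ g C = g C ∘ (rv (n := m)) := by
    funext D; exact rv_g
  rw [h1, ← Finset.image_image, selfCompl_rv' hsc]

lemma pair_notmem_up3 (hP' : IsPartition m P') :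
    ({0, tp m} : Finset (Fin (m+2))) ∉ P'.image (g C) := by
  intro h
  obtain ⟨D, hD, hg⟩ := Finset.mem_image.mp h
  obtain ⟨x, hx⟩ := hP'.1 D hD
  have hup : up x ∈ ({0, tp m} : Finset (Fin (m+2))) := hg ▸ up_mem_g.mpr hx
  rcases Finset.mem_insert.mp hup with h' | h'
  · exact up_ne_zero x h'
  · exact up_ne_tp x (Finset.mem_singleton.mp h')

lemma single_notmem_up3 (hP' : IsPartition m P') :
    ({0} : Finset (Fin (m+2))) ∉ P'.image (g C) := by
  intro h
  obtain ⟨D, hD, hg⟩ := Finset.mem_image.mp h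
  obtain ⟨x, hx⟩ := hP'.1 D hD
  have hup : up x ∈ ({0} : Finset (Fin (m+2))) := hg ▸ up_mem_g.mpr hx
  exact up_ne_zero x (Finset.mem_singleton.mp hup)

lemma up3_full [NeZero m] (h : Full m k P') (hC : C ∈ P') (h0C : (0 : Fin m) ∉ C) :
    Full (m+2) k (P'.image (g C)) := by
  obtain ⟨hpart, hnc, hsc, hcard⟩ := h
  refine ⟨up3_isPartition hpart hsc hC, up3_noconsec hnc h0C, up3_selfcompl hsc, ?_⟩
  rw [Finset.card_image_of_injective _ (g_injective C), hcard]

lemma g_dn_eq [NeZero m] (hpart : IsPartition (m+2) P) (hnc : NoConsec (m+2) P)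
    (hsc : SelfCompl (m+2) P)
    (hn1 : ({0, tp m} : Finset _) ∉ P) (hn2 : ({0} : Finset _) ∉ P)
    {B} (hB : B ∈ P) : g (dn (B0 hpart)) (dn B) = B := by
  have hdC : dn B = dn (B0 hpart) ↔ (0 : Fin (m+2)) ∈ B := by
    constructor
    · intro h
      rw [dn_injOn hpart hsc hn1 hn2 hB (B0_mem hpart) h]
      exact zero_mem_B0 hpart
    · intro h0; rw [eq_B0 hpart hB h0]
  have hdrC : dn B = rv (dn (B0 hpart)) ↔ tp m ∈ B := by
    rw [← dn_rv]
    constructor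
    · intro h
      rw [dn_injOn hpart hsc hn1 hn2 hB (mem_rv_of_selfCompl hsc (B0_mem hpart)) h]
      rw [mem_rv, rev_tp_eq_zero]
      exact zero_mem_B0 hpart
    · intro hl
      have h0rv : (0 : Fin (m+2)) ∈ rv B := by
        rw [mem_rv, rev_zero_eq_tp]; exact hl
      have hrv : rv B = B0 hpart := eq_B0 hpart (mem_rv_of_selfCompl hsc hB) h0rv
      rw [← hrv, rv_rv]
  ext x
  rw [mem_g, mem_upIm_dn, hdC, hdrC]
  constructor
  · rintro (⟨hx, _, _⟩ | ⟨h0, rfl⟩ | ⟨hl, rfl⟩)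
    · exact hx
    · exact h0
    · exact hl
  · intro hx
    by_cases h0 : x = 0
    · subst h0; exact Or.inr (Or.inl ⟨hx, rfl⟩)
    by_cases hl : x = tp m
    · subst hl; exact Or.inr (Or.inr ⟨hx, rfl⟩)
    · exact Or.inl ⟨hx, h0, hl⟩

lemma up3_down3 [NeZero m] (hpart : IsPartition (m+2) P) (hnc : NoConsec (m+2) P)
    (hsc : SelfCompl (m+2) P)
    (hn1 : ({0, tp m} : Finset _) ∉ P) (hn2 : ({0} : Finset _) ∉ P) :
    (P.image dn).image (g (dn (B0 hpart))) = P := by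
  rw [Finset.image_image, Finset.image_congr (g := id), Finset.image_id]
  intro B hB
  exact g_dn_eq hpart hnc hsc hn1 hn2 hB

lemma down3_up3 : (P'.image (g C)).image dn = P' := by
  rw [Finset.image_image, Finset.image_congr (g := id), Finset.image_id]
  intro D _
  exact dn_g

lemma dn_B0_up3 (hC : C ∈ P') (hQ : IsPartition (m+2) (P'.image (g C))) :
    dn (B0 hQ) = C := by
  have h1 : g C C ∈ P'.image (g C) := Finset.mem_image_of_mem _ hC
  have h2 : (0 : Fin (m+2)) ∈ g C C := zero_mem_g.mpr rfl
  have := eq_B0 hQ h1 h2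
  rw [← this, dn_g]

lemma card_fiber [NeZero m] (hpart : IsPartition m P') (hcard : P'.card = k + 1) :
    Nat.card {C : Finset (Fin m) // C ∈ P' ∧ (0 : Fin m) ∉ C} = k := by
  classical
  set Z := Finset.choose (fun B => (0 : Fin m) ∈ B) P' (hpart.2 0) with hZdef
  have hZm : Z ∈ P' := Finset.choose_mem _ _ _
  have hZ0 : (0 : Fin m) ∈ Z := Finset.choose_property (fun B => (0 : Fin m) ∈ B) P' (hpart.2 0)
  have he : ∀ C : Finset (Fin m), (C ∈ P' ∧ (0 : Fin m) ∉ C) ↔ C ∈ P'.erase Z := by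
    intro C
    rw [Finset.mem_erase]
    constructor
    · rintro ⟨h1, h2⟩; exact ⟨fun h => h2 (h ▸ hZ0), h1⟩
    · rintro ⟨h1, h2⟩
      exact ⟨h2, fun h0 => h1 (blocks_eq hpart h2 hZm h0 hZ0)⟩
  rw [Nat.card_congr (Equiv.subtypeEquivRight he)]
  have : Nat.card {C // C ∈ P'.erase Z} = (P'.erase Z).card := by
    rw [Nat.card_eq_fintype_card]
    exact Fintype.card_coe _
  rw [this, Finset.card_erase_of_mem hZm, hcard]
  omega

lemma card_T3 [NeZero m] (k : ℕ) :
    Nat.card {x : Finset (Finset (Fin m)) × Finset (Fin m) //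
      Full m k x.1 ∧ x.2 ∈ x.1 ∧ (0 : Fin m) ∉ x.2} = k * A m k := by
  classical
  have e : {x : Finset (Finset (Fin m)) × Finset (Fin m) //
      Full m k x.1 ∧ x.2 ∈ x.1 ∧ (0 : Fin m) ∉ x.2} ≃
      Σ y : {P' // Full m k P'}, {C : Finset (Fin m) // C ∈ y.1 ∧ (0 : Fin m) ∉ C} :=
    { toFun := fun x => ⟨⟨x.1.1, x.2.1⟩, ⟨x.1.2, x.2.2.1, x.2.2.2⟩⟩
      invFun := fun y => ⟨(y.1.1, y.2.1), y.1.2, y.2.2.1, y.2.2.2⟩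
      left_inv := fun x => rfl
      right_inv := fun y => rfl }
  have efib : ∀ y : {P' // Full m k P'},
      {C : Finset (Fin m) // C ∈ y.1 ∧ (0 : Fin m) ∉ C} ≃ Fin k := by
    intro y
    apply Fintype.equivFinOfCardEq
    rw [← Nat.card_eq_fintype_card]
    exact card_fiber y.2.1 y.2.2.2.2
  rw [Nat.card_congr (e.trans ((Equiv.sigmaCongrRight efib).trans
    (Equiv.sigmaEquivProd _ _)))]
  rw [Nat.card_prod, ← A_eq]
  have : Nat.card (Fin k) = k := by
    rw [Nat.card_eq_fintype_card, Fintype.card_fin]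
  rw [this, Nat.mul_comm]

lemma card3 [NeZero m] (k : ℕ) :
    Nat.card {P : Finset (Finset (Fin (m+2))) //
      Full (m+2) k P ∧ ({0, tp m} : Finset (Fin (m+2))) ∉ P ∧
        ({0} : Finset (Fin (m+2))) ∉ P} = k * A m k := by
  rw [← card_T3 k]
  apply Nat.card_congr
  refine ⟨fun x => ⟨(x.1.image dn, dn (B0 x.2.1.1)),
      down3_full x.2.1 x.2.2.1 x.2.2.2,
      Finset.mem_image_of_mem dn (B0_mem x.2.1.1),
      zero_notmem_dn_B0 x.2.1.1 x.2.1.2.1⟩,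
    fun y => ⟨y.1.1.image (g y.1.2), up3_full y.2.1 y.2.2.1 y.2.2.2,
      pair_notmem_up3 y.2.1.1, single_notmem_up3 y.2.1.1⟩,
    fun x => Subtype.ext (up3_down3 x.2.1.1 x.2.1.2.1 x.2.1.2.2.1 x.2.2.1 x.2.2.2),
    fun y => Subtype.ext (Prod.ext down3_up3 (dn_B0_up3 y.2.2.1 _))⟩

end SC
namespace SC

lemma card_or {α : Type*} [Finite α] (p q : α → Prop) (h : ∀ x, p x → q x → False) :
    Nat.card {x // p x ∨ q x} = Nat.card {x // p x} + Nat.card {x // q x} := by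
  classical
  have hd : Disjoint p q := disjoint_iff_inf_le.mpr (fun x hx => h x hx.1 hx.2)
  rw [Nat.card_congr (subtypeOrEquiv p q hd), Nat.card_sum]

lemma recur (m j : ℕ) [NeZero m] :
    A (m+2) (j+2) = (j+2) * A m (j+2) + A m (j+1) + A m j := by
  classical
  have hsplit : ∀ P : Finset (Finset (Fin (m+2))), Full (m+2) (j+2) P ↔
      ((Full (m+2) (j+2) P ∧ ({0, tp m} : Finset (Fin (m+2))) ∈ P) ∨
      ((Full (m+2) (j+2) P ∧ ({0} : Finset (Fin (m+2))) ∈ P) ∨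
       (Full (m+2) (j+2) P ∧ ({0, tp m} : Finset (Fin (m+2))) ∉ P ∧
         ({0} : Finset (Fin (m+2))) ∉ P))) := by
    intro P
    by_cases h1 : ({0, tp m} : Finset (Fin (m+2))) ∈ P <;>
      by_cases h2 : ({0} : Finset (Fin (m+2))) ∈ P <;> tauto
  rw [A_eq, Nat.card_congr (Equiv.subtypeEquivRight hsplit)]
  have hd1 : ∀ P : Finset (Finset (Fin (m+2))),
      (Full (m+2) (j+2) P ∧ ({0, tp m} : Finset (Fin (m+2))) ∈ P) →
      ((Full (m+2) (j+2) P ∧ ({0} : Finset (Fin (m+2))) ∈ P) ∨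
       (Full (m+2) (j+2) P ∧ ({0, tp m} : Finset (Fin (m+2))) ∉ P ∧
         ({0} : Finset (Fin (m+2))) ∉ P)) → False := by
    rintro P ⟨hF, hpair⟩ (⟨_, hsing⟩ | ⟨_, hn1, _⟩)
    · have := blocks_eq hF.1 hpair hsing (Finset.mem_insert_self 0 {tp m})
        (Finset.mem_singleton_self 0)
      have htp : tp m ∈ ({0} : Finset (Fin (m+2))) := by
        rw [← this]; simp
      exact zero_ne_tp (Finset.mem_singleton.mp htp).symm
    · exact hn1 hpair
  have hd2 : ∀ P : Finset (Finset (Fin (m+2))),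
      (Full (m+2) (j+2) P ∧ ({0} : Finset (Fin (m+2))) ∈ P) →
      (Full (m+2) (j+2) P ∧ ({0, tp m} : Finset (Fin (m+2))) ∉ P ∧
        ({0} : Finset (Fin (m+2))) ∉ P) → False := by
    rintro P ⟨_, hsing⟩ ⟨_, _, hn2⟩
    exact hn2 hsing
  rw [card_or _ _ hd1, card_or _ _ hd2]
  have e1 := card1 (m := m) (j+1)
  have e2 := card2 (m := m) j
  have e3 := card3 (m := m) (j+2)
  have h11 : j + 1 + 1 = j + 2 := rfl
  rw [h11] at e1 e2
  rw [e1, e2, e3]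
  ring

end SC


theorem statement19 :
    A 1 0 = 1 ∧ (∀ n, 1 < n → A n 0 = 0) ∧ (∀ n, 1 ≤ n → A n (n - 1) = 1) ∧
    ∀ n, 5 ≤ n → ∀ k, 2 ≤ k → k ≤ n - 3 →
      A n k = k * A (n - 2) k + A (n - 2) (k - 1) + A (n - 2) (k - 2) := by

  refine ⟨SC.partA, SC.partB, SC.partC, ?_⟩
  intro n hn k hk _
  obtain ⟨m, rfl⟩ : ∃ m, n = m + 2 + 2 := ⟨n - 4, by omega⟩
  obtain ⟨j, rfl⟩ : ∃ j, k = j + 2 := ⟨k - 2, by omega⟩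
  haveI : NeZero (m + 2) := ⟨by omega⟩
  have h1 : m + 2 + 2 - 2 = m + 2 := by omega
  have h2 : j + 2 - 1 = j + 1 := by omega
  have h3 : j + 2 - 2 = j := by omega
  rw [h1, h2, h3]
  exact SC.recur (m + 2) j
end
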